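/- arXiv:1705.06386 — 4 statements merged into one kernel-verified Lean document; each statement's English description precedes it below -/
import Mathlib

section
/- Fix γ ∈ (0, 2] and let p_γ be the probability density on ℝ proportional to exp(−|x|^γ). There exists a universal constant c > 0 such that for every n ≥ 1, if X = θ* + Z with Z_1,…,Z_n i.i.d. with density p_γ, then inf_{θ̂} sup_{θ* ∈ Θ_3} E‖θ̂(X) − θ*‖² ≥ c (log(en))^{2/γ}, where the infimum is over all measurable maps θ̂ : ℝ^n → ℝ^n. -/
open MeasureTheory ProbabilityTheory Finset
open scoped ENNReal NNReal Classical BigOperators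

noncomputable section

/-- Entry of a vector in `ℝ^n` at "paper" index `i ∈ {1,…,n}` (junk value 0 outside). -/
def entry {n : ℕ} (v : Fin n → ℝ) (i : ℕ) : ℝ :=
  if h : i - 1 < n then v ⟨i - 1, h⟩ else 0

/-- Average of the entries of `v` with paper indices in `(a, b]`. -/
def blockAvg {n : ℕ} (v : Fin n → ℝ) (a b : ℕ) : ℝ :=
  (∑ i ∈ Finset.Ioc a b, entry v i) / ((b : ℝ) - (a : ℝ))

/-- Squared Euclidean distance on `ℝ^n`. -/
def sqDist {n : ℕ} (u v : Fin n → ℝ) : ℝ := ∑ i, (u i - v i) ^ 2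

/-- `Θ_k^↑`: nondecreasing vectors in `ℝ^n` with at most `k` constant pieces. -/
def ThetaUp (n k : ℕ) : Set (Fin n → ℝ) :=
  {θ | ∃ (a : Fin (k + 1) → ℕ) (μ : Fin k → ℝ),
    a 0 = 0 ∧ a (Fin.last k) = n ∧ Monotone a ∧ Monotone μ ∧
    ∀ j : Fin k, ∀ i ∈ Finset.Ioc (a j.castSucc) (a j.succ), entry θ i = μ j}

/-- The moment condition on the noise vector `Z`: independent, centered coordinates,
and either a uniform `(2+ε)` moment bound, or identically distributed coordinates with
an `L log L`-type second moment bound. -/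
def MomentCond {Ω : Type*} [MeasurableSpace Ω] (P : Measure Ω) {n : ℕ}
    (Z : Ω → Fin n → ℝ) (σ ε C1 : ℝ) : Prop :=
  (∀ i, Measurable fun ω => Z ω i) ∧
  iIndepFun (fun i ω => Z ω i) P ∧
  (∀ i, Integrable (fun ω => Z ω i) P ∧ ∫ ω, Z ω i ∂P = 0) ∧
  ((∀ i, ∫⁻ ω, ENNReal.ofReal (|Z ω i / σ| ^ (2 + ε)) ∂P ≤ ENNReal.ofReal C1) ∨
   ((∀ i j, Measure.map (fun ω => Z ω i) P = Measure.map (fun ω => Z ω j) P) ∧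
    (∀ i, ∫⁻ ω, ENNReal.ofReal ((Z ω i / σ) ^ 2 *
      Real.log (Real.exp 1 + (Z ω i / σ) ^ 2)) ∂P ≤ ENNReal.ofReal C1)))

/-- The Gaussian product measure `N(θ, σ² I_n)` on `ℝ^n`. -/
def gaussianPi (n : ℕ) (θ : Fin n → ℝ) (σ : ℝ) : Measure (Fin n → ℝ) :=
  Measure.pi fun i => gaussianReal (θ i) ⟨σ ^ 2, sq_nonneg σ⟩

/-- `Θ_k`: piecewise constant vectors in `ℝ^n` with at most `k` pieces. -/
def ThetaPC (n k : ℕ) : Set (Fin n → ℝ) :=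
  {θ | ∃ (a : Fin (k + 1) → ℕ) (μ : Fin k → ℝ),
    a 0 = 0 ∧ a (Fin.last k) = n ∧ Monotone a ∧
    ∀ j : Fin k, ∀ i ∈ Finset.Ioc (a j.castSucc) (a j.succ), entry θ i = μ j}

/-- The measure on `ℝ` with density `x ↦ cγ exp(−|x|^γ)` with respect to Lebesgue. -/
def gammaNoise (γ cγ : ℝ) : Measure ℝ :=
  volume.withDensity fun x => ENNReal.ofReal (cγ * Real.exp (-(|x| ^ γ)))

/-! ### Auxiliary lemmas -/

section Aux

lemma lintegral_pi_prod {n : ℕ} (ν : Fin n → Measure ℝ) [∀ i, SigmaFinite (ν i)]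
    (u : Fin n → ℝ → ℝ≥0∞) (hu : ∀ i, Measurable (u i)) :
    ∫⁻ x, ∏ i, u i (x i) ∂Measure.pi ν = ∏ i, ∫⁻ y, u i y ∂ν i := by
  induction n with
  | zero =>
      simp only [Finset.univ_eq_empty, Finset.prod_empty, lintegral_one]
      rw [Measure.pi_univ]
      simp
  | succ n ih =>
      have hmp := (measurePreserving_piFinSuccAbove ν 0).symm
      rw [hmp.lintegral_map_equiv (fun x => ∏ i, u i (x i))
        (MeasurableEquiv.piFinSuccAbove (fun _ => ℝ) 0).symm]
      have heval : ∀ p : ℝ × (Fin n → ℝ),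
          (∏ i, u i (((MeasurableEquiv.piFinSuccAbove (fun _ => ℝ) 0).symm p) i))
          = u 0 p.1 * ∏ j, u (Fin.succ j) (p.2 j) := by
        intro p
        rw [Fin.prod_univ_succ]
        congr 1
      simp_rw [heval]
      have hgm : Measurable (fun b : Fin n → ℝ => ∏ j, u (Fin.succ j) (b j)) :=
        Finset.measurable_prod univ fun j _ => (hu (Fin.succ j)).comp (measurable_pi_apply j)
      have hkey := lintegral_prod_mul (μ := ν 0)
        (ν := Measure.pi fun j => ν (Fin.succAbove 0 j))
        ((hu 0).aemeasurable) hgm.aemeasurable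
      rw [hkey, Fin.prod_univ_succ]
      congr 1
      have h2 := ih (fun j => ν (Fin.succAbove 0 j)) (fun j => u (Fin.succ j))
        (fun j => hu _)
      simp only [Fin.succAbove_zero] at h2 ⊢
      exact h2

lemma pi_withDensity' {n : ℕ} (ν : Measure ℝ) [IsProbabilityMeasure ν]
    (g : Fin n → ℝ → ℝ≥0∞) (hg : ∀ i, Measurable (g i))
    [∀ i, SigmaFinite (ν.withDensity (g i))] :
    Measure.pi (fun i => ν.withDensity (g i))
      = (Measure.pi fun _ : Fin n => ν).withDensity (fun x => ∏ i, g i (x i)) := by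
  refine Measure.pi_eq (fun s hs => ?_)
  rw [withDensity_apply _ (MeasurableSet.univ_pi hs)]
  rw [← lintegral_indicator (MeasurableSet.univ_pi hs)]
  have hpt : ∀ x : Fin n → ℝ,
      (Set.univ.pi s).indicator (fun x => ∏ i, g i (x i)) x
        = ∏ i, (s i).indicator (g i) (x i) := by
    intro x
    by_cases h : x ∈ Set.univ.pi s
    · rw [Set.indicator_of_mem h]
      refine Finset.prod_congr rfl (fun i _ => ?_)
      rw [Set.indicator_of_mem (h i (Set.mem_univ i))]
    · rw [Set.indicator_of_notMem h]
      rw [Set.mem_pi] at h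
      push_neg at h
      obtain ⟨i, _, hi⟩ := h
      exact (Finset.prod_eq_zero (Finset.mem_univ i)
        (by rw [Set.indicator_of_notMem hi])).symm
  simp_rw [hpt]
  rw [lintegral_pi_prod _ _ (fun i => (hg i).indicator (hs i))]
  refine Finset.prod_congr rfl (fun i _ => ?_)
  rw [withDensity_apply _ (hs i), ← lintegral_indicator (hs i)]

lemma map_add_withDensity (f : ℝ → ℝ≥0∞) (hf : Measurable f) (t : ℝ) :
    Measure.map (fun z : ℝ => t + z) (volume.withDensity f)
      = volume.withDensity (fun x => f (x - t)) := by
  ext s hs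
  rw [Measure.map_apply (measurable_const_add t) hs, withDensity_apply _ hs,
    withDensity_apply _ ((measurable_const_add t) hs)]
  have h1 : ∫⁻ x in s, f (x - t) ∂volume
      = ∫⁻ x in s, f (x - t) ∂(Measure.map (fun z : ℝ => t + z) volume) := by
    rw [map_add_left_eq_self]
  rw [h1, setLIntegral_map hs (f := fun x => f (x - t))
    (hf.comp (measurable_sub_const t)) (measurable_const_add t)]
  simp

lemma cont_absrpow {γ : ℝ} (hγ0 : 0 < γ) : Continuous fun x : ℝ => |x| ^ γ :=
  continuous_abs.rpow_const (fun _ => Or.inr hγ0.le)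

lemma key_ineq {γ : ℝ} (hγ0 : 0 < γ) (hγ2 : γ ≤ 2) {t : ℝ} (ht : 0 ≤ t) (x : ℝ) :
    (3/2) * |x| ^ γ ≤ 2 * |x - t| ^ γ + 96 * t ^ γ := by
  have hxn : (0:ℝ) ≤ |x| ^ γ := Real.rpow_nonneg (abs_nonneg x) γ
  have htn : (0:ℝ) ≤ t ^ γ := Real.rpow_nonneg ht γ
  have hxtn : (0:ℝ) ≤ |x - t| ^ γ := Real.rpow_nonneg (abs_nonneg _) γ
  rcases le_or_gt |x| (8*t) with h | h
  · have h1 : |x| ^ γ ≤ (8*t) ^ γ := Real.rpow_le_rpow (abs_nonneg x) h hγ0.le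
    have h2 : ((8:ℝ)*t) ^ γ = 8 ^ γ * t ^ γ := Real.mul_rpow (by norm_num) ht
    have h3 : (8:ℝ) ^ γ ≤ 8 ^ (2:ℝ) := Real.rpow_le_rpow_of_exponent_le (by norm_num) hγ2
    have h4 : (8:ℝ) ^ (2:ℝ) = 64 := by
      rw [show (2:ℝ) = ((2:ℕ):ℝ) by norm_num, Real.rpow_natCast]; norm_num
    nlinarith [mul_le_mul_of_nonneg_right h3 htn]
  · have h78 : (7/8) * |x| ≤ |x - t| := by
      have := abs_sub_abs_le_abs_sub x t
      rw [abs_of_nonneg ht] at this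
      nlinarith
    have h1 : ((7/8) * |x|) ^ γ ≤ |x - t| ^ γ :=
      Real.rpow_le_rpow (by positivity) h78 hγ0.le
    have h2 : (((7:ℝ)/8) * |x|) ^ γ = (7/8) ^ γ * |x| ^ γ :=
      Real.mul_rpow (by norm_num) (abs_nonneg x)
    have h3 : ((7:ℝ)/8) ^ (2:ℝ) ≤ (7/8) ^ γ :=
      Real.rpow_le_rpow_of_exponent_ge (by norm_num) (by norm_num) hγ2
    have h4 : ((7:ℝ)/8) ^ (2:ℝ) = 49/64 := by
      rw [show (2:ℝ) = ((2:ℕ):ℝ) by norm_num, Real.rpow_natCast]; norm_num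
    nlinarith [mul_le_mul_of_nonneg_right h3 hxn]

lemma half_integral {γ cγ : ℝ} (hγ0 : 0 < γ)
    (hnorm : ∫⁻ x, ENNReal.ofReal (cγ * Real.exp (-(|x| ^ γ))) = 1) :
    ∫⁻ x, ENNReal.ofReal (cγ * Real.exp (-((1/2) * |x| ^ γ)))
      = ENNReal.ofReal (2 ^ (1/γ)) := by
  set a : ℝ := (2:ℝ) ^ (-(1/γ)) with ha_def
  have ha : 0 < a := Real.rpow_pos_of_pos (by norm_num) _
  have hγne : γ ≠ 0 := ne_of_gt hγ0
  have haγ : a ^ γ = 1/2 := by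
    rw [ha_def, ← Real.rpow_mul (by norm_num : (0:ℝ) ≤ 2)]
    rw [show -(1/γ) * γ = -1 by field_simp]
    rw [Real.rpow_neg_one]
    norm_num
  have hptw : ∀ x : ℝ, cγ * Real.exp (-(|a * x| ^ γ)) = cγ * Real.exp (-((1/2) * |x| ^ γ)) := by
    intro x
    congr 2
    rw [abs_mul, abs_of_pos ha, Real.mul_rpow ha.le (abs_nonneg x), haγ]
  have hmb : Measurable fun x : ℝ => ENNReal.ofReal (cγ * Real.exp (-(|x| ^ γ))) := by
    apply ENNReal.measurable_ofReal.comp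
    exact (continuous_const.mul (((cont_absrpow hγ0).neg).rexp)).measurable
  have hmap : ∫⁻ y, ENNReal.ofReal (cγ * Real.exp (-(|y| ^ γ)))
      ∂(Measure.map (fun x : ℝ => a * x) volume)
      = ∫⁻ x, ENNReal.ofReal (cγ * Real.exp (-(|a * x| ^ γ))) ∂volume :=
    lintegral_map hmb (measurable_const_mul a)
  rw [Real.map_volume_mul_left (ne_of_gt ha), lintegral_smul_measure, hnorm, smul_eq_mul, mul_one] at hmap
  have hinv : |a⁻¹| = 2 ^ (1/γ) := by
    rw [abs_of_pos (inv_pos.mpr ha), ha_def,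
      Real.rpow_neg (by norm_num : (0:ℝ) ≤ 2), inv_inv]
  rw [hinv] at hmap
  rw [hmap]
  congr 1
  funext x
  exact (congrArg ENNReal.ofReal (hptw x)).symm

lemma meas_f {γ cγ : ℝ} (hγ0 : 0 < γ) :
    Measurable fun x : ℝ => ENNReal.ofReal (cγ * Real.exp (-(|x| ^ γ))) :=
  ENNReal.measurable_ofReal.comp
    (continuous_const.mul ((cont_absrpow hγ0).neg.rexp)).measurable

lemma meas_g {γ t : ℝ} (hγ0 : 0 < γ) :
    Measurable fun x : ℝ => ENNReal.ofReal (Real.exp (|x| ^ γ - |x - t| ^ γ)) := by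
  apply ENNReal.measurable_ofReal.comp
  apply Continuous.measurable
  exact (((cont_absrpow hγ0).sub (((cont_absrpow hγ0).comp (continuous_sub_right t)))).rexp)

lemma noise_shift {γ cγ : ℝ} (hγ0 : 0 < γ) (hcγ : 0 ≤ cγ) (t : ℝ) :
    Measure.map (fun z : ℝ => t + z) (gammaNoise γ cγ)
      = (gammaNoise γ cγ).withDensity
          (fun x => ENNReal.ofReal (Real.exp (|x| ^ γ - |x - t| ^ γ))) := by
  unfold gammaNoise
  rw [map_add_withDensity _ (meas_f hγ0) t,
    ← withDensity_mul _ (meas_f hγ0) (meas_g (t := t) hγ0)]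
  congr 1
  funext x
  show ENNReal.ofReal (cγ * Real.exp (-(|x - t| ^ γ)))
      = ENNReal.ofReal (cγ * Real.exp (-(|x| ^ γ)))
        * ENNReal.ofReal (Real.exp (|x| ^ γ - |x - t| ^ γ))
  rw [← ENNReal.ofReal_mul (by positivity)]
  congr 1
  rw [mul_assoc, ← Real.exp_add]
  ring_nf

lemma noise_mass {γ cγ : ℝ} (hprob : IsProbabilityMeasure (gammaNoise γ cγ)) :
    ∫⁻ x, ENNReal.ofReal (cγ * Real.exp (-(|x| ^ γ))) = 1 := by
  have h := hprob.measure_univ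
  unfold gammaNoise at h
  rwa [withDensity_apply _ MeasurableSet.univ, setLIntegral_univ] at h

lemma noise_g_one {γ cγ : ℝ} (hγ0 : 0 < γ) (hcγ : 0 ≤ cγ) (t : ℝ)
    (hprob : IsProbabilityMeasure (gammaNoise γ cγ)) :
    ∫⁻ x, ENNReal.ofReal (Real.exp (|x| ^ γ - |x - t| ^ γ)) ∂(gammaNoise γ cγ) = 1 := by
  haveI := hprob
  have h1 : IsProbabilityMeasure (Measure.map (fun z : ℝ => t + z) (gammaNoise γ cγ)) :=
    Measure.isProbabilityMeasure_map (measurable_const_add t).aemeasurable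
  rw [noise_shift hγ0 hcγ t] at h1
  have h2 := h1.measure_univ
  rwa [withDensity_apply _ MeasurableSet.univ, setLIntegral_univ] at h2

lemma noise_g_sq {γ cγ : ℝ} (hγ0 : 0 < γ) (hγ2 : γ ≤ 2) (hcγ : 0 ≤ cγ) {t : ℝ} (ht : 0 ≤ t)
    (hprob : IsProbabilityMeasure (gammaNoise γ cγ)) :
    ∫⁻ x, ENNReal.ofReal (Real.exp (|x| ^ γ - |x - t| ^ γ))
        * ENNReal.ofReal (Real.exp (|x| ^ γ - |x - t| ^ γ)) ∂(gammaNoise γ cγ)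
      ≤ ENNReal.ofReal (Real.exp (96 * t ^ γ)) * ENNReal.ofReal (2 ^ (1/γ)) := by
  unfold gammaNoise
  rw [lintegral_withDensity_eq_lintegral_mul volume (meas_f hγ0)
    (show Measurable fun x => ENNReal.ofReal (Real.exp (|x| ^ γ - |x - t| ^ γ))
        * ENNReal.ofReal (Real.exp (|x| ^ γ - |x - t| ^ γ)) from
      (meas_g (t := t) hγ0).mul (meas_g (t := t) hγ0))]
  have hptw : ∀ x : ℝ,
      ((fun x => ENNReal.ofReal (cγ * Real.exp (-(|x| ^ γ)))) *
        fun x => ENNReal.ofReal (Real.exp (|x| ^ γ - |x - t| ^ γ))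
          * ENNReal.ofReal (Real.exp (|x| ^ γ - |x - t| ^ γ))) x
      ≤ ENNReal.ofReal (Real.exp (96 * t ^ γ))
          * ENNReal.ofReal (cγ * Real.exp (-((1/2) * |x| ^ γ))) := by
    intro x
    show ENNReal.ofReal (cγ * Real.exp (-(|x| ^ γ)))
        * (ENNReal.ofReal (Real.exp (|x| ^ γ - |x - t| ^ γ))
          * ENNReal.ofReal (Real.exp (|x| ^ γ - |x - t| ^ γ))) ≤ _
    rw [← ENNReal.ofReal_mul (by positivity), ← ENNReal.ofReal_mul (by positivity),
      ← ENNReal.ofReal_mul (Real.exp_nonneg _)]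
    apply ENNReal.ofReal_le_ofReal
    have hk := key_ineq hγ0 hγ2 ht x
    calc cγ * Real.exp (-(|x| ^ γ)) * (Real.exp (|x| ^ γ - |x - t| ^ γ)
            * Real.exp (|x| ^ γ - |x - t| ^ γ))
        = cγ * Real.exp (-(|x| ^ γ) + (|x| ^ γ - |x - t| ^ γ + (|x| ^ γ - |x - t| ^ γ))) := by
          rw [← Real.exp_add, mul_assoc, ← Real.exp_add]
      _ ≤ cγ * Real.exp (96 * t ^ γ + -((1/2) * |x| ^ γ)) :=
          mul_le_mul_of_nonneg_left (Real.exp_le_exp.mpr (by linarith)) hcγ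
      _ = Real.exp (96 * t ^ γ) * (cγ * Real.exp (-((1/2) * |x| ^ γ))) := by
          rw [Real.exp_add]; ring
  calc ∫⁻ x, ((fun x => ENNReal.ofReal (cγ * Real.exp (-(|x| ^ γ)))) *
        fun x => ENNReal.ofReal (Real.exp (|x| ^ γ - |x - t| ^ γ))
          * ENNReal.ofReal (Real.exp (|x| ^ γ - |x - t| ^ γ))) x
      ≤ ∫⁻ x, ENNReal.ofReal (Real.exp (96 * t ^ γ))
          * ENNReal.ofReal (cγ * Real.exp (-((1/2) * |x| ^ γ))) := lintegral_mono hptw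
    _ = ENNReal.ofReal (Real.exp (96 * t ^ γ))
          * ∫⁻ x, ENNReal.ofReal (cγ * Real.exp (-((1/2) * |x| ^ γ))) := by
        rw [lintegral_const_mul]
        exact ENNReal.measurable_ofReal.comp
          ((continuous_const.mul ((((continuous_const.mul
            ((continuous_abs.rpow_const (fun _ => Or.inr hγ0.le)))).neg).rexp))).measurable)
    _ = ENNReal.ofReal (Real.exp (96 * t ^ γ)) * ENNReal.ofReal (2 ^ (1/γ)) := by
        rw [half_integral hγ0 (noise_mass hprob)]

lemma zero_mem_ThetaPC (n : ℕ) : (fun _ => (0:ℝ)) ∈ ThetaPC n 3 := by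
  refine ⟨![0, n, n, n], ![0, 0, 0], rfl, rfl, ?_, ?_⟩
  · intro x y h
    fin_cases x <;> fin_cases y <;>
      first
        | rfl
        | (simp [Fin.le_def] at h ⊢) <;> omega
  · intro j i hi
    have h0 : entry (fun _ : Fin n => (0:ℝ)) i = 0 := by
      unfold entry; split <;> rfl
    rw [h0]
    fin_cases j <;> rfl

lemma spike_mem_ThetaPC (n : ℕ) (hn : 1 ≤ n) (j : Fin n) (t : ℝ) :
    (fun i => if i = j then t else 0) ∈ ThetaPC n 3 := by
  refine ⟨![0, j.1, j.1 + 1, n], ![0, t, 0], rfl, ?_, ?_, ?_⟩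
  · rfl
  · intro x y h
    have hj := j.2
    fin_cases x <;> fin_cases y <;>
      first
        | rfl
        | (simp [Fin.le_def] at h ⊢) <;> omega
  · intro l i hi
    have hj := j.2
    rw [Finset.mem_Ioc] at hi
    have hent : ∀ (h : i - 1 < n), entry (fun i => if i = j then t else 0) i
        = if (⟨i - 1, h⟩ : Fin n) = j then t else 0 := by
      intro h; unfold entry; rw [dif_pos h]
    fin_cases l
    · obtain ⟨h1, h2⟩ := hi
      norm_num [Fin.castSucc, Fin.succ, Fin.castAdd, Fin.castLE] at h1 h2
      have hlt : i - 1 < n := by omega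
      rw [hent hlt, if_neg (by simp [Fin.ext_iff]; omega)]
      rfl
    · obtain ⟨h1, h2⟩ := hi
      norm_num [Fin.castSucc, Fin.succ, Fin.castAdd, Fin.castLE] at h1 h2
      have h12 : i = j.1 + 1 := by omega
      have hlt : i - 1 < n := by omega
      rw [hent hlt, if_pos (by simp [Fin.ext_iff]; omega)]
      rfl
    · obtain ⟨h1, h2⟩ := hi
      norm_num [Fin.castSucc, Fin.succ, Fin.castAdd, Fin.castLE] at h1 h2
      have hlt : i - 1 < n := by omega
      rw [hent hlt, if_neg (by simp [Fin.ext_iff]; omega)]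
      rfl

lemma set_lint_le {α : Type*} [MeasurableSpace α] (μ : Measure α) (s : Set α) (f : α → ℝ≥0∞) :
    ∫⁻ x in s, f x ∂μ ≤ ∫⁻ x, f x ∂μ := by
  conv_rhs => rw [← Measure.restrict_univ (μ := μ)]
  exact lintegral_mono_set (Set.subset_univ s)

end Aux

set_option maxHeartbeats 2000000 in
/-- Proposition 4.1 (lower bound for heavy-tailed errors): fix `γ ∈ (0,2]` and let
`p_γ ∝ exp(−|x|^γ)` be a probability density with normalizing constant `cγ > 0`. There
is a constant `c > 0` such that for every `n ≥ 1`, when `X = θ* + Z` with `Z_i` i.i.d.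
with density `p_γ`, every measurable estimator has worst-case risk over `Θ_3` at least
`c (log(en))^{2/γ}`. -/
theorem stmt7 (γ : ℝ) (hγ0 : 0 < γ) (hγ2 : γ ≤ 2) :
    ∃ c : ℝ, 0 < c ∧
    ∀ (n : ℕ), 1 ≤ n →
    ∀ cγ : ℝ, 0 < cγ →
    IsProbabilityMeasure (gammaNoise γ cγ) →
    ∀ est : (Fin n → ℝ) → (Fin n → ℝ), Measurable est →
    ENNReal.ofReal (c * Real.log (Real.exp 1 * n) ^ ((2 : ℝ) / γ)) ≤
      ⨆ θ ∈ ThetaPC n 3,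
        ∫⁻ x, ENNReal.ofReal (sqDist (est x) θ)
          ∂(Measure.pi fun i => Measure.map (fun z => θ i + z) (gammaNoise γ cγ)) := by
  have hγne : γ ≠ 0 := ne_of_gt hγ0
  have h2γ : (0:ℝ) < 2 ^ (1/γ) := Real.rpow_pos_of_pos (by norm_num) _
  set MR : ℝ := 1 + Real.exp 1 * 2 ^ (1/γ) with hMR_def
  have hMRpos : 0 < MR := by
    have := Real.exp_pos 1
    rw [hMR_def]; positivity
  set cc : ℝ := (1/96 : ℝ) ^ ((2:ℝ)/γ) * (192 * MR)⁻¹ with hcc_def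
  have hccpos : 0 < cc := by
    have h1 : (0:ℝ) < (1/96 : ℝ) ^ ((2:ℝ)/γ) := Real.rpow_pos_of_pos (by norm_num) _
    rw [hcc_def]; positivity
  refine ⟨cc, hccpos, ?_⟩
  intro n hn cγ hcγ hprob est hest
  haveI := hprob
  set ν := gammaNoise γ cγ with hν_def
  set L : ℝ := Real.log (Real.exp 1 * n) with hL_def
  have hnR : (1:ℝ) ≤ n := by exact_mod_cast hn
  have hL1 : 1 ≤ L := by
    rw [hL_def, Real.log_mul (Real.exp_ne_zero 1) (by positivity), Real.log_exp]
    have := Real.log_nonneg hnR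
    linarith
  have hLpos : 0 < L := lt_of_lt_of_le one_pos hL1
  set t : ℝ := (L/96) ^ (1/γ) with ht_def
  have ht0 : 0 < t := Real.rpow_pos_of_pos (by positivity) _
  have htγ : 96 * t ^ γ = L := by
    rw [ht_def, ← Real.rpow_mul (by positivity : (0:ℝ) ≤ L/96)]
    rw [show 1/γ * γ = 1 by field_simp, Real.rpow_one]
    field_simp
  have htsq : t ^ 2 = (L/96) ^ ((2:ℝ)/γ) := by
    rw [ht_def, ← Real.rpow_natCast ((L/96) ^ (1/γ)) 2,
      ← Real.rpow_mul (by positivity : (0:ℝ) ≤ L/96)]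
    norm_num
    congr 1
    field_simp
  have hexpL : Real.exp L = Real.exp 1 * n := Real.exp_log (by positivity)
  -- the one-dimensional likelihood ratio
  set g : ℝ → ℝ≥0∞ := fun x => ENNReal.ofReal (Real.exp (|x| ^ γ - |x - t| ^ γ)) with hg_def
  have hg : Measurable g := meas_g hγ0
  have hg1 : ∫⁻ x, g x ∂ν = 1 := noise_g_one hγ0 hcγ.le t hprob
  have hg2 : ∫⁻ x, g x * g x ∂ν ≤ (n:ℝ≥0∞) * ENNReal.ofReal (Real.exp 1 * 2 ^ (1/γ)) := by
    calc ∫⁻ x, g x * g x ∂ν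
        ≤ ENNReal.ofReal (Real.exp (96 * t ^ γ)) * ENNReal.ofReal (2 ^ (1/γ)) :=
          noise_g_sq hγ0 hγ2 hcγ.le ht0.le hprob
      _ = ENNReal.ofReal ((Real.exp 1 * n) * 2 ^ (1/γ)) := by
          rw [htγ, hexpL, ← ENNReal.ofReal_mul (by positivity)]
      _ = ENNReal.ofReal ((n:ℝ) * (Real.exp 1 * 2 ^ (1/γ))) := by congr 1; ring
      _ = (n:ℝ≥0∞) * ENNReal.ofReal (Real.exp 1 * 2 ^ (1/γ)) := by
          rw [ENNReal.ofReal_mul (by positivity), ENNReal.ofReal_natCast]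
  set M' : ℝ≥0∞ := 1 + ENNReal.ofReal (Real.exp 1 * 2 ^ (1/γ)) with hM'_def
  have hM'eq : M' = ENNReal.ofReal MR := by
    rw [hM'_def, hMR_def, ENNReal.ofReal_add zero_le_one (by positivity), ENNReal.ofReal_one]
  have hM'1 : 1 ≤ M' := le_self_add
  have hM'0 : M' ≠ 0 := by
    intro h; rw [h] at hM'1; exact (not_le.mpr zero_lt_one) hM'1
  have hM'top : M' ≠ ∞ := by rw [hM'eq]; exact ENNReal.ofReal_ne_top
  have hn0 : (n:ℝ≥0∞) ≠ 0 := by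
    simp only [ne_eq, Nat.cast_eq_zero]; omega
  have hntop : (n:ℝ≥0∞) ≠ ∞ := ENNReal.natCast_ne_top n
  set Q : Measure (Fin n → ℝ) := Measure.pi (fun _ : Fin n => ν) with hQ_def
  haveI hQprob : IsProbabilityMeasure Q := by rw [hQ_def]; infer_instance
  set G : Fin n → (Fin n → ℝ) → ℝ≥0∞ := fun j x => g (x j) with hG_def
  have hG : ∀ j, Measurable (G j) := fun j => hg.comp (measurable_pi_apply j)
  -- single-coordinate product representation
  have hprod_single : ∀ (j : Fin n) (x : Fin n → ℝ),
      (∏ i, (if i = j then g else fun _ => (1:ℝ≥0∞))  (x i)) = G j x := by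
    intro j x
    rw [Finset.prod_eq_single j (fun i _ hij => by rw [if_neg hij])
      (fun h => absurd (Finset.mem_univ j) h)]
    rw [if_pos rfl]
  have hGint : ∀ j, ∫⁻ x, G j x ∂Q = 1 := by
    intro j
    have h1 : ∫⁻ x, G j x ∂Q
        = ∫⁻ x, ∏ i, (if i = j then g else fun _ => (1:ℝ≥0∞)) (x i) ∂Q := by
      congr 1; funext x; rw [hprod_single j x]
    rw [h1, hQ_def, lintegral_pi_prod _ _ (fun i => by
      by_cases h : i = j
      · rw [if_pos h]; exact hg
      · rw [if_neg h]; exact measurable_const)]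
    refine Finset.prod_eq_one (fun i _ => ?_)
    by_cases h : i = j
    · rw [if_pos h]; exact hg1
    · rw [if_neg h]; rw [lintegral_one]; exact measure_univ
  -- off-diagonal second moments
  have hGG : ∀ j k : Fin n, j ≠ k → ∫⁻ x, G j x * G k x ∂Q = 1 := by
    intro j k hjk
    set u : Fin n → ℝ → ℝ≥0∞ :=
      fun i y => (if i = j then g y else 1) * (if i = k then g y else 1) with hu_def
    have hueval : ∀ i y, u i y = (if i = j then g y else 1) * (if i = k then g y else 1) :=
      fun i y => rfl
    have hu : ∀ i, Measurable (u i) := by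
      intro i
      have heq : u i = fun y => (if i = j then g y else 1) * (if i = k then g y else 1) :=
        funext fun y => hueval i y
      rw [heq]
      refine Measurable.mul ?_ ?_
      · by_cases hij : i = j
        · simp only [hij, if_true]; exact hg
        · simp only [hij, if_false]; exact measurable_const
      · by_cases hik : i = k
        · simp only [hik, if_true]; exact hg
        · simp only [hik, if_false]; exact measurable_const
    have h1 : ∀ x : Fin n → ℝ, (∏ i, u i (x i)) = G j x * G k x := by
      intro x
      have : ∀ i : Fin n, u i (x i)
          = (if i = j then g (x i) else 1) * (if i = k then g (x i) else 1) :=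
        fun i => rfl
      simp_rw [this]
      rw [Finset.prod_mul_distrib]
      congr 1
      · rw [Finset.prod_eq_single j (fun i _ hij => by rw [if_neg hij])
          (fun h => absurd (Finset.mem_univ j) h), if_pos rfl]
      · rw [Finset.prod_eq_single k (fun i _ hik => by rw [if_neg hik])
          (fun h => absurd (Finset.mem_univ k) h), if_pos rfl]
    have h2 : ∫⁻ x, G j x * G k x ∂Q = ∫⁻ x, ∏ i, u i (x i) ∂Q := by
      congr 1; funext x; rw [h1 x]
    rw [h2, hQ_def, lintegral_pi_prod _ _ hu]
    refine Finset.prod_eq_one (fun i _ => ?_)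
    by_cases hij : i = j
    · have : u i = fun y => g y := by
        funext y; rw [hueval, if_pos hij, if_neg (by rw [hij]; exact hjk), mul_one]
      rw [this]; exact hg1
    · by_cases hik : i = k
      · have : u i = fun y => g y := by
          funext y; rw [hueval, if_neg hij, if_pos hik, one_mul]
        rw [this]; exact hg1
      · have : u i = fun _ => (1:ℝ≥0∞) := by
          funext y; rw [hueval, if_neg hij, if_neg hik, mul_one]
        rw [this, lintegral_one]; exact measure_univ
  -- diagonal second moments
  have hGG2 : ∀ j : Fin n, ∫⁻ x, G j x * G j x ∂Q = ∫⁻ y, g y * g y ∂ν := by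
    intro j
    set u : Fin n → ℝ → ℝ≥0∞ := fun i y => if i = j then g y * g y else 1 with hu_def
    have hueval : ∀ i y, u i y = if i = j then g y * g y else 1 := fun i y => rfl
    have hu : ∀ i, Measurable (u i) := by
      intro i
      by_cases h : i = j
      · have : u i = fun y => g y * g y := by funext y; rw [hueval, if_pos h]
        rw [this]; exact hg.mul hg
      · have : u i = fun _ => 1 := by funext y; rw [hueval, if_neg h]
        rw [this]; exact measurable_const
    have h1 : ∀ x : Fin n → ℝ, (∏ i, u i (x i)) = G j x * G j x := by
      intro x
      rw [Finset.prod_eq_single j (fun i _ hij => by rw [hueval, if_neg hij])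
        (fun h => absurd (Finset.mem_univ j) h)]
      rw [hueval, if_pos rfl]
    have h2 : ∫⁻ x, G j x * G j x ∂Q = ∫⁻ x, ∏ i, u i (x i) ∂Q := by
      congr 1; funext x; rw [h1 x]
    rw [h2, hQ_def, lintegral_pi_prod _ _ hu]
    rw [Finset.prod_eq_single j
      (fun i _ hij => by
        have : u i = fun _ => 1 := by funext y; rw [hueval, if_neg hij]
        rw [this, lintegral_one]; exact measure_univ)
      (fun h => absurd (Finset.mem_univ j) h)]
    have : u j = fun y => g y * g y := by funext y; rw [hueval, if_pos rfl]
    rw [this]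
  -- the mixture likelihood ratio
  set T : (Fin n → ℝ) → ℝ≥0∞ := fun x => ∑ j, G j x with hT_def
  have hT : Measurable T := Finset.measurable_sum _ (fun j _ => hG j)
  have hET : ∫⁻ x, T x ∂Q = n := by
    rw [hT_def, lintegral_finset_sum _ (fun j _ => hG j)]
    simp [hGint]
  have hET2 : ∫⁻ x, T x * T x ∂Q ≤ (n:ℝ≥0∞)^2 * M' := by
    have hTT : ∀ x, T x * T x = ∑ j, ∑ k, G j x * G k x := by
      intro x; rw [hT_def]; exact Finset.sum_mul_sum _ _ _ _
    have h1 : ∫⁻ x, T x * T x ∂Q = ∑ j, ∑ k, ∫⁻ x, G j x * G k x ∂Q := by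
      simp_rw [hTT]
      rw [lintegral_finset_sum _ (fun j _ =>
        Finset.measurable_sum _ (fun k _ =>
          (show Measurable fun x => G j x * G k x from (hG j).mul (hG k))))]
      exact Finset.sum_congr rfl (fun j _ =>
        lintegral_finset_sum _ (fun k _ => (hG j).mul (hG k)))
    rw [h1]
    have h2 : ∀ j k : Fin n, ∫⁻ x, G j x * G k x ∂Q
        ≤ 1 + (if j = k then (n:ℝ≥0∞) * ENNReal.ofReal (Real.exp 1 * 2 ^ (1/γ)) else 0) := by
      intro j k
      by_cases h : j = k
      · subst h
        rw [if_pos rfl, hGG2 j]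
        exact le_trans hg2 le_add_self
      · rw [hGG j k h, if_neg h]
        simp
    calc ∑ j, ∑ k, ∫⁻ x, G j x * G k x ∂Q
        ≤ ∑ j : Fin n, ∑ k : Fin n,
            (1 + (if j = k then (n:ℝ≥0∞) * ENNReal.ofReal (Real.exp 1 * 2 ^ (1/γ)) else 0)) :=
          Finset.sum_le_sum (fun j _ => Finset.sum_le_sum (fun k _ => h2 j k))
      _ = (n:ℝ≥0∞)^2 * M' := by
          simp only [Finset.sum_add_distrib, Finset.sum_const, Finset.card_univ,
            Fintype.card_fin, Finset.sum_ite_eq, Finset.mem_univ, if_true]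
          rw [hM'_def]
          push_cast
          ring
  -- Paley–Zygmund / second moment argument
  set S' : Set (Fin n → ℝ) := {x | (n:ℝ≥0∞) < 2 * T x} with hS'_def
  have hS' : MeasurableSet S' := measurableSet_lt measurable_const (hT.const_mul 2)
  set K : ℝ≥0∞ := 4 * M' * n with hK_def
  have hK0 : K ≠ 0 := by
    rw [hK_def]
    exact mul_ne_zero (mul_ne_zero (by norm_num) hM'0) hn0
  have hKtop : K ≠ ∞ := by
    rw [hK_def]
    exact ENNReal.mul_ne_top (ENNReal.mul_ne_top (by norm_num) hM'top) hntop
  have hptK : ∀ x, 4 * K * T x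
      ≤ 2 * K * n + 4 * K * K * S'.indicator (fun _ => (1:ℝ≥0∞)) x + 4 * (T x * T x) := by
    intro x
    by_cases h1 : 2 * T x ≤ (n:ℝ≥0∞)
    · have : 4 * K * T x ≤ 2 * K * n := by
        calc 4 * K * T x = 2 * K * (2 * T x) := by ring
          _ ≤ 2 * K * n := mul_le_mul_right h1 _
      exact le_trans this (le_trans le_self_add le_self_add)
    · have hxS : x ∈ S' := by rw [hS'_def]; exact lt_of_not_ge h1
      rw [Set.indicator_of_mem hxS]
      by_cases h2 : T x ≤ K
      · have h3 : 4 * K * T x ≤ 4 * K * K * 1 := by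
          rw [mul_one]; exact mul_le_mul_right h2 _
        exact le_trans h3 (le_trans le_add_self le_self_add)
      · have h3 : 4 * K * T x ≤ 4 * (T x * T x) := by
          calc 4 * K * T x = 4 * (K * T x) := by ring
            _ ≤ 4 * (T x * T x) := mul_le_mul_right
                (mul_le_mul_left (le_of_lt (not_le.mp h2)) _) _
        exact le_trans h3 le_add_self
  have hMarkov : (1:ℝ≥0∞) ≤ 16 * M' * Q S' := by
    have hintK : 4 * K * (n:ℝ≥0∞)
        ≤ 2 * K * n + 4 * K * K * Q S' + 4 * ∫⁻ x, T x * T x ∂Q := by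
      have hl : ∫⁻ x, 4 * K * T x ∂Q = 4 * K * n := by
        rw [lintegral_const_mul _ hT, hET]
      have hmid : Measurable fun x => 2 * K * (n:ℝ≥0∞)
          + 4 * K * K * S'.indicator (fun _ => (1:ℝ≥0∞)) x := by
        exact Measurable.add (f := fun _ => 2 * K * (n:ℝ≥0∞))
          (g := fun x => 4 * K * K * S'.indicator (fun _ => (1:ℝ≥0∞)) x)
          measurable_const ((measurable_const.indicator hS').const_mul _)
      have hr : ∫⁻ x, (2 * K * (n:ℝ≥0∞) + 4 * K * K * S'.indicator (fun _ => (1:ℝ≥0∞)) x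
            + 4 * (T x * T x)) ∂Q
          = 2 * K * n + 4 * K * K * Q S' + 4 * ∫⁻ x, T x * T x ∂Q := by
        rw [lintegral_add_right _ (show Measurable fun x => 4 * (T x * T x) from (hT.mul hT).const_mul 4)]
        congr 1
        · rw [lintegral_add_right _ ((measurable_const.indicator hS').const_mul _)]
          congr 1
          · rw [lintegral_const, measure_univ, mul_one]
          · rw [lintegral_const_mul _ (measurable_const.indicator hS'),
              show (fun _ : Fin n → ℝ => (1:ℝ≥0∞)) = (1 : (Fin n → ℝ) → ℝ≥0∞) from rfl,
              lintegral_indicator_one hS']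
        · rw [lintegral_const_mul _ (show Measurable fun x => T x * T x from hT.mul hT)]
      calc 4 * K * (n:ℝ≥0∞) = ∫⁻ x, 4 * K * T x ∂Q := hl.symm
        _ ≤ ∫⁻ x, (2 * K * (n:ℝ≥0∞) + 4 * K * K * S'.indicator (fun _ => (1:ℝ≥0∞)) x
            + 4 * (T x * T x)) ∂Q := lintegral_mono hptK
        _ = _ := hr
    have hstep : 4 * K * (n:ℝ≥0∞) ≤ 2 * K * n + 4 * K * K * Q S' + 4 * ((n:ℝ≥0∞)^2 * M') :=
      le_trans hintK (by
        exact add_le_add_right (mul_le_mul_right hET2 4) _)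
    rw [hK_def] at hstep
    have harr : (16:ℝ≥0∞) * M' * (n:ℝ≥0∞)^2
        ≤ 12 * M' * n^2 + 64 * (M' * M') * (n^2) * Q S' := by
      calc (16:ℝ≥0∞) * M' * (n:ℝ≥0∞)^2 = 4 * (4 * M' * n) * n := by ring
        _ ≤ 2 * (4 * M' * n) * n + 4 * (4 * M' * n) * (4 * M' * n) * Q S'
            + 4 * ((n:ℝ≥0∞)^2 * M') := hstep
        _ = 12 * M' * n^2 + 64 * (M' * M') * (n^2) * Q S' := by ring
    have harr2 : 12 * M' * (n:ℝ≥0∞)^2 + 4 * M' * n^2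
        ≤ 12 * M' * n^2 + (4 * M' * n^2) * (16 * M' * Q S') := by
      calc 12 * M' * (n:ℝ≥0∞)^2 + 4 * M' * n^2 = 16 * M' * n^2 := by ring
        _ ≤ 12 * M' * n^2 + 64 * (M' * M') * (n^2) * Q S' := harr
        _ = 12 * M' * n^2 + (4 * M' * n^2) * (16 * M' * Q S') := by ring
    have h12top : (12:ℝ≥0∞) * M' * (n:ℝ≥0∞)^2 ≠ ∞ := by
      exact ENNReal.mul_ne_top (ENNReal.mul_ne_top (by norm_num) hM'top)
        (by simp [pow_two]; exact ENNReal.mul_ne_top hntop hntop)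
    have h3 : 4 * M' * (n:ℝ≥0∞)^2 ≤ (4 * M' * n^2) * (16 * M' * Q S') :=
      (ENNReal.add_le_add_iff_left h12top).mp harr2
    have h4M0 : (4:ℝ≥0∞) * M' * (n:ℝ≥0∞)^2 ≠ 0 := by
      refine mul_ne_zero (mul_ne_zero (by norm_num) hM'0) ?_
      simp [pow_two]
      exact fun h => absurd h (by simpa using hn0)
    have h4Mtop : (4:ℝ≥0∞) * M' * (n:ℝ≥0∞)^2 ≠ ∞ := by
      exact ENNReal.mul_ne_top (ENNReal.mul_ne_top (by norm_num) hM'top)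
        (by simp [pow_two]; exact ENNReal.mul_ne_top hntop hntop)
    have := (ENNReal.mul_le_mul_iff_right h4M0 h4Mtop).mp
      (by calc (4 * M' * (n:ℝ≥0∞)^2) * 1 = 4 * M' * n^2 := by ring
            _ ≤ (4 * M' * n^2) * (16 * M' * Q S') := h3)
    exact this
  -- the estimator-dependent event
  set θ0 : Fin n → ℝ := fun _ => 0 with hθ0_def
  have msq0 : Measurable fun x => sqDist (est x) θ0 := by
    unfold sqDist
    exact Finset.measurable_sum _ (fun i _ =>
      (((measurable_pi_apply i).comp hest).sub measurable_const).pow_const 2)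
  set A : Set (Fin n → ℝ) := {x | sqDist (est x) θ0 ≤ t^2/4} with hA_def
  have hAmeas : MeasurableSet A := measurableSet_le msq0 measurable_const
  set D : ℝ≥0∞ := ENNReal.ofReal (t^2/4) with hD_def
  -- identification of the shifted product measures
  have hP0 : (Measure.pi fun i => Measure.map (fun z => θ0 i + z) ν) = Q := by
    rw [hQ_def]
    congr 1
    funext i
    have hid : (fun z : ℝ => θ0 i + z) = id := funext fun z => zero_add z
    rw [hid, Measure.map_id]
  set θJ : Fin n → Fin n → ℝ := fun j i => if i = j then t else 0 with hθJ_def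
  have hPj : ∀ j, (Measure.pi fun i => Measure.map (fun z => θJ j i + z) ν)
      = Q.withDensity (G j) := by
    intro j
    have hfac : ∀ i : Fin n, Measure.map (fun z => θJ j i + z) ν
        = ν.withDensity (if i = j then g else fun _ => (1:ℝ≥0∞)) := by
      intro i
      by_cases h : i = j
      · rw [if_pos h]
        have : θJ j i = t := by rw [hθJ_def]; simp [h]
        rw [this, hν_def]
        exact noise_shift hγ0 hcγ.le t
      · rw [if_neg h]
        have : θJ j i = 0 := by rw [hθJ_def]; simp [h]
        rw [this]
        have hid : (fun z : ℝ => (0:ℝ) + z) = id := funext fun z => zero_add z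
        rw [hid, Measure.map_id]
        have : (fun _ : ℝ => (1:ℝ≥0∞)) = (1 : ℝ → ℝ≥0∞) := rfl
        rw [this, withDensity_one]
    have h1 : (Measure.pi fun i => Measure.map (fun z => θJ j i + z) ν)
        = Measure.pi (fun i => ν.withDensity (if i = j then g else fun _ => (1:ℝ≥0∞))) := by
      congr 1
      funext i
      exact hfac i
    have hsf : ∀ i, SigmaFinite (ν.withDensity (if i = j then g else fun _ => (1:ℝ≥0∞))) := by
      intro i
      rw [← hfac i]
      have : IsProbabilityMeasure (Measure.map (fun z => θJ j i + z) ν) :=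
        Measure.isProbabilityMeasure_map (measurable_const_add _).aemeasurable
      infer_instance
    have hgi : ∀ i : Fin n, Measurable (if i = j then g else fun _ => (1:ℝ≥0∞)) := by
      intro i
      by_cases h : i = j
      · rw [if_pos h]; exact hg
      · rw [if_neg h]; exact measurable_const
    rw [h1, @pi_withDensity' n ν hprob _ hgi hsf]
    rw [hQ_def]
    congr 1
    funext x
    exact hprod_single j x
  -- lower bound at θ0
  set Ssup := ⨆ θ ∈ ThetaPC n 3,
      ∫⁻ x, ENNReal.ofReal (sqDist (est x) θ)
        ∂(Measure.pi fun i => Measure.map (fun z => θ i + z) ν) with hSsup_def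
  have hR0 : D * Q Aᶜ ≤ Ssup := by
    have hle := le_iSup₂ (f := fun θ (_ : θ ∈ ThetaPC n 3) =>
      ∫⁻ x, ENNReal.ofReal (sqDist (est x) θ)
        ∂(Measure.pi fun i => Measure.map (fun z => θ i + z) ν)) θ0 (zero_mem_ThetaPC n)
    refine le_trans ?_ hle
    rw [hP0]
    calc D * Q Aᶜ = ∫⁻ _ in Aᶜ, D ∂Q := by rw [setLIntegral_const, mul_comm]
      _ ≤ ∫⁻ x in Aᶜ, ENNReal.ofReal (sqDist (est x) θ0) ∂Q := by
          refine setLIntegral_mono msq0.ennreal_ofReal (fun x hx => ?_)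
          rw [hD_def]
          exact ENNReal.ofReal_le_ofReal (le_of_lt (not_le.mp hx))
      _ ≤ ∫⁻ x, ENNReal.ofReal (sqDist (est x) θ0) ∂Q := set_lint_le _ _ _
  -- lower bound at the spikes
  have hRj : ∀ j : Fin n, D * ∫⁻ x in A, G j x ∂Q ≤ Ssup := by
    intro j
    have hmem : θJ j ∈ ThetaPC n 3 := by
      rw [hθJ_def]
      exact spike_mem_ThetaPC n hn j t
    have hle := le_iSup₂ (f := fun θ (_ : θ ∈ ThetaPC n 3) =>
      ∫⁻ x, ENNReal.ofReal (sqDist (est x) θ)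
        ∂(Measure.pi fun i => Measure.map (fun z => θ i + z) ν)) (θJ j) hmem
    refine le_trans ?_ hle
    have hPA : ∫⁻ x in A, G j x ∂Q
        = (Measure.pi fun i => Measure.map (fun z => θJ j i + z) ν) A := by
      rw [hPj j, withDensity_apply _ hAmeas]
    rw [hPA]
    have hmsqj : Measurable fun x => sqDist (est x) (θJ j) := by
      unfold sqDist
      exact Finset.measurable_sum _ (fun i _ =>
        (((measurable_pi_apply i).comp hest).sub measurable_const).pow_const 2)
    have hptA : ∀ x ∈ A, t^2/4 ≤ sqDist (est x) (θJ j) := by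
      intro x hx
      have hx' : sqDist (est x) θ0 ≤ t^2/4 := hx
      have h1 : (est x j - θ0 j)^2 ≤ sqDist (est x) θ0 := by
        unfold sqDist
        exact Finset.single_le_sum (f := fun i => (est x i - θ0 i)^2)
          (fun i _ => sq_nonneg _) (Finset.mem_univ j)
      have h2 : (est x j - θJ j j)^2 ≤ sqDist (est x) (θJ j) := by
        unfold sqDist
        exact Finset.single_le_sum (f := fun i => (est x i - θJ j i)^2)
          (fun i _ => sq_nonneg _) (Finset.mem_univ j)
      have hθ0j : θ0 j = 0 := rfl
      have hθJj : θJ j j = t := by rw [hθJ_def]; simp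
      rw [hθ0j] at h1
      rw [hθJj] at h2
      have hu2 : (est x j)^2 ≤ t^2/4 := by
        have := le_trans h1 hx'
        simpa using this
      nlinarith [h2, hu2, ht0.le, sq_nonneg (est x j - t), sq_nonneg (est x j + t)]
    calc D * (Measure.pi fun i => Measure.map (fun z => θJ j i + z) ν) A
        = ∫⁻ _ in A, D ∂(Measure.pi fun i => Measure.map (fun z => θJ j i + z) ν) := by
          rw [setLIntegral_const, mul_comm]
      _ ≤ ∫⁻ x in A, ENNReal.ofReal (sqDist (est x) (θJ j))
            ∂(Measure.pi fun i => Measure.map (fun z => θJ j i + z) ν) := by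
          refine setLIntegral_mono hmsqj.ennreal_ofReal (fun x hx => ?_)
          rw [hD_def]
          exact ENNReal.ofReal_le_ofReal (hptA x hx)
      _ ≤ ∫⁻ x, ENNReal.ofReal (sqDist (est x) (θJ j))
            ∂(Measure.pi fun i => Measure.map (fun z => θJ j i + z) ν) := set_lint_le _ _ _
  -- summing the spike bounds
  set b : ℝ≥0∞ := ∫⁻ x in A, T x ∂Q with hb_def
  have hsumb : D * b ≤ n * Ssup := by
    have h1 : b = ∑ j, ∫⁻ x in A, G j x ∂Q := by
      rw [hb_def, hT_def]
      exact lintegral_finset_sum _ (fun j _ => hG j)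
    calc D * b = ∑ j, D * ∫⁻ x in A, G j x ∂Q := by rw [h1, Finset.mul_sum]
      _ ≤ ∑ _j : Fin n, Ssup := Finset.sum_le_sum (fun j _ => hRj j)
      _ = n * Ssup := by rw [Finset.sum_const, Finset.card_univ, Fintype.card_fin,
            nsmul_eq_mul]
  -- combining
  set q : ℝ≥0∞ := Q (A ∩ S') with hq_def
  have hq1 : Q S' ≤ Q Aᶜ + q := by
    have hsub : S' ⊆ Aᶜ ∪ (A ∩ S') := by
      intro x hx
      by_cases h : x ∈ A
      · exact Or.inr ⟨h, hx⟩
      · exact Or.inl h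
    calc Q S' ≤ Q (Aᶜ ∪ (A ∩ S')) := measure_mono hsub
      _ ≤ Q Aᶜ + q := measure_union_le _ _
  have hq2 : (n:ℝ≥0∞) * q ≤ 2 * b := by
    calc (n:ℝ≥0∞) * q = ∫⁻ _ in A ∩ S', (n:ℝ≥0∞) ∂Q := by
          rw [setLIntegral_const, hq_def, mul_comm]
      _ ≤ ∫⁻ x in A ∩ S', 2 * T x ∂Q := by
          refine setLIntegral_mono (hT.const_mul 2) (fun x hx => le_of_lt hx.2)
      _ = 2 * ∫⁻ x in A ∩ S', T x ∂Q := lintegral_const_mul _ hT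
      _ ≤ 2 * b := by
          rw [hb_def]
          exact mul_le_mul_right (lintegral_mono_set Set.inter_subset_left) _
  -- the final numeric computation
  set X : ℝ≥0∞ := ENNReal.ofReal (cc * L ^ ((2:ℝ)/γ)) with hX_def
  have hXD : X * (48 * M') = D := by
    rw [hX_def, hM'eq, hD_def]
    have h48 : (48:ℝ≥0∞) = ENNReal.ofReal 48 := by norm_num
    rw [h48, ← ENNReal.ofReal_mul (by norm_num : (0:ℝ) ≤ 48),
      ← ENNReal.ofReal_mul (by positivity)]
    congr 1
    rw [htsq]
    have hfra : (L/96 : ℝ) = L * (1/96) := by ring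
    rw [hfra, Real.mul_rpow hLpos.le (by norm_num), hcc_def]
    field_simp
    ring
  have hDq : D * q ≤ 2 * Ssup := by
    have h1 : (n:ℝ≥0∞) * (D * q) ≤ (n:ℝ≥0∞) * (2 * Ssup) := by
      calc (n:ℝ≥0∞) * (D * q) = D * ((n:ℝ≥0∞) * q) := by ring
        _ ≤ D * (2 * b) := mul_le_mul_right hq2 _
        _ = 2 * (D * b) := by ring
        _ ≤ 2 * ((n:ℝ≥0∞) * Ssup) := mul_le_mul_right hsumb _
        _ = (n:ℝ≥0∞) * (2 * Ssup) := by ring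
    exact (ENNReal.mul_le_mul_iff_right hn0 hntop).mp h1
  have hfinal : 3 * X ≤ 3 * Ssup := by
    calc 3 * X = (3 * X) * 1 := by rw [mul_one]
      _ ≤ (3 * X) * (16 * M' * Q S') := mul_le_mul_right hMarkov _
      _ = (X * (48 * M')) * Q S' := by ring
      _ = D * Q S' := by rw [hXD]
      _ ≤ D * (Q Aᶜ + q) := mul_le_mul_right hq1 _
      _ = D * Q Aᶜ + D * q := by ring
      _ ≤ Ssup + 2 * Ssup := add_le_add hR0 hDq
      _ = 3 * Ssup := by ring
  have hX_le : X ≤ Ssup :=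
    (ENNReal.mul_le_mul_iff_right (by norm_num) (by norm_num)).mp hfinal
  exact hX_le
end
end

section
/- Let n ≥ 1, 1 ≤ k ≤ n, x ∈ ℝ^n, and let θ̂ be any minimizer of ‖x − θ‖² over θ ∈ Θ_k^↑, with change points 0 = â_0 < â_1 < ⋯ < â_m = n (θ̂ constant on each block (â_{j-1} : â_j] and θ̂_{â_j} ≠ θ̂_{â_j + 1} for 1 ≤ j ≤ m − 1). Then for every interior change point â_j (1 ≤ j ≤ m − 1) and all integers s, t with 0 ≤ s < â_j < t ≤ n, it holds that x̄_{(s : â_j]} < (θ̂_{â_j} + θ̂_{â_j + 1})/2 < x̄_{(â_j : t]}. -/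
open MeasureTheory ProbabilityTheory Finset
open scoped ENNReal NNReal Classical BigOperators

noncomputable section

section AuxStmt14

lemma entry_val {n : ℕ} (v : Fin n → ℝ) (i : Fin n) : entry v (i.val + 1) = v i := by
  simp [entry, i.isLt]

lemma Ioc_eq_map {n a b : ℕ} (hb : b ≤ n) :
    Finset.Ioc a b = (Finset.univ.filter (fun i : Fin n => a < i.val + 1 ∧ i.val + 1 ≤ b)).map
      ⟨fun i : Fin n => i.val + 1, by intro x y h; simpa [Fin.ext_iff] using h⟩ := by
  ext p
  simp only [Finset.mem_Ioc, Finset.mem_map, Finset.mem_filter, Finset.mem_univ, true_and,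
    Function.Embedding.coeFn_mk]
  constructor
  · rintro ⟨h1, h2⟩
    exact ⟨⟨p - 1, by omega⟩, by show (a < p - 1 + 1 ∧ p - 1 + 1 ≤ b) ∧ p - 1 + 1 = p; omega⟩
  · rintro ⟨i, ⟨h1, h2⟩, rfl⟩; exact ⟨h1, h2⟩

lemma sum_Ioc_entry {n : ℕ} (g : Fin n → ℝ) {a b : ℕ} (hb : b ≤ n) :
    ∑ i ∈ Finset.Ioc a b, entry g i
      = ∑ i ∈ Finset.univ.filter (fun i : Fin n => a < i.val + 1 ∧ i.val + 1 ≤ b), g i := by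
  rw [Ioc_eq_map (n := n) hb, Finset.sum_map]
  exact Finset.sum_congr rfl (fun i _ => entry_val g i)

lemma card_filter_Ioc {n : ℕ} {a b : ℕ} (hb : b ≤ n) :
    (Finset.univ.filter (fun i : Fin n => a < i.val + 1 ∧ i.val + 1 ≤ b)).card = b - a := by
  have := Ioc_eq_map (n := n) (a := a) (b := b) hb
  have h2 : (Finset.Ioc a b).card = b - a := Nat.card_Ioc a b
  rw [this, Finset.card_map] at h2; exact h2

def EMono (n : ℕ) (θ : Fin n → ℝ) : Prop :=
  ∀ i : ℕ, 1 ≤ i → i < n → entry θ i ≤ entry θ (i + 1)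

lemma EMono.le {n : ℕ} {θ : Fin n → ℝ} (h : EMono n θ) {i i' : ℕ}
    (h1 : 1 ≤ i) (h2 : i ≤ i') (h3 : i' ≤ n) : entry θ i ≤ entry θ i' := by
  induction i' with
  | zero => omega
  | succ j ih =>
    rcases Nat.lt_or_ge i (j+1) with hlt | hge
    · have hj : i ≤ j := by omega
      exact le_trans (ih hj (by omega)) (h j (by omega) (by omega))
    · have : i = j + 1 := by omega
      subst this; rfl

def jumpSet (n : ℕ) (θ : Fin n → ℝ) : Finset ℕ :=
  (Finset.Ico 1 n).filter fun i => entry θ i ≠ entry θ (i + 1)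

lemma const_of_no_jump {n : ℕ} {θ : Fin n → ℝ} {i i' : ℕ}
    (h1 : 1 ≤ i) (h2 : i ≤ i') (h3 : i' ≤ n)
    (h4 : ∀ p, i ≤ p → p < i' → p ∉ jumpSet n θ) : entry θ i = entry θ i' := by
  induction i' with
  | zero => omega
  | succ j ih =>
    rcases Nat.lt_or_ge i (j+1) with hlt | hge
    · have hj : i ≤ j := by omega
      have hstep : entry θ j = entry θ (j+1) := by
        have := h4 j (by omega) (by omega)
        simp only [jumpSet, Finset.mem_filter, Finset.mem_Ico, not_and, not_not] at this
        exact this ⟨by omega, by omega⟩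
      rw [ih hj (by omega) (fun p hp hp' => h4 p hp (by omega)), hstep]
    · have : i = j + 1 := by omega
      subst this; rfl


lemma cover {a : Fin (k+1) → ℕ} (ha0 : a 0 = 0) (han : a (Fin.last k) = n)
    (hmono : Monotone a) {p : ℕ} (h1 : 1 ≤ p) (h2 : p ≤ n) :
    ∃ l : Fin k, a l.castSucc < p ∧ p ≤ a l.succ := by
  classical
  set T := Finset.univ.filter (fun l : Fin (k+1) => a l < p) with hT
  have h0T : (0 : Fin (k+1)) ∈ T := by simp [hT, ha0]; omega
  have hne : T.Nonempty := ⟨0, h0T⟩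
  set l' := T.max' hne with hl'
  have hl'T : l' ∈ T := T.max'_mem hne
  have hal' : a l' < p := by simpa [hT] using hl'T
  have hlast : l' ≠ Fin.last k := by
    intro h; rw [h, han] at hal'; omega
  have hlt : l'.val < k := by
    have := l'.isLt
    rcases Nat.lt_or_ge l'.val k with h | h
    · exact h
    · exfalso; apply hlast; apply Fin.ext; simp only [Fin.val_last]; omega
  refine ⟨⟨l'.val, hlt⟩, ?_, ?_⟩
  · have : (Fin.castSucc (⟨l'.val, hlt⟩ : Fin k)) = l' := Fin.ext rfl
    rw [this]; exact hal'
  · set l2 : Fin (k+1) := ⟨l'.val + 1, by omega⟩ with hl2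
    have : (Fin.succ (⟨l'.val, hlt⟩ : Fin k)) = l2 := Fin.ext rfl
    rw [this]
    by_contra hc
    push_neg at hc
    have hmem : l2 ∈ T := by simp [hT]; omega
    have := T.le_max' l2 hmem
    rw [← hl'] at this
    have : l2.val ≤ l'.val := this
    simp [hl2] at this

lemma ThetaUp.emono {θ : Fin n → ℝ} (h : θ ∈ ThetaUp n k) : EMono n θ := by
  obtain ⟨a, μ, ha0, han, hamono, hμmono, hval⟩ := h
  intro p hp1 hpn
  obtain ⟨l, hl1, hl2⟩ := cover ha0 han hamono hp1 (by omega)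
  obtain ⟨l', hl1', hl2'⟩ := cover ha0 han hamono (by omega : 1 ≤ p+1) (by omega)
  rw [hval l p (Finset.mem_Ioc.2 ⟨hl1, hl2⟩), hval l' (p+1) (Finset.mem_Ioc.2 ⟨hl1', hl2'⟩)]
  apply hμmono
  by_contra hc
  push_neg at hc
  have hvv : l'.val < l.val := hc
  have : l'.succ ≤ l.castSucc := by
    show l'.val + 1 ≤ l.val
    omega
  have := hamono this
  omega

lemma ThetaUp.card_lt {θ : Fin n → ℝ} (hn : 1 ≤ n) (h : θ ∈ ThetaUp n k) :
    (jumpSet n θ).card < k := by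
  obtain ⟨a, μ, ha0, han, hamono, hμmono, hval⟩ := h
  have hsub : ∀ i ∈ jumpSet n θ, ∃ l : Fin (k+1), a l = i := by
    intro i hi
    simp only [jumpSet, Finset.mem_filter, Finset.mem_Ico] at hi
    obtain ⟨⟨hi1, hi2⟩, hne⟩ := hi
    obtain ⟨l, hl1, hl2⟩ := cover ha0 han hamono (by omega : 1 ≤ i+1) (by omega)
    rcases Nat.lt_or_ge (a l.castSucc) i with hlt | hge
    · exfalso
      have e1 := hval l i (Finset.mem_Ioc.2 ⟨hlt, by omega⟩)
      have e2 := hval l (i+1) (Finset.mem_Ioc.2 ⟨by omega, hl2⟩)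
      exact hne (e1.trans e2.symm)
    · exact ⟨l.castSucc, by omega⟩
  have himg : insert 0 (insert n (jumpSet n θ)) ⊆ Finset.image a Finset.univ := by
    intro i hi
    simp only [Finset.mem_insert] at hi
    rcases hi with rfl | rfl | hi
    · exact Finset.mem_image.2 ⟨0, Finset.mem_univ _, ha0⟩
    · exact Finset.mem_image.2 ⟨Fin.last k, Finset.mem_univ _, han⟩
    · obtain ⟨l, hl⟩ := hsub i hi
      exact Finset.mem_image.2 ⟨l, Finset.mem_univ _, hl⟩
  have h0 : (0:ℕ) ∉ insert n (jumpSet n θ) := by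
    simp [jumpSet]; omega
  have hnn : n ∉ jumpSet n θ := by simp [jumpSet]
  have hcard := Finset.card_le_card himg
  rw [Finset.card_insert_of_notMem h0, Finset.card_insert_of_notMem hnn] at hcard
  have := Finset.card_image_le (s := (Finset.univ : Finset (Fin (k+1)))) (f := a)
  simp at this
  omega


lemma mem_thetaUp {θ : Fin n → ℝ} (hn : 1 ≤ n) (hk : 1 ≤ k) (hmono : EMono n θ)
    (hcard : (jumpSet n θ).card < k) : θ ∈ ThetaUp n k := by
  classical
  set J := jumpSet n θ with hJ
  set L : List ℕ := J.sort (· ≤ ·) with hL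
  have hLlen : L.length = J.card := Finset.length_sort _
  have hmemL : ∀ q : Fin L.length, L.get q ∈ J := by
    intro q
    have h2 : L.get q ∈ L := List.get_mem L q
    exact (Finset.mem_sort _).mp h2
  have hJIco : ∀ i ∈ J, 1 ≤ i ∧ i < n := by
    intro i hi
    simp only [hJ, jumpSet, Finset.mem_filter, Finset.mem_Ico] at hi
    exact ⟨hi.1.1, hi.1.2⟩
  have hgetmono : ∀ q q' : Fin L.length, q ≤ q' → L.get q ≤ L.get q' := by
    intro q q' hq
    rcases eq_or_lt_of_le hq with h | h
    · exact le_of_eq (congrArg L.get h)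
    · exact le_of_lt ((Finset.sortedLT_sort J).strictMono_get h)
  set r := J.card with hr
  set a : Fin (k+1) → ℕ := fun l =>
    if _h0 : l.val = 0 then 0 else if h : l.val ≤ r then L.get ⟨l.val - 1, by omega⟩ else n
    with ha
  have haval : ∀ l : Fin (k+1), (hl0 : l.val ≠ 0) → (hlr : l.val ≤ r) →
      a l = L.get ⟨l.val - 1, by omega⟩ := by
    intro l hl0 hlr; simp only [ha, dif_neg hl0, dif_pos hlr]
  have haval2 : ∀ l : Fin (k+1), (hl0 : l.val ≠ 0) → ¬ (l.val ≤ r) → a l = n := by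
    intro l hl0 hlr; simp only [ha, dif_neg hl0, dif_neg hlr]
  have ha0 : a 0 = 0 := by simp [ha]
  have halast : a (Fin.last k) = n := by
    have h1 : (Fin.last k).val = k := rfl
    rw [haval2 _ (by omega) (by omega)]
  have haLen : ∀ l : Fin (k+1), a l ≤ n := by
    intro l
    rw [ha]
    dsimp only
    split
    · omega
    · split
      · exact le_of_lt (hJIco _ (hmemL _)).2
      · exact le_refl n
  have hamono : Monotone a := by
    intro l l' hle
    have hv : l.val ≤ l'.val := hle
    by_cases h0 : l.val = 0
    · have : a l = 0 := by simp only [ha, dif_pos h0]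
      rw [this]; exact Nat.zero_le _
    · by_cases h1 : l.val ≤ r
      · rw [haval l h0 h1]
        by_cases h1' : l'.val ≤ r
        · rw [haval l' (by omega) h1']
          exact hgetmono _ _ (by simp only [Fin.mk_le_mk]; omega)
        · rw [haval2 l' (by omega) h1']
          exact le_of_lt (hJIco _ (hmemL _)).2
      · rw [haval2 l h0 h1, haval2 l' (by omega) (by omega)]
  set μ : Fin k → ℝ := fun l => entry θ (a l.succ) with hμ
  have hsucc1 : ∀ l : Fin k, 1 ≤ a l.succ := by
    intro l
    have hsv : (l.succ : Fin (k+1)).val = l.val + 1 := rfl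
    by_cases h1 : l.val + 1 ≤ r
    · rw [haval l.succ (by omega) (by rw [hsv]; omega : (l.succ : Fin (k+1)).val ≤ r)]
      exact (hJIco _ (hmemL _)).1
    · rw [haval2 l.succ (by omega) (by rw [hsv]; omega)]
      exact hn
  have hμmono : Monotone μ := by
    intro l l' hle
    exact EMono.le hmono (hsucc1 l) (hamono (by simp only [Fin.le_def, Fin.val_succ]; exact Nat.add_le_add_right hle 1)) (haLen _)
  have hget_le : ∀ (u u' : ℕ) (hu : u < L.length) (hu' : u' < L.length), u ≤ u' →
      L.get ⟨u, hu⟩ ≤ L.get ⟨u', hu'⟩ := by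
    intro u u' hu hu' h
    exact hgetmono ⟨u, hu⟩ ⟨u', hu'⟩ (by exact h)
  refine ⟨a, μ, ha0, halast, hamono, hμmono, ?_⟩
  intro j i hi
  rw [Finset.mem_Ioc] at hi
  have hcsv : (j.castSucc : Fin (k+1)).val = j.val := rfl
  have hsv : (j.succ : Fin (k+1)).val = j.val + 1 := rfl
  have hnojump : ∀ p, i ≤ p → p < a j.succ → p ∉ jumpSet n θ := by
    intro p hp1 hp2 hpJ
    have hpJ' : p ∈ J := hpJ
    have hlow : a j.castSucc < p := lt_of_lt_of_le hi.1 hp1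
    obtain ⟨q, hqe⟩ := List.mem_iff_get.mp (show p ∈ L from (Finset.mem_sort _).mpr hpJ')
    have hqe' : L.get ⟨q.val, q.isLt⟩ = p := by rw [Fin.eta]; exact hqe
    by_cases hvs : j.val + 1 ≤ r
    · have hjL : j.val < L.length := by omega
      have hsa : a j.succ = L.get ⟨j.val, hjL⟩ :=
        (haval j.succ (by omega) (by rw [hsv]; omega)).trans
          (congrArg L.get (Fin.ext (by simp)))
      have hq : q.val < j.val := by
        by_contra hc
        push_neg at hc
        have h5 := hget_le j.val q.val hjL q.isLt hc
        rw [hqe'] at h5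
        omega
      have hj0 : j.val ≠ 0 := by omega
      have hjL1 : j.val - 1 < L.length := by omega
      have hca : a j.castSucc = L.get ⟨j.val - 1, hjL1⟩ :=
        (haval j.castSucc (by rw [hcsv]; omega) (by rw [hcsv]; omega)).trans
          (congrArg L.get (Fin.ext (by simp)))
      have h6 := hget_le q.val (j.val - 1) q.isLt hjL1 (by omega)
      rw [hqe'] at h6
      omega
    · by_cases hjr : j.val ≤ r
      · by_cases hj0 : j.val = 0
        · have hr0 : r = 0 := by omega
          have hJe : J = ∅ := Finset.card_eq_zero.mp (by omega)
          exact absurd hpJ' (by rw [hJe]; simp)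
        · have hjL1 : j.val - 1 < L.length := by omega
          have hca : a j.castSucc = L.get ⟨j.val - 1, hjL1⟩ :=
            (haval j.castSucc (by rw [hcsv]; omega) (by rw [hcsv]; omega)).trans
              (congrArg L.get (Fin.ext (by simp)))
          have h6 := hget_le q.val (j.val - 1) q.isLt hjL1 (by omega)
          rw [hqe'] at h6
          omega
      · have hca : a j.castSucc = n := by
          rw [haval2 j.castSucc (by omega) (by rw [hcsv]; omega)]
        have := (hJIco p hpJ').2
        omega
  exact const_of_no_jump (by omega) hi.2 (haLen _) hnojump


/-- vector with entries on paper-interval (p,q] replaced by constant c -/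
def setMod {n : ℕ} (θ : Fin n → ℝ) (p q : ℕ) (c : ℝ) : Fin n → ℝ :=
  fun i => if p < i.val + 1 ∧ i.val + 1 ≤ q then c else θ i
/-- vector with entries on paper-interval (p,q] shifted by t -/
def addMod {n : ℕ} (θ : Fin n → ℝ) (p q : ℕ) (t : ℝ) : Fin n → ℝ :=
  fun i => if p < i.val + 1 ∧ i.val + 1 ≤ q then θ i + t else θ i

lemma entry_setMod {θ : Fin n → ℝ} {p q c} {i : ℕ} (h1 : 1 ≤ i) (h2 : i ≤ n) :
    entry (setMod θ p q c) i = if p < i ∧ i ≤ q then c else entry θ i := by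
  have hlt : i - 1 < n := by omega
  have hv : i - 1 + 1 = i := by omega
  simp only [entry, setMod, dif_pos hlt, hv]

lemma entry_addMod {θ : Fin n → ℝ} {p q t} {i : ℕ} (h1 : 1 ≤ i) (h2 : i ≤ n) :
    entry (addMod θ p q t) i = if p < i ∧ i ≤ q then entry θ i + t else entry θ i := by
  have hlt : i - 1 < n := by omega
  have hv : i - 1 + 1 = i := by omega
  simp only [entry, addMod, dif_pos hlt, hv]

lemma sqDist_sub_sqDist (x θ θ' : Fin n → ℝ)
    (h : ∀ i : Fin n, θ' i ≠ θ i → (fun i : Fin n => True) i) : True := trivial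

lemma sqDist_diff (x θ θ' : Fin n → ℝ) (cond : Fin n → Prop) [DecidablePred cond]
    (h : ∀ i, ¬ cond i → θ' i = θ i) :
    sqDist x θ' - sqDist x θ
      = ∑ i ∈ Finset.univ.filter cond, ((x i - θ' i) ^ 2 - (x i - θ i) ^ 2) := by
  unfold sqDist
  rw [← Finset.sum_sub_distrib]
  rw [← Finset.sum_filter_add_sum_filter_not Finset.univ cond]
  have hz : ∑ i ∈ Finset.univ.filter (fun i => ¬ cond i),
      ((x i - θ' i) ^ 2 - (x i - θ i) ^ 2) = 0 := by
    apply Finset.sum_eq_zero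
    intro i hi
    rw [Finset.mem_filter] at hi
    rw [h i hi.2]
    ring
  rw [hz, add_zero]

lemma sum_cond_eval (x θ : Fin n → ℝ) {p q : ℕ} (hqn : q ≤ n) {v : ℝ}
    (hconst : ∀ i ∈ Finset.Ioc p q, entry θ i = v) (hpq : p ≤ q) :
    ∑ i ∈ Finset.univ.filter (fun i : Fin n => p < i.val + 1 ∧ i.val + 1 ≤ q), (x i - θ i)
      = (∑ i ∈ Finset.Ioc p q, entry x i) - ((q : ℝ) - p) * v := by
  rw [Finset.sum_sub_distrib]
  rw [← sum_Ioc_entry x hqn, ← sum_Ioc_entry θ hqn]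
  have h1 : ∑ i ∈ Finset.Ioc p q, entry θ i = ((q : ℝ) - p) * v := by
    rw [Finset.sum_congr rfl hconst, Finset.sum_const, Nat.card_Ioc, nsmul_eq_mul]
    congr 1
    rw [Nat.cast_sub hpq]
  rw [h1]

lemma avg_eq_of_block (x θ : Fin n → ℝ) (hθ : θ ∈ ThetaUp n k)
    (hmin : ∀ η ∈ ThetaUp n k, sqDist x θ ≤ sqDist x η)
    {p q : ℕ} (hpq : p < q) (hqn : q ≤ n) {v : ℝ}
    (hconst : ∀ i ∈ Finset.Ioc p q, entry θ i = v)
    (hleft : p = 0 ∨ entry θ p < v) (hright : q = n ∨ v < entry θ (q + 1)) :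
    ∑ i ∈ Finset.Ioc p q, entry x i = ((q : ℝ) - p) * v := by
  classical
  have hn : 1 ≤ n := by omega
  have hm := ThetaUp.emono hθ
  have hcard := ThetaUp.card_lt hn hθ
  have hk1 : 1 ≤ k := by omega
  set εp : ℝ := if p = 0 then 1 else v - entry θ p with hεp
  set εq : ℝ := if q = n then 1 else entry θ (q + 1) - v with hεq
  have hεp0 : 0 < εp := by
    rw [hεp]
    split
    · norm_num
    · rcases hleft with h | h
      · omega
      · linarith
  have hεq0 : 0 < εq := by
    rw [hεq]
    split
    · norm_num
    · rcases hright with h | h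
      · omega
      · linarith
  set δ : ℝ := min εp εq with hδdef
  have hδ : 0 < δ := lt_min hεp0 hεq0
  have hqv : entry θ q = v := hconst q (Finset.mem_Ioc.2 ⟨hpq, le_refl q⟩)
  have hmem : ∀ t : ℝ, |t| < δ → addMod θ p q t ∈ ThetaUp n k := by
    intro t ht
    have htp : |t| < εp := lt_of_lt_of_le ht (min_le_left _ _)
    have htq : |t| < εq := lt_of_lt_of_le ht (min_le_right _ _)
    apply mem_thetaUp hn hk1
    · -- EMono
      intro i h1 h2
      rw [entry_addMod h1 (by omega), entry_addMod (by omega : 1 ≤ i + 1) (by omega)]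
      by_cases hc1 : p < i ∧ i ≤ q
      · by_cases hc2 : p < i + 1 ∧ i + 1 ≤ q
        · rw [if_pos hc1, if_pos hc2]
          have := hm i h1 h2
          linarith
        · rw [if_pos hc1, if_neg hc2]
          have hiq : i = q := by omega
          have hqn' : q ≠ n := by omega
          rw [hεq, if_neg hqn'] at htq
          rw [hiq, hqv]
          have := abs_lt.1 htq
          linarith
      · by_cases hc2 : p < i + 1 ∧ i + 1 ≤ q
        · rw [if_neg hc1, if_pos hc2]
          have hip : i = p := by omega
          have hp0 : p ≠ 0 := by omega
          rw [hεp, if_neg hp0] at htp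
          have hpv : entry θ (p + 1) = v := hconst (p + 1) (Finset.mem_Ioc.2 ⟨by omega, by omega⟩)
          rw [hip, hpv]
          have := abs_lt.1 htp
          linarith
        · rw [if_neg hc1, if_neg hc2]
          exact hm i h1 h2
    · -- jumpSet card
      refine lt_of_le_of_lt (Finset.card_le_card ?_) hcard
      intro i hi
      simp only [jumpSet, Finset.mem_filter, Finset.mem_Ico] at hi ⊢
      obtain ⟨⟨hi1, hi2⟩, hne⟩ := hi
      refine ⟨⟨hi1, hi2⟩, ?_⟩
      rw [entry_addMod hi1 (by omega), entry_addMod (by omega : 1 ≤ i + 1) (by omega)] at hne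
      by_cases hc1 : p < i ∧ i ≤ q
      · by_cases hc2 : p < i + 1 ∧ i + 1 ≤ q
        · rw [if_pos hc1, if_pos hc2] at hne
          intro h; apply hne; rw [h]
        · have hiq : i = q := by omega
          rw [hiq, hqv]
          rcases hright with h | h
          · omega
          · exact ne_of_lt h
      · by_cases hc2 : p < i + 1 ∧ i + 1 ≤ q
        · have hip : i = p := by omega
          have hpv : entry θ (p + 1) = v := hconst (p + 1) (Finset.mem_Ioc.2 ⟨by omega, by omega⟩)
          rcases hleft with h | h
          · omega
          · rw [hip, hpv]
            exact ne_of_lt h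
        · rw [if_neg hc1, if_neg hc2] at hne
          exact hne
  set N : ℝ := ((q : ℝ) - p) with hN
  have hNpos : 0 < N := by
    rw [hN]
    have : (p : ℝ) < q := by exact_mod_cast hpq
    linarith
  set S : ℝ := (∑ i ∈ Finset.Ioc p q, entry x i) - N * v with hS
  have key : ∀ t : ℝ, |t| < δ → 0 ≤ N * t ^ 2 - 2 * t * S := by
    intro t ht
    have h1 := hmin _ (hmem t ht)
    have h2 := sqDist_diff x θ (addMod θ p q t)
      (fun i => p < i.val + 1 ∧ i.val + 1 ≤ q)
      (fun i hi => by simp only [addMod, if_neg hi])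
    have h3 : ∑ i ∈ Finset.univ.filter (fun i : Fin n => p < i.val + 1 ∧ i.val + 1 ≤ q),
        ((x i - addMod θ p q t i) ^ 2 - (x i - θ i) ^ 2)
        = ((q : ℝ) - p) * t ^ 2 - 2 * t * ((∑ i ∈ Finset.Ioc p q, entry x i) - ((q : ℝ) - p) * v) := by
      have heval : ∀ i ∈ Finset.univ.filter (fun i : Fin n => p < i.val + 1 ∧ i.val + 1 ≤ q),
          (x i - addMod θ p q t i) ^ 2 - (x i - θ i) ^ 2
            = t ^ 2 - 2 * t * (x i - θ i) := by
        intro i hi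
        rw [Finset.mem_filter] at hi
        simp only [addMod, if_pos hi.2]
        ring
      rw [Finset.sum_congr rfl heval, Finset.sum_sub_distrib, Finset.sum_const,
        card_filter_Ioc hqn, ← Finset.mul_sum, sum_cond_eval x θ hqn hconst (le_of_lt hpq),
        nsmul_eq_mul, Nat.cast_sub (le_of_lt hpq)]
    have h4 := h2.trans h3
    rw [hS, hN]
    linarith
  have hS0 : S = 0 := by
    by_contra hSne
    rcases lt_or_gt_of_ne hSne with hneg | hpos
    · set t : ℝ := max (-(δ / 2)) (S / N) with htdef
      have ht1 : t < 0 := by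
        apply max_lt
        · linarith
        · exact div_neg_of_neg_of_pos hneg hNpos
      have ht2 : |t| < δ := by
        rw [abs_of_neg ht1]
        have : -(δ / 2) ≤ t := le_max_left _ _
        linarith
      have hNt : S ≤ N * t := by
        have : S / N ≤ t := le_max_right _ _
        calc S = N * (S / N) := by field_simp
        _ ≤ N * t := by exact mul_le_mul_of_nonneg_left this (le_of_lt hNpos)
      have := key t ht2
      nlinarith
    · set t : ℝ := min (δ / 2) (S / N) with htdef
      have ht1 : 0 < t := lt_min (by linarith) (div_pos hpos hNpos)
      have ht2 : |t| < δ := by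
        rw [abs_of_pos ht1]
        have : t ≤ δ / 2 := min_le_left _ _
        linarith
      have hNt : N * t ≤ S := by
        have : t ≤ S / N := min_le_right _ _
        calc N * t ≤ N * (S / N) := mul_le_mul_of_nonneg_left this (le_of_lt hNpos)
        _ = S := by field_simp
      have := key t ht2
      nlinarith
  rw [hS] at hS0
  linarith


lemma sum_lt_left (x θ : Fin n → ℝ) (hθ : θ ∈ ThetaUp n k)
    (hmin : ∀ η ∈ ThetaUp n k, sqDist x θ ≤ sqDist x η)
    {s q q' : ℕ} (hsq : s < q) (hqq' : q < q') (hq'n : q' ≤ n)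
    {L R : ℝ} (hLR : L < R)
    (hconstL : ∀ i ∈ Finset.Ioc s q, entry θ i = L)
    (hconstR : ∀ i ∈ Finset.Ioc q q', entry θ i = R)
    (hsL : s = 0 ∨ entry θ s ≤ L)
    (hright : q' = n ∨ R < entry θ (q' + 1)) :
    ∑ i ∈ Finset.Ioc s q, entry x i < ((q : ℝ) - s) * ((L + R) / 2) := by
  classical
  have hn : 1 ≤ n := by omega
  have hm := ThetaUp.emono hθ
  have hcard := ThetaUp.card_lt hn hθ
  have hk1 : 1 ≤ k := by omega
  have hR1 : entry θ (q + 1) = R := hconstR (q + 1) (Finset.mem_Ioc.2 ⟨by omega, by omega⟩)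
  have hLq : entry θ q = L := hconstL q (Finset.mem_Ioc.2 ⟨hsq, le_refl q⟩)
  set θ' : Fin n → ℝ := setMod θ s q R with hθ'def
  have hent : ∀ i : ℕ, 1 ≤ i → i ≤ n →
      entry θ' i = if s < i ∧ i ≤ q then R else entry θ i := fun i h1 h2 => entry_setMod h1 h2
  have hmono' : EMono n θ' := by
    intro i h1 h2
    rw [hent i h1 (by omega), hent (i+1) (by omega) (by omega)]
    by_cases hc1 : s < i ∧ i ≤ q
    · by_cases hc2 : s < i + 1 ∧ i + 1 ≤ q
      · rw [if_pos hc1, if_pos hc2]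
      · rw [if_pos hc1, if_neg hc2]
        have hiq : i = q := by omega
        rw [hiq, hR1]
    · by_cases hc2 : s < i + 1 ∧ i + 1 ≤ q
      · rw [if_neg hc1, if_pos hc2]
        have his : i = s := by omega
        rcases hsL with h0 | h0
        · omega
        · rw [his]; linarith
      · rw [if_neg hc1, if_neg hc2]
        exact hm i h1 h2
  have hqJ : q ∈ jumpSet n θ := by
    simp only [jumpSet, Finset.mem_filter, Finset.mem_Ico]
    refine ⟨⟨by omega, by omega⟩, ?_⟩
    rw [hLq, hR1]
    exact ne_of_lt hLR
  have hcard' : (jumpSet n θ').card < k := by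
    have hsub : jumpSet n θ' ⊆ insert s ((jumpSet n θ).erase q) := by
      intro i hi
      simp only [jumpSet, Finset.mem_filter, Finset.mem_Ico] at hi
      obtain ⟨⟨hi1, hi2⟩, hne⟩ := hi
      rw [hent i hi1 (by omega), hent (i+1) (by omega) (by omega)] at hne
      by_cases hc1 : s < i ∧ i ≤ q
      · by_cases hc2 : s < i + 1 ∧ i + 1 ≤ q
        · rw [if_pos hc1, if_pos hc2] at hne; exact absurd rfl hne
        · rw [if_pos hc1, if_neg hc2] at hne
          have hiq : i = q := by omega
          rw [hiq, hR1] at hne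
          exact absurd rfl hne
      · by_cases hc2 : s < i + 1 ∧ i + 1 ≤ q
        · have his : i = s := by omega
          rw [his]; exact Finset.mem_insert_self _ _
        · rw [if_neg hc1, if_neg hc2] at hne
          apply Finset.mem_insert_of_mem
          apply Finset.mem_erase.2
          refine ⟨?_, by simp only [jumpSet, Finset.mem_filter, Finset.mem_Ico]; exact ⟨⟨hi1, hi2⟩, hne⟩⟩
          intro hiq
          exact hc1 ⟨by omega, by omega⟩
    calc (jumpSet n θ').card ≤ (insert s ((jumpSet n θ).erase q)).card := Finset.card_le_card hsub
      _ ≤ ((jumpSet n θ).erase q).card + 1 := Finset.card_insert_le _ _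
      _ = (jumpSet n θ).card - 1 + 1 := by rw [Finset.card_erase_of_mem hqJ]
      _ ≤ (jumpSet n θ).card := by
          have : 1 ≤ (jumpSet n θ).card := Finset.card_pos.2 ⟨q, hqJ⟩
          omega
      _ < k := hcard
  have hθ'mem : θ' ∈ ThetaUp n k := mem_thetaUp hn hk1 hmono' hcard'
  set X : ℝ := ∑ i ∈ Finset.Ioc s q, entry x i with hX
  set N : ℝ := ((q : ℝ) - s) with hNdef
  have hNpos : 0 < N := by
    rw [hNdef]
    have : (s : ℝ) < q := by exact_mod_cast hsq
    linarith
  clear_value X N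
  have hent_out : ∀ i : ℕ, q < i → entry θ' i = entry θ i := by
    intro i hi
    by_cases hin : i ≤ n
    · rw [hent i (by omega) hin, if_neg (by omega)]
    · have hjunk : ¬ (i - 1 < n) := by omega
      simp only [entry, dif_neg hjunk]
  have hdiff : sqDist x θ' - sqDist x θ = (L - R) * (2 * X - N * (R + L)) := by
    have h2 := sqDist_diff x θ θ' (fun i : Fin n => s < i.val + 1 ∧ i.val + 1 ≤ q)
      (fun i hi => by simp only [hθ'def, setMod, if_neg hi])
    rw [h2]
    have heval : ∀ i ∈ Finset.univ.filter (fun i : Fin n => s < i.val + 1 ∧ i.val + 1 ≤ q),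
        (x i - θ' i) ^ 2 - (x i - θ i) ^ 2 = (L - R) * (2 * x i - (R + L)) := by
      intro i hi
      rw [Finset.mem_filter] at hi
      have hti : θ i = L := by
        rw [← entry_val θ i]
        exact hconstL _ (Finset.mem_Ioc.2 ⟨hi.2.1, hi.2.2⟩)
      have ht'i : θ' i = R := by simp only [hθ'def, setMod, if_pos hi.2]
      rw [hti, ht'i]
      ring
    rw [Finset.sum_congr rfl heval, ← Finset.mul_sum]
    congr 1
    rw [Finset.sum_sub_distrib, Finset.sum_const, ← Finset.mul_sum,
      ← sum_Ioc_entry x (by omega : q ≤ n), card_filter_Ioc (by omega : q ≤ n),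
      nsmul_eq_mul, Nat.cast_sub (le_of_lt hsq), hNdef, hX]
  have h1 : 0 ≤ (L - R) * (2 * X - N * (R + L)) := by
    have := hmin θ' hθ'mem
    linarith [hdiff]
  have hE : 2 * X - N * (R + L) ≤ 0 := by
    by_contra hc
    push_neg at hc
    nlinarith [mul_neg_of_neg_of_pos (sub_neg.2 hLR) hc]
  have hle : X ≤ N * ((L + R) / 2) := by nlinarith [hE]
  rcases lt_or_eq_of_le hle with hlt | heq
  · exact hlt
  · exfalso
    have hzero : sqDist x θ' = sqDist x θ := by
      have e : 2 * X - N * (R + L) = 0 := by rw [heq]; ring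
      rw [e, mul_zero] at hdiff
      linarith
    have hmin' : ∀ η ∈ ThetaUp n k, sqDist x θ' ≤ sqDist x η := by
      intro η hη
      rw [hzero]
      exact hmin η hη
    have hconst' : ∀ i ∈ Finset.Ioc s q', entry θ' i = R := by
      intro i hi
      rw [Finset.mem_Ioc] at hi
      rw [hent i (by omega) (by omega)]
      by_cases hc : s < i ∧ i ≤ q
      · rw [if_pos hc]
      · rw [if_neg hc]
        exact hconstR i (Finset.mem_Ioc.2 ⟨by omega, hi.2⟩)
    have hleft' : s = 0 ∨ entry θ' s < R := by
      rcases hsL with h0 | h0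
      · exact Or.inl h0
      · by_cases hs0 : s = 0
        · exact Or.inl hs0
        · right
          rw [hent s (by omega) (by omega), if_neg (by omega)]
          linarith
    have hright' : q' = n ∨ R < entry θ' (q' + 1) := by
      rcases hright with h0 | h0
      · exact Or.inl h0
      · right
        rw [hent_out (q' + 1) (by omega)]
        exact h0
    have EQ1 := avg_eq_of_block x θ' hθ'mem hmin' (show s < q' by omega) hq'n
      hconst' hleft' hright'
    have EQ2 := avg_eq_of_block x θ hθ hmin hqq' hq'n hconstR
      (Or.inr (by rw [hLq]; exact hLR)) hright
    have hsplit := Finset.sum_Ioc_consecutive (fun i => entry x i)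
      (le_of_lt hsq) (le_of_lt hqq')
    have hXNR : X = N * R := by
      have hc1 : ((q' : ℝ) - s) * R - ((q' : ℝ) - q) * R = N * R := by
        rw [hNdef]; ring
      rw [hX]
      rw [← hsplit] at EQ1
      rw [EQ2] at EQ1
      linarith [hc1]
    rw [hXNR] at heq
    nlinarith

lemma sum_gt_right (x θ : Fin n → ℝ) (hθ : θ ∈ ThetaUp n k)
    (hmin : ∀ η ∈ ThetaUp n k, sqDist x θ ≤ sqDist x η)
    {p0 q t q' : ℕ} (hp0 : p0 < q) (hqt : q < t) (htq' : t ≤ q') (hq'n : q' ≤ n)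
    {L R : ℝ} (hLR : L < R)
    (hconstL : ∀ i ∈ Finset.Ioc p0 q, entry θ i = L)
    (hconstR : ∀ i ∈ Finset.Ioc q q', entry θ i = R)
    (hleft0 : p0 = 0 ∨ entry θ p0 < L)
    (hright : q' = n ∨ R < entry θ (q' + 1)) :
    ((t : ℝ) - q) * ((L + R) / 2) < ∑ i ∈ Finset.Ioc q t, entry x i := by
  classical
  have hn : 1 ≤ n := by omega
  have hm := ThetaUp.emono hθ
  have hcard := ThetaUp.card_lt hn hθ
  have hk1 : 1 ≤ k := by omega
  have hR1 : entry θ (q + 1) = R := hconstR (q + 1) (Finset.mem_Ioc.2 ⟨by omega, by omega⟩)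
  have hLq : entry θ q = L := hconstL q (Finset.mem_Ioc.2 ⟨hp0, le_refl q⟩)
  have hRt1 : ∀ h : t < n, L < entry θ (t + 1) := by
    intro h
    by_cases hc : t < q'
    · rw [hconstR (t + 1) (Finset.mem_Ioc.2 ⟨by omega, by omega⟩)]
      exact hLR
    · have htq'' : t = q' := by omega
      rcases hright with h0 | h0
      · omega
      · rw [htq'']
        linarith
  set θ' : Fin n → ℝ := setMod θ q t L with hθ'def
  have hent : ∀ i : ℕ, 1 ≤ i → i ≤ n →
      entry θ' i = if q < i ∧ i ≤ t then L else entry θ i := fun i h1 h2 => entry_setMod h1 h2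
  have hent_out : ∀ i : ℕ, t < i → entry θ' i = entry θ i := by
    intro i hi
    by_cases hin : i ≤ n
    · rw [hent i (by omega) hin, if_neg (by omega)]
    · have hjunk : ¬ (i - 1 < n) := by omega
      simp only [entry, dif_neg hjunk]
  have hent_low : ∀ i : ℕ, 1 ≤ i → i ≤ q → entry θ' i = entry θ i := by
    intro i h1 h2
    rw [hent i h1 (by omega), if_neg (by omega)]
  have hmono' : EMono n θ' := by
    intro i h1 h2
    rw [hent i h1 (by omega), hent (i+1) (by omega) (by omega)]
    by_cases hc1 : q < i ∧ i ≤ t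
    · by_cases hc2 : q < i + 1 ∧ i + 1 ≤ t
      · rw [if_pos hc1, if_pos hc2]
      · rw [if_pos hc1, if_neg hc2]
        have hit : i = t := by omega
        have := hRt1 (by omega)
        rw [hit]
        linarith
    · by_cases hc2 : q < i + 1 ∧ i + 1 ≤ t
      · rw [if_neg hc1, if_pos hc2]
        have hiq : i = q := by omega
        rw [hiq, hLq]
      · rw [if_neg hc1, if_neg hc2]
        exact hm i h1 h2
  have hqJ : q ∈ jumpSet n θ := by
    simp only [jumpSet, Finset.mem_filter, Finset.mem_Ico]
    refine ⟨⟨by omega, by omega⟩, ?_⟩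
    rw [hLq, hR1]
    exact ne_of_lt hLR
  have hcard' : (jumpSet n θ').card < k := by
    have hsub : jumpSet n θ' ⊆ insert t ((jumpSet n θ).erase q) := by
      intro i hi
      simp only [jumpSet, Finset.mem_filter, Finset.mem_Ico] at hi
      obtain ⟨⟨hi1, hi2⟩, hne⟩ := hi
      rw [hent i hi1 (by omega), hent (i+1) (by omega) (by omega)] at hne
      by_cases hc1 : q < i ∧ i ≤ t
      · by_cases hc2 : q < i + 1 ∧ i + 1 ≤ t
        · rw [if_pos hc1, if_pos hc2] at hne; exact absurd rfl hne
        · have hit : i = t := by omega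
          rw [hit]; exact Finset.mem_insert_self _ _
      · by_cases hc2 : q < i + 1 ∧ i + 1 ≤ t
        · rw [if_neg hc1, if_pos hc2] at hne
          have hiq : i = q := by omega
          rw [hiq, hLq] at hne
          exact absurd rfl hne
        · rw [if_neg hc1, if_neg hc2] at hne
          apply Finset.mem_insert_of_mem
          apply Finset.mem_erase.2
          refine ⟨?_, by simp only [jumpSet, Finset.mem_filter, Finset.mem_Ico]; exact ⟨⟨hi1, hi2⟩, hne⟩⟩
          intro hiq
          exact hc2 ⟨by omega, by omega⟩
    calc (jumpSet n θ').card ≤ (insert t ((jumpSet n θ).erase q)).card := Finset.card_le_card hsub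
      _ ≤ ((jumpSet n θ).erase q).card + 1 := Finset.card_insert_le _ _
      _ = (jumpSet n θ).card - 1 + 1 := by rw [Finset.card_erase_of_mem hqJ]
      _ ≤ (jumpSet n θ).card := by
          have : 1 ≤ (jumpSet n θ).card := Finset.card_pos.2 ⟨q, hqJ⟩
          omega
      _ < k := hcard
  have hθ'mem : θ' ∈ ThetaUp n k := mem_thetaUp hn hk1 hmono' hcard'
  set X : ℝ := ∑ i ∈ Finset.Ioc q t, entry x i with hX
  set N : ℝ := ((t : ℝ) - q) with hNdef
  have hNpos : 0 < N := by
    rw [hNdef]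
    have : (q : ℝ) < t := by exact_mod_cast hqt
    linarith
  clear_value X N
  have hdiff : sqDist x θ' - sqDist x θ = (R - L) * (2 * X - N * (R + L)) := by
    have h2 := sqDist_diff x θ θ' (fun i : Fin n => q < i.val + 1 ∧ i.val + 1 ≤ t)
      (fun i hi => by simp only [hθ'def, setMod, if_neg hi])
    rw [h2]
    have heval : ∀ i ∈ Finset.univ.filter (fun i : Fin n => q < i.val + 1 ∧ i.val + 1 ≤ t),
        (x i - θ' i) ^ 2 - (x i - θ i) ^ 2 = (R - L) * (2 * x i - (R + L)) := by
      intro i hi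
      rw [Finset.mem_filter] at hi
      have hti : θ i = R := by
        rw [← entry_val θ i]
        exact hconstR _ (Finset.mem_Ioc.2 ⟨hi.2.1, by omega⟩)
      have ht'i : θ' i = L := by simp only [hθ'def, setMod, if_pos hi.2]
      rw [hti, ht'i]
      ring
    rw [Finset.sum_congr rfl heval, ← Finset.mul_sum]
    congr 1
    rw [Finset.sum_sub_distrib, Finset.sum_const, ← Finset.mul_sum,
      ← sum_Ioc_entry x (by omega : t ≤ n), card_filter_Ioc (by omega : t ≤ n),
      nsmul_eq_mul, Nat.cast_sub (le_of_lt hqt), hNdef, hX]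
  have h1 : 0 ≤ (R - L) * (2 * X - N * (R + L)) := by
    have := hmin θ' hθ'mem
    linarith [hdiff]
  have hE : 0 ≤ 2 * X - N * (R + L) := by
    by_contra hc
    push_neg at hc
    nlinarith [mul_neg_of_pos_of_neg (sub_pos.2 hLR) hc]
  have hle : N * ((L + R) / 2) ≤ X := by nlinarith [hE]
  rcases lt_or_eq_of_le hle with hlt | heq
  · exact hlt
  · exfalso
    have hzero : sqDist x θ' = sqDist x θ := by
      have e : 2 * X - N * (R + L) = 0 := by rw [← heq]; ring
      rw [e, mul_zero] at hdiff
      linarith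
    have hmin' : ∀ η ∈ ThetaUp n k, sqDist x θ' ≤ sqDist x η := by
      intro η hη
      rw [hzero]
      exact hmin η hη
    have hconst' : ∀ i ∈ Finset.Ioc p0 t, entry θ' i = L := by
      intro i hi
      rw [Finset.mem_Ioc] at hi
      rw [hent i (by omega) (by omega)]
      by_cases hc : q < i ∧ i ≤ t
      · rw [if_pos hc]
      · rw [if_neg hc]
        exact hconstL i (Finset.mem_Ioc.2 ⟨hi.1, by omega⟩)
    have hleft' : p0 = 0 ∨ entry θ' p0 < L := by
      rcases hleft0 with h0 | h0
      · exact Or.inl h0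
      · by_cases hp00 : p0 = 0
        · exact Or.inl hp00
        · right
          rw [hent_low p0 (by omega) (by omega)]
          exact h0
    have hright' : t = n ∨ L < entry θ' (t + 1) := by
      by_cases htn : t = n
      · exact Or.inl htn
      · right
        rw [hent_out (t + 1) (by omega)]
        exact hRt1 (by omega)
    have EQ1 := avg_eq_of_block x θ' hθ'mem hmin' (show p0 < t by omega) (by omega : t ≤ n)
      hconst' hleft' hright'
    have EQ2 := avg_eq_of_block x θ hθ hmin hp0 (by omega : q ≤ n) hconstL hleft0
      (Or.inr (by rw [hR1]; exact hLR))
    have hsplit := Finset.sum_Ioc_consecutive (fun i => entry x i)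
      (le_of_lt hp0) (le_of_lt hqt)
    have hXNL : X = N * L := by
      have hc1 : ((t : ℝ) - p0) * L - ((q : ℝ) - p0) * L = N * L := by
        rw [hNdef]; ring
      rw [hX]
      rw [← hsplit] at EQ1
      rw [EQ2] at EQ1
      linarith [hc1]
    rw [hXNL] at heq
    nlinarith



/-- Lemma 5.1, part 2: if `θh` minimizes `‖x − θ‖²` over `Θ_k^↑` with change points
`0 = â_0 < ⋯ < â_m = n`, then for every interior change point `â_j` and all integers
`0 ≤ s < â_j < t ≤ n`,
`x̄_{(s, â_j]} < (θh_{â_j} + θh_{â_j + 1})/2 < x̄_{(â_j, t]}`. -/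

theorem stmt14 (n k : ℕ) (hn : 1 ≤ n) (hk1 : 1 ≤ k) (hkn : k ≤ n)
    (x θh : Fin n → ℝ)
    (hmem : θh ∈ ThetaUp n k)
    (hmin : ∀ θ ∈ ThetaUp n k, sqDist x θh ≤ sqDist x θ)
    (m : ℕ) (a : Fin (m + 1) → ℕ)
    (ha0 : a 0 = 0) (han : a (Fin.last m) = n) (haMono : StrictMono a)
    (hconst : ∀ j : Fin m, ∀ i ∈ Finset.Ioc (a j.castSucc) (a j.succ),
      ∀ i' ∈ Finset.Ioc (a j.castSucc) (a j.succ), entry θh i = entry θh i')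
    (hjump : ∀ j : Fin (m + 1), 0 < (j : ℕ) → (j : ℕ) < m →
      entry θh (a j) ≠ entry θh (a j + 1)) :
    ∀ j : Fin (m + 1), 0 < (j : ℕ) → (j : ℕ) < m →
    ∀ s t : ℕ, s < a j → a j < t → t ≤ n →
      blockAvg x s (a j) < (entry θh (a j) + entry θh (a j + 1)) / 2 ∧
      (entry θh (a j) + entry θh (a j + 1)) / 2 < blockAvg x (a j) t := by
  classical
  have hmE : EMono n θh := ThetaUp.emono hmem
  set b : ℕ → ℕ := fun r => if h : r ≤ m then a ⟨r, by omega⟩ else n with hbdef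
  have hb : ∀ (r : ℕ) (hrm : r ≤ m), b r = a ⟨r, by omega⟩ := by
    intro r h
    simp only [hbdef, dif_pos h]
  have hb0 : b 0 = 0 := by
    rw [hb 0 (by omega)]
    have : (⟨0, by omega⟩ : Fin (m+1)) = 0 := Fin.ext (by simp)
    rw [this, ha0]
  have hbm : b m = n := by
    rw [hb m le_rfl]
    have : (⟨m, by omega⟩ : Fin (m+1)) = Fin.last m := Fin.ext (by simp [Fin.val_last])
    rw [this, han]
  have hblt : ∀ r r' : ℕ, r < r' → r' ≤ m → b r < b r' := by
    intro r r' h1 h2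
    rw [hb r (by omega), hb r' h2]
    exact haMono (show (⟨r, by omega⟩ : Fin (m+1)) < ⟨r', by omega⟩ from h1)
  have hble : ∀ r : ℕ, b r ≤ n := by
    intro r
    by_cases h : r ≤ m
    · rw [hb r h, ← han]
      exact haMono.monotone (Fin.le_last _)
    · simp only [hbdef, dif_neg h]
      exact le_refl n
  have hconstb : ∀ r : ℕ, r < m → ∀ i ∈ Finset.Ioc (b r) (b (r+1)),
      entry θh i = entry θh (b (r+1)) := by
    intro r h i hi
    have e1 : b r = a ((⟨r, h⟩ : Fin m).castSucc) := by
      rw [hb r (by omega)]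
      exact congrArg a (Fin.ext rfl)
    have e2 : b (r+1) = a ((⟨r, h⟩ : Fin m).succ) := by
      rw [hb (r+1) (by omega)]
      exact congrArg a (Fin.ext rfl)
    rw [e1, e2] at hi
    rw [e2]
    exact hconst ⟨r, h⟩ i hi _ (Finset.mem_Ioc.2 ⟨haMono Fin.castSucc_lt_succ, le_rfl⟩)
  set w : ℕ → ℝ := fun r => entry θh (b r) with hwdef
  have hw1 : ∀ r : ℕ, r < m → entry θh (b r + 1) = w (r+1) := by
    intro r h
    have := hblt r (r+1) (by omega) (by omega)
    exact hconstb r h (b r + 1) (Finset.mem_Ioc.2 ⟨by omega, by omega⟩)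
  have hwjump : ∀ r : ℕ, 1 ≤ r → r < m → w r < w (r+1) := by
    intro r h1 h2
    have hne : entry θh (b r) ≠ entry θh (b r + 1) := by
      have h5 := hjump ⟨r, by omega⟩ h1 h2
      rw [hb r (by omega)]
      exact h5
    have hbr1 : 1 ≤ b r := by
      have := hblt 0 r h1 (by omega)
      omega
    have hbrn : b r < n := by
      have := hblt r m h2 le_rfl
      omega
    have hle := hmE (b r) hbr1 hbrn
    rw [← hw1 r h2]
    exact lt_of_le_of_ne hle hne
  have FULL : ∀ r : ℕ, 1 ≤ r → r ≤ m →
      ∑ i ∈ Finset.Ioc (b (r-1)) (b r), entry x i = ((b r : ℝ) - (b (r-1) : ℝ)) * w r := by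
    intro r h1 h2
    have hrr : r - 1 + 1 = r := by omega
    have hcst : ∀ i ∈ Finset.Ioc (b (r-1)) (b r), entry θh i = w r := by
      intro i hi
      have := hconstb (r-1) (by omega) i (by rw [hrr]; exact hi)
      rw [hrr] at this
      exact this
    apply avg_eq_of_block x θh hmem hmin (hblt (r-1) r (by omega) h2) (hble r) hcst
    · by_cases hr1 : r = 1
      · left; rw [hr1]; exact hb0
      · right
        have h3 := hwjump (r-1) (by omega) (by omega)
        rw [hrr] at h3
        exact h3
    · by_cases hrm : r = m
      · left; rw [hrm]; exact hbm
      · right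
        rw [hw1 r (by omega)]
        exact hwjump r h1 (by omega)
  have LEFT : ∀ r : ℕ, 1 ≤ r → r < m → ∀ s : ℕ, s < b r →
      ∑ i ∈ Finset.Ioc s (b r), entry x i < ((b r : ℝ) - s) * ((w r + w (r+1)) / 2) := by
    intro r
    induction r using Nat.strong_induction_on with
    | _ r IH =>
      intro h1 h2 s hs
      have hrr : r - 1 + 1 = r := by omega
      by_cases hcase : b (r-1) ≤ s
      · -- s within block r
        apply sum_lt_left x θh hmem hmin hs (hblt r (r+1) (by omega) (by omega)) (hble (r+1))
          (hwjump r h1 h2)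
        · intro i hi
          rw [Finset.mem_Ioc] at hi
          have := hconstb (r-1) (by omega) i
            (by rw [hrr]; exact Finset.mem_Ioc.2 ⟨by omega, hi.2⟩)
          rw [hrr] at this
          exact this
        · intro i hi
          exact hconstb r h2 i hi
        · by_cases hs0 : s = 0
          · exact Or.inl hs0
          · right
            rcases Nat.lt_or_ge (b (r-1)) s with hgt | heq
            · have := hconstb (r-1) (by omega) s
                (by rw [hrr]; exact Finset.mem_Ioc.2 ⟨hgt, by omega⟩)
              rw [hrr] at this
              rw [this]
            · have hse : s = b (r-1) := by omega
              have hr2 : 2 ≤ r := by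
                by_contra hr2
                have : r = 1 := by omega
                rw [this] at hse
                simp [hb0] at hse
                omega
              have h7 := hwjump (r-1) (by omega) (by omega)
              rw [hrr] at h7
              rw [hse]
              exact le_of_lt h7
        · by_cases hrm : r + 1 = m
          · left; rw [hrm]; exact hbm
          · right
            rw [hw1 (r+1) (by omega)]
            exact hwjump (r+1) (by omega) (by omega)
      · -- s < b (r-1): telescope
        push_neg at hcase
        have hr2 : 2 ≤ r := by
          by_contra hr2
          have : r = 1 := by omega
          rw [this] at hcase
          simp [hb0] at hcase
        have hIH := IH (r-1) (by omega) (by omega) (by omega) s hcase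
        have hFULL := FULL r h1 (by omega)
        have hsplit := Finset.sum_Ioc_consecutive (fun i => entry x i)
          (le_of_lt hcase) (le_of_lt (hblt (r-1) r (by omega) (by omega)))
        rw [hrr] at hIH
        have hA : (0:ℝ) < (b (r-1) : ℝ) - s := by
          have : (s:ℝ) < (b (r-1) : ℝ) := by exact_mod_cast hcase
          linarith
        have hB : (0:ℝ) < (b r : ℝ) - (b (r-1) : ℝ) := by
          have : ((b (r-1)):ℝ) < (b r : ℝ) := by
            exact_mod_cast hblt (r-1) r (by omega) (by omega)
          linarith
        have hw7 := hwjump (r-1) (by omega) (by omega)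
        rw [hrr] at hw7
        have hw8 := hwjump r h1 h2
        rw [← hsplit]
        nlinarith [mul_lt_mul_of_pos_left (show (w (r-1) + w r)/2 < (w r + w (r+1))/2 by linarith) hA,
          mul_lt_mul_of_pos_left (show w r < (w r + w (r+1))/2 by linarith) hB]
  have RIGHT : ∀ d : ℕ, ∀ r : ℕ, m - r ≤ d → 1 ≤ r → r < m → ∀ t' : ℕ, b r < t' → t' ≤ n →
      ((t' : ℝ) - b r) * ((w r + w (r+1)) / 2) < ∑ i ∈ Finset.Ioc (b r) t', entry x i := by
    intro d
    induction d with
    | zero => intro r hd h1 h2; omega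
    | succ d IH =>
      intro r hd h1 h2 t' ht1 ht2
      have hrr : r - 1 + 1 = r := by omega
      by_cases hcase : t' ≤ b (r+1)
      · -- within block r+1
        apply sum_gt_right x θh hmem hmin (hblt (r-1) r (by omega) (by omega)) ht1 hcase
          (hble (r+1)) (hwjump r h1 h2)
        · intro i hi
          have := hconstb (r-1) (by omega) i (by rw [hrr]; exact hi)
          rw [hrr] at this
          exact this
        · intro i hi
          exact hconstb r h2 i hi
        · by_cases hr1 : r = 1
          · left; rw [hr1]; exact hb0
          · right
            have h3 := hwjump (r-1) (by omega) (by omega)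
            rw [hrr] at h3
            exact h3
        · by_cases hrm : r + 1 = m
          · left; rw [hrm]; exact hbm
          · right
            rw [hw1 (r+1) (by omega)]
            exact hwjump (r+1) (by omega) (by omega)
      · push_neg at hcase
        have hr1m : r + 1 < m := by
          by_contra hc
          have : r + 1 = m := by omega
          rw [this] at hcase
          omega
        have hIH := IH (r+1) (by omega) (by omega) hr1m t' hcase ht2
        have hFULL := FULL (r+1) (by omega) (by omega)
        have e9 : r + 1 - 1 = r := by omega
        rw [e9] at hFULL
        have hsplit := Finset.sum_Ioc_consecutive (fun i => entry x i)
          (le_of_lt (hblt r (r+1) (by omega) (by omega))) (le_of_lt hcase)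
        have hA : (0:ℝ) < (b (r+1) : ℝ) - (b r : ℝ) := by
          have : ((b r):ℝ) < (b (r+1) : ℝ) := by
            exact_mod_cast hblt r (r+1) (by omega) (by omega)
          linarith
        have hB : (0:ℝ) < (t' : ℝ) - (b (r+1) : ℝ) := by
          have : ((b (r+1)):ℝ) < (t' : ℝ) := by exact_mod_cast hcase
          linarith
        have hw8 := hwjump r h1 h2
        have hw9 := hwjump (r+1) (by omega) hr1m
        rw [← hsplit]
        nlinarith [mul_lt_mul_of_pos_left (show (w r + w (r+1))/2 < w (r+1) by linarith) hA,
          mul_lt_mul_of_pos_left (show (w r + w (r+1))/2 < (w (r+1) + w (r+2))/2 by linarith) hB]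
  -- final assembly
  intro j hj0 hjm s t hs ht htn
  set r : ℕ := j.val with hrdef
  have haj : a j = b r := by
    rw [hb r (by omega)]
  have hwr : entry θh (a j) = w r := by rw [haj]
  have hwr1 : entry θh (a j + 1) = w (r+1) := by
    rw [haj]
    exact hw1 r hjm
  rw [hwr, hwr1]
  have hLv := LEFT r hj0 hjm s (by rw [← haj]; exact hs)
  have hRv := RIGHT (m - r) r le_rfl hj0 hjm t (by rw [← haj]; exact ht) htn
  rw [← haj] at hLv hRv
  constructor
  · rw [blockAvg, div_lt_iff₀]
    · calc ∑ i ∈ Finset.Ioc s (a j), entry x i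
          < ((a j : ℝ) - s) * ((w r + w (r+1)) / 2) := hLv
        _ = (w r + w (r+1)) / 2 * ((a j : ℝ) - s) := by ring
    · have : (s:ℝ) < (a j : ℝ) := by exact_mod_cast hs
      linarith
  · rw [blockAvg, lt_div_iff₀]
    · calc (w r + w (r+1)) / 2 * ((t:ℝ) - (a j : ℝ))
          = ((t : ℝ) - (a j : ℝ)) * ((w r + w (r+1)) / 2) := by ring
        _ < ∑ i ∈ Finset.Ioc (a j) t, entry x i := hRv
    · have : ((a j):ℝ) < (t : ℝ) := by exact_mod_cast ht
      linarith

end AuxStmt14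
end
end

section
/- Let n ≥ 1, 1 ≤ k ≤ n, x ∈ ℝ^n, let θ̂ be any minimizer of ‖x − θ‖² over θ ∈ Θ_k^↑ with change points 0 = â_0 < â_1 < ⋯ < â_m = n (θ̂ constant on each block (â_{j-1} : â_j] and θ̂_{â_j} ≠ θ̂_{â_j + 1} for 1 ≤ j ≤ m − 1), and let θ̂^{(n)} be the isotonic regression of x, i.e., the unique minimizer of ‖x − θ‖² over all nondecreasing θ ∈ ℝ^n. Then for every interior change point â_j (1 ≤ j ≤ m − 1), θ̂^{(n)}_{â_j} < (θ̂_{â_j} + θ̂_{â_j + 1})/2 < θ̂^{(n)}_{â_j + 1}; in particular θ̂^{(n)}_{â_j} < θ̂^{(n)}_{â_j + 1}, so every change point of θ̂ is also a change point of θ̂^{(n)}. -/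
open MeasureTheory ProbabilityTheory Finset
open scoped ENNReal NNReal Classical BigOperators

noncomputable section

namespace S15

lemma entry_succ {n : ℕ} (v : Fin n → ℝ) (i : Fin n) : entry v ((i : ℕ) + 1) = v i := by
  simp only [entry, Nat.add_sub_cancel]
  rw [dif_pos i.isLt]

lemma entry_eq_val {n : ℕ} (v : Fin n → ℝ) (i : ℕ) (h1 : 1 ≤ i) (h2 : i ≤ n) :
    entry v i = v ⟨i - 1, by omega⟩ := by
  rw [entry, dif_pos]

lemma entry_mono {n : ℕ} (θ : Fin n → ℝ) (h : Monotone θ) (u u' : ℕ)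
    (h1 : 1 ≤ u) (h2 : u ≤ u') (h3 : u' ≤ n) : entry θ u ≤ entry θ u' := by
  rw [entry_eq_val θ u h1 (by omega), entry_eq_val θ u' (by omega) h3]
  exact h (Fin.mk_le_mk.2 (by omega))

lemma sum_Ioc_eq_sum_fin {n : ℕ} (g : ℕ → ℝ) :
    ∑ i ∈ Finset.Ioc 0 n, g i = ∑ i : Fin n, g ((i : ℕ) + 1) := by
  induction n with
  | zero => simp
  | succ n ih =>
    rw [← Finset.sum_Ioc_consecutive _ (Nat.zero_le n) (Nat.le_succ n), ih,
      Fin.sum_univ_castSucc]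
    have h1 : Finset.Ioc n (n + 1) = {n + 1} := by
      ext i; simp only [Finset.mem_Ioc, Finset.mem_singleton]; omega
    simp [h1]

lemma sqDist_Ioc {n : ℕ} (u v : Fin n → ℝ) :
    sqDist u v = ∑ i ∈ Finset.Ioc 0 n, (entry u i - entry v i) ^ 2 := by
  rw [sum_Ioc_eq_sum_fin, sqDist]
  apply Finset.sum_congr rfl
  intro i _
  rw [entry_succ, entry_succ]

lemma cost_diff {n : ℕ} (x θ θ' : Fin n → ℝ) (u t : ℕ) (htn : t ≤ n)
    (hag : ∀ i, 1 ≤ i → i ≤ n → i ∉ Finset.Ioc u t → entry θ' i = entry θ i) :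
    sqDist x θ - sqDist x θ' =
      ∑ i ∈ Finset.Ioc u t, ((entry x i - entry θ i) ^ 2 - (entry x i - entry θ' i) ^ 2) := by
  rw [sqDist_Ioc, sqDist_Ioc, ← Finset.sum_sub_distrib]
  symm
  apply Finset.sum_subset
  · intro i hi; rw [Finset.mem_Ioc] at *; omega
  · intro i hi hni
    rw [Finset.mem_Ioc] at hi
    rw [hag i (by omega) hi.2 hni]
    ring

def repl {n : ℕ} (θ : Fin n → ℝ) (u t : ℕ) (c : ℝ) : Fin n → ℝ :=
  fun i => if u < (i : ℕ) + 1 ∧ (i : ℕ) + 1 ≤ t then c else θ i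

lemma entry_repl {n : ℕ} (θ : Fin n → ℝ) (u t : ℕ) (c : ℝ) (i : ℕ) (h1 : 1 ≤ i) (h2 : i ≤ n) :
    entry (repl θ u t c) i = if u < i ∧ i ≤ t then c else entry θ i := by
  rw [entry_eq_val _ i h1 h2, entry_eq_val θ i h1 h2]
  show (if u < (i - 1) + 1 ∧ (i - 1) + 1 ≤ t then c else θ ⟨i - 1, _⟩) = _
  rw [show (i - 1) + 1 = i from by omega]

lemma cost_repl {n : ℕ} (x θ : Fin n → ℝ) (u t : ℕ) (hut : u ≤ t) (htn : t ≤ n) (c : ℝ) :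
    sqDist x θ - sqDist x (repl θ u t c) =
      ∑ i ∈ Finset.Ioc u t, ((entry x i - entry θ i) ^ 2 - (entry x i - c) ^ 2) := by
  rw [cost_diff x θ (repl θ u t c) u t htn (fun i hi1 hi2 hni => by
    rw [entry_repl θ u t c i hi1 hi2, if_neg (by rw [Finset.mem_Ioc] at hni; omega)])]
  apply Finset.sum_congr rfl
  intro i hi
  rw [Finset.mem_Ioc] at hi
  rw [entry_repl θ u t c i (by omega) (by omega), if_pos hi]

lemma keyle (B C ep : ℝ) (hC : 0 ≤ C) (hep : 0 < ep)
    (h : ∀ ε : ℝ, 0 < ε → ε ≤ ep → 2 * ε * B - ε ^ 2 * C ≤ 0) : B ≤ 0 := by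
  by_contra hB
  push_neg at hB
  set ε := min ep (B / (C + 1)) with hε
  have hC1 : (0 : ℝ) < C + 1 := by linarith
  have hεpos : 0 < ε := lt_min hep (div_pos hB hC1)
  have hεle : ε ≤ ep := min_le_left _ _
  have h2 : ε * (C + 1) ≤ B := by
    calc ε * (C + 1) ≤ B / (C + 1) * (C + 1) :=
          mul_le_mul_of_nonneg_right (min_le_right _ _) (le_of_lt hC1)
      _ = B := div_mul_cancel₀ _ (ne_of_gt hC1)
  have h3 := h ε hεpos hεle
  nlinarith [mul_pos hεpos hB, mul_le_mul_of_nonneg_left h2 hεpos.le, sq_nonneg ε]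

lemma key0 (B C ep en : ℝ) (hC : 0 ≤ C) (hep : 0 < ep) (hen : 0 < en)
    (h : ∀ ε : ℝ, -en ≤ ε → ε ≤ ep → 2 * ε * B - ε ^ 2 * C ≤ 0) : B = 0 := by
  have h1 : B ≤ 0 := keyle B C ep hC hep (fun ε he1 he2 => h ε (by linarith) he2)
  have h2 : -B ≤ 0 := keyle (-B) C en hC hen (fun ε he1 he2 => by
    have := h (-ε) (by linarith) (by linarith)
    nlinarith)
  linarith

lemma abel_tail : ∀ (d : ℕ) (w y : ℕ → ℝ) (p t : ℕ), t - p = d → p ≤ t →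
    (∀ i, p < i → i ≤ t → 0 ≤ w i) →
    (∀ i i', p < i → i ≤ i' → i' ≤ t → w i ≤ w i') →
    (∀ u, p ≤ u → u < t → ∑ i ∈ Finset.Ioc u t, y i ≤ 0) →
    ∑ i ∈ Finset.Ioc p t, w i * y i ≤ 0 := by
  intro d
  induction d with
  | zero =>
    intro w y p t hd hpt _ _ _
    have : p = t := by omega
    simp [this]
  | succ d ih =>
    intro w y p t hd hpt hw0 hwm hY
    have hplt : p < t := by omega
    have hsplit : Finset.Ioc p t = insert (p + 1) (Finset.Ioc (p + 1) t) := by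
      ext i; simp [Finset.mem_Ioc, Finset.mem_insert]; omega
    have hnotmem : p + 1 ∉ Finset.Ioc (p + 1) t := by simp
    have hkey : ∑ i ∈ Finset.Ioc p t, w i * y i
        = w (p + 1) * (∑ i ∈ Finset.Ioc p t, y i)
          + ∑ i ∈ Finset.Ioc (p + 1) t, (w i - w (p + 1)) * y i := by
      rw [hsplit, Finset.sum_insert hnotmem, Finset.sum_insert hnotmem]
      rw [mul_add, Finset.mul_sum, add_assoc, ← Finset.sum_add_distrib]
      congr 1
      apply Finset.sum_congr rfl
      intro i _
      ring
    rw [hkey]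
    have h1 : w (p + 1) * (∑ i ∈ Finset.Ioc p t, y i) ≤ 0 := by
      have ha := hw0 (p + 1) (by omega) (by omega)
      have hb := hY p le_rfl hplt
      exact mul_nonpos_of_nonneg_of_nonpos ha hb
    have h2 := ih (fun i => w i - w (p + 1)) y (p + 1) t (by omega) (by omega)
      (fun i hi1 hi2 => by have := hwm (p + 1) i (by omega) (by omega) hi2; simp; linarith)
      (fun i i' hi1 hi2 hi3 => by have := hwm i i' (by omega) hi2 hi3; simp; linarith)
      (fun u hu1 hu2 => hY u (by omega) hu2)
    linarith

lemma abel_head : ∀ (d : ℕ) (w y : ℕ → ℝ) (s p : ℕ), p - s = d → s ≤ p →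
    (∀ i, s < i → i ≤ p → 0 ≤ w i) →
    (∀ i i', s < i → i ≤ i' → i' ≤ p → w i' ≤ w i) →
    (∀ u, s < u → u ≤ p → 0 ≤ ∑ i ∈ Finset.Ioc s u, y i) →
    0 ≤ ∑ i ∈ Finset.Ioc s p, w i * y i := by
  intro d
  induction d with
  | zero =>
    intro w y s p hd hsp _ _ _
    have : s = p := by omega
    simp [this]
  | succ d ih =>
    intro w y s p hd hsp hw0 hwm hY
    have hslt : s < p := by omega
    have hsplit : Finset.Ioc s p = insert p (Finset.Ioc s (p - 1)) := by
      ext i; simp [Finset.mem_Ioc, Finset.mem_insert]; omega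
    have hnotmem : p ∉ Finset.Ioc s (p - 1) := by simp [Finset.mem_Ioc]; omega
    have hkey : ∑ i ∈ Finset.Ioc s p, w i * y i
        = w p * (∑ i ∈ Finset.Ioc s p, y i)
          + ∑ i ∈ Finset.Ioc s (p - 1), (w i - w p) * y i := by
      rw [hsplit, Finset.sum_insert hnotmem, Finset.sum_insert hnotmem]
      rw [mul_add, Finset.mul_sum]
      have : ∀ i ∈ Finset.Ioc s (p - 1), (w i - w p) * y i = w i * y i - w p * y i := by
        intro i _; ring
      rw [Finset.sum_congr rfl this, Finset.sum_sub_distrib]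
      ring
    rw [hkey]
    have h1 : 0 ≤ w p * (∑ i ∈ Finset.Ioc s p, y i) := by
      have ha := hw0 p (by omega) le_rfl
      have hb := hY p (by omega) le_rfl
      exact mul_nonneg ha hb
    have h2 := ih (fun i => w i - w p) y s (p - 1) (by omega) (by omega)
      (fun i hi1 hi2 => by have := hwm i p hi1 (by omega) le_rfl; simp; linarith)
      (fun i i' hi1 hi2 hi3 => by have := hwm i i' hi1 hi2 (by omega); simp; linarith)
      (fun u hu1 hu2 => hY u hu1 (by omega))
    linarith


-- part 2

def tadd {n : ℕ} (θ : Fin n → ℝ) (u : ℕ) (ε : ℝ) : Fin n → ℝ :=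
  fun i => if u < (i : ℕ) + 1 then θ i + ε else θ i

lemma entry_tadd {n : ℕ} (θ : Fin n → ℝ) (u : ℕ) (ε : ℝ) (i : ℕ) (h1 : 1 ≤ i) (h2 : i ≤ n) :
    entry (tadd θ u ε) i = if u < i then entry θ i + ε else entry θ i := by
  rw [entry_eq_val _ i h1 h2, entry_eq_val θ i h1 h2]
  show (if u < (i - 1) + 1 then _ else _) = _
  rw [show (i - 1) + 1 = i from by omega]

lemma cost_tadd {n : ℕ} (x θ : Fin n → ℝ) (u : ℕ) (hu : u ≤ n) (ε : ℝ) :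
    sqDist x θ - sqDist x (tadd θ u ε)
      = 2 * ε * (∑ i ∈ Finset.Ioc u n, (entry x i - entry θ i)) - ε ^ 2 * ((n - u : ℕ) : ℝ) := by
  rw [cost_diff x θ (tadd θ u ε) u n le_rfl (fun i hi1 hi2 hni => by
    rw [entry_tadd θ u ε i hi1 hi2, if_neg (by rw [Finset.mem_Ioc] at hni; omega)])]
  have hcong : ∀ i ∈ Finset.Ioc u n,
      (entry x i - entry θ i) ^ 2 - (entry x i - entry (tadd θ u ε) i) ^ 2
        = 2 * ε * (entry x i - entry θ i) - ε ^ 2 := by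
    intro i hi
    rw [Finset.mem_Ioc] at hi
    rw [entry_tadd θ u ε i (by omega) hi.2, if_pos hi.1]
    ring
  rw [Finset.sum_congr rfl hcong, Finset.sum_sub_distrib, ← Finset.mul_sum,
    Finset.sum_const, Nat.card_Ioc, nsmul_eq_mul]
  ring

lemma mono_tadd_nonneg {n : ℕ} (θ : Fin n → ℝ) (hm : Monotone θ) (u : ℕ) (ε : ℝ) (hε : 0 ≤ ε) :
    Monotone (tadd θ u ε) := by
  intro i i' hii'
  have hii : (i : ℕ) ≤ (i' : ℕ) := hii'
  simp only [tadd]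
  by_cases c1 : u < (i : ℕ) + 1 <;> by_cases c2 : u < (i' : ℕ) + 1 <;> simp [c1, c2]
  · linarith [hm hii']
  · omega
  · linarith [hm hii']
  · exact hm hii'

lemma mono_tadd_jump {n : ℕ} (θ : Fin n → ℝ) (hm : Monotone θ) (u : ℕ) (h1 : 1 ≤ u) (h2 : u < n)
    (ε : ℝ) (hε : entry θ u ≤ entry θ (u + 1) + ε) : Monotone (tadd θ u ε) := by
  intro i i' hii'
  have hii : (i : ℕ) ≤ (i' : ℕ) := hii'
  simp only [tadd]
  by_cases c1 : u < (i : ℕ) + 1 <;> by_cases c2 : u < (i' : ℕ) + 1 <;> simp [c1, c2]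
  · linarith [hm hii']
  · omega
  · have e1 : θ i = entry θ ((i : ℕ) + 1) := (entry_succ θ i).symm
    have e2 : θ i' = entry θ ((i' : ℕ) + 1) := (entry_succ θ i').symm
    have l1 : entry θ ((i : ℕ) + 1) ≤ entry θ u :=
      entry_mono θ hm _ _ (by omega) (by omega) (by omega)
    have l2 : entry θ (u + 1) ≤ entry θ ((i' : ℕ) + 1) :=
      entry_mono θ hm _ _ (by omega) (by omega) (by omega)
    rw [e1, e2]
    linarith
  · exact hm hii'

lemma mono_tadd_zero {n : ℕ} (θ : Fin n → ℝ) (hm : Monotone θ) (ε : ℝ) :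
    Monotone (tadd θ 0 ε) := by
  have hall : ∀ i : Fin n, tadd θ 0 ε i = θ i + ε := fun i => if_pos (by omega)
  intro i i' h
  rw [hall, hall]
  linarith [hm h]

lemma T_le {n : ℕ} (hn : 1 ≤ n) (x θn : Fin n → ℝ) (hm : Monotone θn)
    (hmin : ∀ θ : Fin n → ℝ, Monotone θ → sqDist x θn ≤ sqDist x θ) (u : ℕ) :
    ∑ i ∈ Finset.Ioc u n, (entry x i - entry θn i) ≤ 0 := by
  rcases le_or_gt n u with h | h
  · rw [Finset.Ioc_eq_empty (by omega)]; simp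
  · by_contra hT'
    push_neg at hT'
    set T := ∑ i ∈ Finset.Ioc u n, (entry x i - entry θn i) with hT
    set C := ((n - u : ℕ) : ℝ) with hC
    have hCpos : 0 < C := by rw [hC]; exact_mod_cast (by omega : 0 < n - u)
    set ε := T / C with hε
    have hεpos : 0 < ε := div_pos hT' hCpos
    have hkey := cost_tadd x θn u (by omega) ε
    have hle := hmin (tadd θn u ε) (mono_tadd_nonneg θn hm u ε hεpos.le)
    have hεC : ε * C = T := div_mul_cancel₀ T (ne_of_gt hCpos)
    have hsq : ε ^ 2 * C = ε * T := by rw [sq, mul_assoc, hεC]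
    rw [← hT, ← hC] at hkey
    nlinarith [mul_pos hεpos hT']

lemma T_zero {n : ℕ} (hn : 1 ≤ n) (x θn : Fin n → ℝ) (hm : Monotone θn)
    (hmin : ∀ θ : Fin n → ℝ, Monotone θ → sqDist x θn ≤ sqDist x θ) :
    ∑ i ∈ Finset.Ioc 0 n, (entry x i - entry θn i) = 0 := by
  have hle := T_le hn x θn hm hmin 0
  rcases lt_or_eq_of_le hle with h | h
  swap
  · exact h
  exfalso
  set T := ∑ i ∈ Finset.Ioc 0 n, (entry x i - entry θn i) with hT
  set C := ((n - 0 : ℕ) : ℝ) with hC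
  have hCpos : 0 < C := by rw [hC]; exact_mod_cast (by omega : 0 < n - 0)
  set ε := T / C with hε
  have hεneg : ε < 0 := div_neg_of_neg_of_pos h hCpos
  have hkey := cost_tadd x θn 0 (by omega) ε
  have hle2 := hmin (tadd θn 0 ε) (mono_tadd_zero θn hm ε)
  have hεC : ε * C = T := div_mul_cancel₀ T (ne_of_gt hCpos)
  have hsq : ε ^ 2 * C = ε * T := by rw [sq, mul_assoc, hεC]
  rw [← hT, ← hC] at hkey
  nlinarith [mul_pos_of_neg_of_neg hεneg h]

lemma T_jump {n : ℕ} (hn : 1 ≤ n) (x θn : Fin n → ℝ) (hm : Monotone θn)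
    (hmin : ∀ θ : Fin n → ℝ, Monotone θ → sqDist x θn ≤ sqDist x θ)
    (u : ℕ) (h1 : 1 ≤ u) (h2 : u < n) (hj : entry θn u < entry θn (u + 1)) :
    ∑ i ∈ Finset.Ioc u n, (entry x i - entry θn i) = 0 := by
  have hle := T_le hn x θn hm hmin u
  rcases lt_or_eq_of_le hle with h | h
  swap
  · exact h
  exfalso
  set T := ∑ i ∈ Finset.Ioc u n, (entry x i - entry θn i) with hT
  set C := ((n - u : ℕ) : ℝ) with hC
  have hCpos : 0 < C := by rw [hC]; exact_mod_cast (by omega : 0 < n - u)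
  set g := entry θn (u + 1) - entry θn u with hg
  have hgpos : 0 < g := by rw [hg]; linarith
  set ε := max (-g) (T / C) with hε
  have hεneg : ε < 0 := max_lt (by linarith) (div_neg_of_neg_of_pos h hCpos)
  have hmono' := mono_tadd_jump θn hm u h1 h2 ε (by
    have := le_max_left (-g) (T / C)
    have h5 : -g ≤ ε := this
    rw [hg] at h5
    linarith)
  have hkey := cost_tadd x θn u (by omega) ε
  have hle2 := hmin _ hmono'
  have hTC : T / C * C = T := div_mul_cancel₀ T (ne_of_gt hCpos)
  have hεC : T ≤ ε * C := by
    have h6 : T / C ≤ ε := le_max_right _ _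
    calc T = T / C * C := hTC.symm
      _ ≤ ε * C := mul_le_mul_of_nonneg_right h6 hCpos.le
  rw [← hT, ← hC] at hkey
  have hq : 2 * ε * T - ε ^ 2 * C ≤ 0 := by linarith
  have h5 := mul_le_mul_of_nonpos_left (show 2 * T - ε * C ≤ T from by linarith) hεneg.le
  nlinarith [mul_pos (neg_pos.2 hεneg) (neg_pos.2 h)]

lemma levelset_right {n : ℕ} (hn : 1 ≤ n) (x θn : Fin n → ℝ) (hm : Monotone θn)
    (hmin : ∀ θ : Fin n → ℝ, Monotone θ → sqDist x θn ≤ sqDist x θ)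
    (p : ℕ) (hp : p < n) :
    ∃ t, p < t ∧ t ≤ n ∧ (∀ i, p < i → i ≤ t → entry θn i = entry θn (p + 1)) ∧
      ∑ i ∈ Finset.Ioc t n, (entry x i - entry θn i) = 0 := by
  classical
  set v := entry θn (p + 1) with hv
  set S := (Finset.Icc (p + 1) n).filter (fun u => ∀ i ∈ Finset.Ioc p u, entry θn i = v)
    with hS
  have hmem : p + 1 ∈ S := by
    rw [hS, Finset.mem_filter]
    refine ⟨Finset.mem_Icc.2 ⟨le_rfl, by omega⟩, fun i hi => ?_⟩
    rw [Finset.mem_Ioc] at hi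
    rw [show i = p + 1 from by omega]
  have hne : S.Nonempty := ⟨p + 1, hmem⟩
  set t := S.max' hne with ht
  have htS : t ∈ S := S.max'_mem hne
  rw [hS, Finset.mem_filter] at htS
  have ht1 : p + 1 ≤ t := (Finset.mem_Icc.1 htS.1).1
  have ht2 : t ≤ n := (Finset.mem_Icc.1 htS.1).2
  have hconst : ∀ i, p < i → i ≤ t → entry θn i = v :=
    fun i hi1 hi2 => htS.2 i (Finset.mem_Ioc.2 ⟨hi1, hi2⟩)
  refine ⟨t, by omega, ht2, hconst, ?_⟩
  rcases eq_or_lt_of_le ht2 with he | hlt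
  · rw [he]; simp
  · have hnotS : t + 1 ∉ S := fun hmem' => by have := S.le_max' _ hmem'; omega
    have hnall : ¬ ∀ i ∈ Finset.Ioc p (t + 1), entry θn i = v := by
      intro hall
      apply hnotS
      rw [hS, Finset.mem_filter]
      exact ⟨Finset.mem_Icc.2 ⟨by omega, by omega⟩, hall⟩
    have hne' : entry θn (t + 1) ≠ v := by
      intro heq
      apply hnall
      intro i hi
      rw [Finset.mem_Ioc] at hi
      by_cases hit : i ≤ t
      · exact hconst i hi.1 hit
      · rw [show i = t + 1 from by omega, heq]
    have hlt' : entry θn t < entry θn (t + 1) := by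
      have ha : entry θn t = v := hconst t (by omega) le_rfl
      have hb : entry θn t ≤ entry θn (t + 1) :=
        entry_mono θn hm t (t + 1) (by omega) (by omega) (by omega)
      rcases lt_or_eq_of_le hb with hcc | hcc
      · exact hcc
      · exact absurd (by rw [← hcc, ha]) hne'
    exact T_jump hn x θn hm hmin t (by omega) hlt hlt'

lemma levelset_left {n : ℕ} (hn : 1 ≤ n) (x θn : Fin n → ℝ) (hm : Monotone θn)
    (hmin : ∀ θ : Fin n → ℝ, Monotone θ → sqDist x θn ≤ sqDist x θ)
    (p : ℕ) (hp1 : 1 ≤ p) (hpn : p ≤ n) :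
    ∃ s, s < p ∧ (∀ i, s < i → i ≤ p → entry θn i = entry θn p) ∧
      ∑ i ∈ Finset.Ioc s n, (entry x i - entry θn i) = 0 := by
  classical
  set v := entry θn p with hv
  set S := (Finset.Icc 0 (p - 1)).filter (fun u => ∀ i ∈ Finset.Ioc u p, entry θn i = v)
    with hS
  have hmem : p - 1 ∈ S := by
    rw [hS, Finset.mem_filter]
    refine ⟨Finset.mem_Icc.2 ⟨by omega, le_rfl⟩, fun i hi => ?_⟩
    rw [Finset.mem_Ioc] at hi
    rw [show i = p from by omega]
  have hne : S.Nonempty := ⟨p - 1, hmem⟩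
  set s := S.min' hne with hs
  have hsS : s ∈ S := S.min'_mem hne
  rw [hS, Finset.mem_filter] at hsS
  have hs1 : s ≤ p - 1 := (Finset.mem_Icc.1 hsS.1).2
  have hconst : ∀ i, s < i → i ≤ p → entry θn i = v :=
    fun i hi1 hi2 => hsS.2 i (Finset.mem_Ioc.2 ⟨hi1, hi2⟩)
  refine ⟨s, by omega, hconst, ?_⟩
  rcases Nat.eq_zero_or_pos s with hz | hpos
  · rw [hz]; exact T_zero hn x θn hm hmin
  · have hnotS : s - 1 ∉ S := fun hmem' => by have := S.min'_le _ hmem'; omega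
    have hnall : ¬ ∀ i ∈ Finset.Ioc (s - 1) p, entry θn i = v := by
      intro hall
      apply hnotS
      rw [hS, Finset.mem_filter]
      exact ⟨Finset.mem_Icc.2 ⟨by omega, by omega⟩, hall⟩
    have hne' : entry θn s ≠ v := by
      intro heq
      apply hnall
      intro i hi
      rw [Finset.mem_Ioc] at hi
      by_cases his : s < i
      · exact hconst i his hi.2
      · rw [show i = s from by omega, heq]
    have hlt' : entry θn s < entry θn (s + 1) := by
      have ha : entry θn (s + 1) = v := hconst (s + 1) (by omega) (by omega)
      have hb : entry θn s ≤ entry θn (s + 1) :=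
        entry_mono θn hm s (s + 1) (by omega) (by omega) (by omega)
      rcases lt_or_eq_of_le hb with hcc | hcc
      · exact hcc
      · exact absurd (by rw [hcc, ha]) hne'
    exact T_jump hn x θn hm hmin s (by omega) (by omega) hlt'

-- part 3

lemma mem_of_witness {n k : ℕ} (θ : Fin n → ℝ) (m : ℕ) (hm1 : 1 ≤ m) (hmk : m ≤ k)
    (B : ℕ → ℕ) (W : ℕ → ℝ) (hB0 : B 0 = 0) (hBm : B m = n)
    (hBmono : ∀ i i', i ≤ i' → i' ≤ m → B i ≤ B i')
    (hWmono : ∀ l l', l ≤ l' → l' + 1 ≤ m → W l ≤ W l')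
    (hval : ∀ l, l < m → ∀ i, B l < i → i ≤ B (l + 1) → entry θ i = W l) :
    θ ∈ ThetaUp n k := by
  refine ⟨fun i => B (min (i : ℕ) m), fun l => W (min (l : ℕ) (m - 1)), ?_, ?_, ?_, ?_, ?_⟩
  · show B (min ((0 : Fin (k + 1)) : ℕ) m) = 0
    rw [show min ((0 : Fin (k + 1)) : ℕ) m = 0 from by simp, hB0]
  · show B (min ((Fin.last k : Fin (k + 1)) : ℕ) m) = n
    rw [show min ((Fin.last k : Fin (k + 1)) : ℕ) m = m from by simp [Fin.val_last]; omega, hBm]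
  · intro i i' hii'
    have h : (i : ℕ) ≤ (i' : ℕ) := hii'
    exact hBmono _ _ (by omega) (by omega)
  · intro l l' hll'
    have h : (l : ℕ) ≤ (l' : ℕ) := hll'
    exact hWmono _ _ (by omega) (by omega)
  · intro l i hi
    rw [Finset.mem_Ioc] at hi
    simp only [Fin.coe_castSucc, Fin.val_succ] at hi
    by_cases hl : (l : ℕ) < m
    · rw [show min ((l : ℕ)) m = (l : ℕ) from by omega,
        show min ((l : ℕ) + 1) m = (l : ℕ) + 1 from by omega] at hi
      rw [hval (l : ℕ) hl i hi.1 hi.2]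
      congr 1
      omega
    · exfalso
      rw [show min ((l : ℕ)) m = m from by omega,
        show min ((l : ℕ) + 1) m = m from by omega] at hi
      omega

lemma findBlock {K nn : ℕ} (w : Fin (K + 1) → ℕ) (hmono : Monotone w) (h0 : w 0 = 0)
    (hn : w (Fin.last K) = nn) (u : ℕ) (h1 : 1 ≤ u) (h2 : u ≤ nn) :
    ∃ l : Fin K, w l.castSucc < u ∧ u ≤ w l.succ := by
  classical
  set F := Finset.univ.filter (fun l : Fin (K + 1) => w l < u) with hF
  have hne : F.Nonempty := ⟨0, by simp [hF]; omega⟩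
  set l0 := F.max' hne with hl0def
  have hl0 : w l0 < u := (Finset.mem_filter.1 (F.max'_mem hne)).2
  have hl0K : (l0 : ℕ) < K := by
    by_contra hcon
    have hval : (l0 : ℕ) = K := by have := l0.isLt; omega
    have : l0 = Fin.last K := Fin.ext hval
    rw [this, hn] at hl0
    omega
  refine ⟨⟨(l0 : ℕ), hl0K⟩, ?_, ?_⟩
  · have he : (⟨(l0 : ℕ), hl0K⟩ : Fin K).castSucc = l0 := Fin.ext rfl
    rw [he]
    exact hl0
  · by_contra hcon
    push_neg at hcon
    have hmem : (⟨(l0 : ℕ), hl0K⟩ : Fin K).succ ∈ F := by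
      rw [hF, Finset.mem_filter]
      exact ⟨Finset.mem_univ _, hcon⟩
    have hle := F.le_max' _ hmem
    rw [← hl0def] at hle
    have : ((⟨(l0 : ℕ), hl0K⟩ : Fin K).succ : ℕ) ≤ (l0 : ℕ) := hle
    simp [Fin.val_succ] at this

lemma mono_of_mem {n k : ℕ} (θ : Fin n → ℝ) (h : θ ∈ ThetaUp n k) :
    ∀ u u', 1 ≤ u → u ≤ u' → u' ≤ n → entry θ u ≤ entry θ u' := by
  obtain ⟨w, ψ, hw0, hwn, hwm, hψm, hval⟩ := h
  intro u u' h1 h2 h3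
  obtain ⟨l, hl1, hl2⟩ := findBlock w hwm hw0 hwn u h1 (by omega)
  obtain ⟨l', hl1', hl2'⟩ := findBlock w hwm hw0 hwn u' (by omega) h3
  rw [hval l u (Finset.mem_Ioc.2 ⟨hl1, hl2⟩), hval l' u' (Finset.mem_Ioc.2 ⟨hl1', hl2'⟩)]
  apply hψm
  by_contra hc
  push_neg at hc
  have hc' : (l' : ℕ) < (l : ℕ) := hc
  have hss : w l'.succ ≤ w l.castSucc := by
    apply hwm
    simp only [Fin.le_def, Fin.val_succ, Fin.coe_castSucc]
    omega
  omega

lemma pieces_le {n k : ℕ} (hn : 1 ≤ n) (hk1 : 1 ≤ k) (θ : Fin n → ℝ) (h : θ ∈ ThetaUp n k)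
    (m : ℕ) (a : Fin (m + 1) → ℕ) (ha0 : a 0 = 0) (han : a (Fin.last m) = n)
    (haMono : StrictMono a)
    (hjump : ∀ j : Fin (m + 1), 0 < (j : ℕ) → (j : ℕ) < m →
      entry θ (a j) ≠ entry θ (a j + 1)) :
    m ≤ k := by
  classical
  obtain ⟨w, ψ, hw0, hwn, hwm, hψm, hval⟩ := h
  have hjmp : ∀ u, 1 ≤ u → u < n → entry θ u ≠ entry θ (u + 1) →
      ∃ l : Fin (k + 1), w l = u := by
    intro u hu1 hu2 hne
    obtain ⟨l, hl1, hl2⟩ := findBlock w hwm hw0 hwn u hu1 (by omega)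
    rcases lt_or_eq_of_le hl2 with hlt | heq
    · exfalso
      apply hne
      rw [hval l u (Finset.mem_Ioc.2 ⟨hl1, hl2⟩),
        hval l (u + 1) (Finset.mem_Ioc.2 ⟨by omega, by omega⟩)]
    · exact ⟨l.succ, heq.symm⟩
  set S := Finset.image w Finset.univ with hSdef
  have h0S : (0 : ℕ) ∈ S := Finset.mem_image.2 ⟨0, Finset.mem_univ _, hw0⟩
  have hnS : n ∈ S := Finset.mem_image.2 ⟨Fin.last k, Finset.mem_univ _, hwn⟩
  set f : ℕ → ℕ := fun u => a ⟨min u m, by omega⟩ with hf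
  set J := Finset.image f (Finset.Ioo 0 m) with hJdef
  have hsub : J ⊆ (S.erase 0).erase n := by
    intro val hval'
    rw [hJdef, Finset.mem_image] at hval'
    obtain ⟨u, hu, rfl⟩ := hval'
    rw [Finset.mem_Ioo] at hu
    have hum : min u m = u := by omega
    have h1 : 0 < f u := by
      have hlt := haMono (show (0 : Fin (m + 1)) < ⟨min u m, by omega⟩ from by
        simp [Fin.lt_def]; omega)
      have : f u = a ⟨min u m, by omega⟩ := rfl
      omega
    have h2 : f u < n := by
      have hlt := haMono (show (⟨min u m, by omega⟩ : Fin (m + 1)) < Fin.last m from by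
        simp [Fin.lt_def, Fin.val_last]; omega)
      have : f u = a ⟨min u m, by omega⟩ := rfl
      omega
    obtain ⟨l, hl⟩ := hjmp (f u) (by omega) h2 (by
      apply hjump ⟨min u m, by omega⟩ <;> simp <;> omega)
    rw [Finset.mem_erase, Finset.mem_erase]
    exact ⟨by omega, by omega, hl ▸ Finset.mem_image.2 ⟨l, Finset.mem_univ _, rfl⟩⟩
  have hinj : Set.InjOn f (Finset.Ioo 0 m) := by
    intro u hu u' hu' he
    simp only [Finset.coe_Ioo, Set.mem_Ioo] at hu hu'
    have heq := haMono.injective he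
    have hval2 : min u m = min u' m := congrArg Fin.val heq
    omega
  have hJcard : J.card = m - 1 := by
    rw [hJdef, Finset.card_image_of_injOn hinj, Nat.card_Ioo]
    omega
  have hcard2 : ((S.erase 0).erase n).card = S.card - 2 := by
    rw [Finset.card_erase_of_mem (Finset.mem_erase.2 ⟨by omega, hnS⟩),
      Finset.card_erase_of_mem h0S]
    omega
  have hcardle := Finset.card_le_card hsub
  have hScard : S.card ≤ k + 1 := le_trans Finset.card_image_le (by simp)
  have hS2 : 2 ≤ S.card := Finset.one_lt_card.2 ⟨0, h0S, n, hnS, by omega⟩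
  omega

-- part 4

lemma memT {n k m : ℕ} (θ : Fin n → ℝ) (A : ℕ → ℕ) (V : ℕ → ℝ) (hmk : m ≤ k)
    (hA0 : A 0 = 0) (hAm : A m = n)
    (hAmono : ∀ i i', i ≤ i' → i' ≤ m → A i ≤ A i')
    (hVmono : ∀ l l', l ≤ l' → l' + 1 ≤ m → V l ≤ V l')
    (hval : ∀ l, l < m → ∀ i, A l < i → i ≤ A (l + 1) → entry θ i = V l)
    (jj : ℕ) (hj1 : 1 ≤ jj) (hjm : jj < m)
    (t : ℕ) (hpt : A jj ≤ t) (htn : t ≤ n)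
    (c' : ℝ) (hlc : ∀ l, l + 1 < jj → V l ≤ c') (hrc : c' ≤ V jj) :
    repl θ (A (jj - 1)) t c' ∈ ThetaUp n k := by
  apply mem_of_witness _ m (by omega) hmk
      (fun i => if i < jj then A i else max (A i) t)
      (fun l => if l = jj - 1 then c' else V l)
  · rw [if_pos (by omega : 0 < jj)]
    exact hA0
  · rw [if_neg (by omega : ¬ m < jj)]
    rw [hAm]
    exact Nat.max_eq_left htn
  · intro i i' hii' hi'm
    by_cases h1 : i < jj <;> by_cases h2 : i' < jj
    · rw [if_pos h1, if_pos h2]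
      exact hAmono _ _ hii' (by omega)
    · rw [if_pos h1, if_neg h2]
      exact le_trans (hAmono i i' hii' hi'm) (le_max_left _ _)
    · exact absurd (lt_of_le_of_lt hii' h2) h1
    · rw [if_neg h1, if_neg h2]
      exact max_le_max (hAmono _ _ hii' hi'm) le_rfl
  · intro l l' hll' hl'm
    by_cases h1 : l = jj - 1 <;> by_cases h2 : l' = jj - 1
    · rw [if_pos h1, if_pos h2]
    · rw [if_pos h1, if_neg h2]
      exact le_trans hrc (hVmono jj l' (by omega) hl'm)
    · rw [if_neg h1, if_pos h2]
      exact hlc l (by omega)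
    · rw [if_neg h1, if_neg h2]
      exact hVmono l l' hll' hl'm
  · intro l hlm i hi1 hi2
    have hBl1n : (if l + 1 < jj then A (l + 1) else max (A (l + 1)) t) ≤ n := by
      by_cases h : l + 1 < jj
      · rw [if_pos h]
        exact hAm ▸ hAmono (l + 1) m (by omega) le_rfl
      · rw [if_neg h]
        exact max_le (hAm ▸ hAmono (l + 1) m (by omega) le_rfl) htn
    have hi1' : 1 ≤ i := by omega
    have hin : i ≤ n := le_trans hi2 hBl1n
    rw [entry_repl θ _ _ _ i hi1' hin]
    by_cases hcase : l + 1 < jj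
    · have h1 : l < jj := by omega
      rw [if_pos h1] at hi1
      rw [if_pos hcase] at hi2
      have hnotrep : ¬ (A (jj - 1) < i ∧ i ≤ t) := by
        have := le_trans hi2 (hAmono (l + 1) (jj - 1) (by omega) (by omega))
        omega
      rw [if_neg hnotrep, hval l hlm i hi1 hi2, if_neg (by omega : ¬ l = jj - 1)]
    · by_cases hcase2 : l < jj
      · have hl : l = jj - 1 := by omega
        rw [if_pos hcase2] at hi1
        rw [if_neg hcase] at hi2
        have hmax : max (A (l + 1)) t = t := by
          rw [max_eq_right]
          rw [show l + 1 = jj from by omega]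
          exact hpt
        rw [hmax] at hi2
        have hrep : A (jj - 1) < i ∧ i ≤ t := ⟨by rw [← hl]; exact hi1, hi2⟩
        rw [if_pos hrep, if_pos hl]
      · rw [if_neg hcase2] at hi1
        rw [if_neg hcase] at hi2
        have hti : t < i := lt_of_le_of_lt (le_max_right _ _) hi1
        have hnotrep : ¬ (A (jj - 1) < i ∧ i ≤ t) := by omega
        rw [if_neg hnotrep]
        have hAl : A l < i := lt_of_le_of_lt (le_max_left _ _) hi1
        have hAl1 : i ≤ A (l + 1) := by
          rcases max_cases (A (l + 1)) t with ⟨h, _⟩ | ⟨h, hle⟩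
          · rw [h] at hi2; exact hi2
          · rw [h] at hi2; omega
        rw [hval l hlm i hAl hAl1, if_neg (by omega : ¬ l = jj - 1)]

lemma memU {n k m : ℕ} (θ : Fin n → ℝ) (A : ℕ → ℕ) (V : ℕ → ℝ) (hmk : m ≤ k)
    (hA0 : A 0 = 0) (hAm : A m = n)
    (hAmono : ∀ i i', i ≤ i' → i' ≤ m → A i ≤ A i')
    (hVmono : ∀ l l', l ≤ l' → l' + 1 ≤ m → V l ≤ V l')
    (hval : ∀ l, l < m → ∀ i, A l < i → i ≤ A (l + 1) → entry θ i = V l)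
    (jj : ℕ) (hj1 : 1 ≤ jj) (hjm : jj + 1 ≤ m)
    (s : ℕ) (hs : s ≤ A jj)
    (c' : ℝ) (hlc : ∀ l, l + 1 ≤ jj → V l ≤ c')
    (hrc : ∀ l, jj < l → l + 1 ≤ m → c' ≤ V l) :
    repl θ s (A (jj + 1)) c' ∈ ThetaUp n k := by
  apply mem_of_witness _ m (by omega) hmk
      (fun i => if i ≤ jj then min (A i) s else A i)
      (fun l => if l = jj then c' else V l)
  · rw [if_pos (by omega : 0 ≤ jj), hA0]
    omega
  · rw [if_neg (by omega : ¬ m ≤ jj)]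
    exact hAm
  · intro i i' hii' hi'm
    by_cases h1 : i ≤ jj <;> by_cases h2 : i' ≤ jj
    · rw [if_pos h1, if_pos h2]
      exact min_le_min (hAmono _ _ hii' (by omega)) le_rfl
    · rw [if_pos h1, if_neg h2]
      exact le_trans (min_le_right _ _) (le_trans hs (hAmono jj i' (by omega) hi'm))
    · exact absurd (le_trans hii' h2) h1
    · rw [if_neg h1, if_neg h2]
      exact hAmono _ _ hii' hi'm
  · intro l l' hll' hl'm
    by_cases h1 : l = jj <;> by_cases h2 : l' = jj
    · rw [if_pos h1, if_pos h2]
    · rw [if_pos h1, if_neg h2]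
      exact hrc l' (by omega) hl'm
    · rw [if_neg h1, if_pos h2]
      exact hlc l (by omega)
    · rw [if_neg h1, if_neg h2]
      exact hVmono l l' hll' hl'm
  · intro l hlm i hi1 hi2
    have hin : i ≤ n := by
      have hb : (if l + 1 ≤ jj then min (A (l + 1)) s else A (l + 1)) ≤ n := by
        by_cases h : l + 1 ≤ jj
        · rw [if_pos h]
          exact le_trans (min_le_left _ _) (hAm ▸ hAmono (l + 1) m (by omega) le_rfl)
        · rw [if_neg h]
          exact hAm ▸ hAmono (l + 1) m hlm le_rfl
      exact le_trans hi2 hb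
    have hi1' : 1 ≤ i := by omega
    rw [entry_repl θ _ _ _ i hi1' hin]
    by_cases hcase : l + 1 ≤ jj
    · rw [if_pos (by omega : l ≤ jj)] at hi1
      rw [if_pos hcase] at hi2
      have hnot : ¬ (s < i ∧ i ≤ A (jj + 1)) := by
        have := le_trans hi2 (min_le_right _ _)
        omega
      rw [if_neg hnot]
      have hAl : A l < i := by
        rcases min_cases (A l) s with ⟨h, _⟩ | ⟨h, hle⟩
        · rw [h] at hi1; exact hi1
        · rw [h] at hi1
          have := le_trans hi2 (min_le_right _ _)
          omega
      rw [hval l hlm i hAl (le_trans hi2 (min_le_left _ _)), if_neg (by omega : ¬ l = jj)]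
    · by_cases hcase2 : l ≤ jj
      · have hl : l = jj := by omega
        rw [if_pos hcase2] at hi1
        rw [if_neg hcase] at hi2
        have hminl : min (A l) s = s := by rw [hl]; exact min_eq_right hs
        rw [hminl] at hi1
        rw [hl] at hi2
        have hrep : s < i ∧ i ≤ A (jj + 1) := ⟨hi1, hi2⟩
        rw [if_pos hrep, if_pos hl]
      · rw [if_neg hcase2] at hi1
        rw [if_neg hcase] at hi2
        have hAji : A (jj + 1) < i :=
          lt_of_le_of_lt (hAmono (jj + 1) l (by omega) (by omega)) hi1
        rw [if_neg (by omega : ¬ (s < i ∧ i ≤ A (jj + 1)))]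
        rw [hval l hlm i hi1 hi2, if_neg (by omega : ¬ l = jj)]

end S15

open S15

set_option maxHeartbeats 2000000 in
/-- Lemma 5.1, part 3: if `θh` minimizes `‖x − θ‖²` over `Θ_k^↑` with change points
`0 = â_0 < ⋯ < â_m = n`, and `θn` is the isotonic regression of `x` (the minimizer of
`‖x − θ‖²` over all nondecreasing vectors), then for every interior change point `â_j`,
`θn_{â_j} < (θh_{â_j} + θh_{â_j+1})/2 < θn_{â_j+1}`; in particular
`θn_{â_j} < θn_{â_j+1}`, so every change point of `θh` is a change point of `θn`. -/
theorem stmt15 (n k : ℕ) (hn : 1 ≤ n) (hk1 : 1 ≤ k) (hkn : k ≤ n)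
    (x θh : Fin n → ℝ)
    (hmem : θh ∈ ThetaUp n k)
    (hmin : ∀ θ ∈ ThetaUp n k, sqDist x θh ≤ sqDist x θ)
    (m : ℕ) (a : Fin (m + 1) → ℕ)
    (ha0 : a 0 = 0) (han : a (Fin.last m) = n) (haMono : StrictMono a)
    (hconst : ∀ j : Fin m, ∀ i ∈ Finset.Ioc (a j.castSucc) (a j.succ),
      ∀ i' ∈ Finset.Ioc (a j.castSucc) (a j.succ), entry θh i = entry θh i')
    (hjump : ∀ j : Fin (m + 1), 0 < (j : ℕ) → (j : ℕ) < m →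
      entry θh (a j) ≠ entry θh (a j + 1))
    (θn : Fin n → ℝ) (hθnMono : Monotone θn)
    (hθnMin : ∀ θ : Fin n → ℝ, Monotone θ → sqDist x θn ≤ sqDist x θ) :
    ∀ j : Fin (m + 1), 0 < (j : ℕ) → (j : ℕ) < m →
      entry θn (a j) < (entry θh (a j) + entry θh (a j + 1)) / 2 ∧
      (entry θh (a j) + entry θh (a j + 1)) / 2 < entry θn (a j + 1) ∧
      entry θn (a j) < entry θn (a j + 1) := by
  classical
  intro j hj0 hjmm
  set jj := (j : ℕ) with hjjdef
  have hj1 : 1 ≤ jj := hj0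
  have hjm : jj < m := hjmm
  have hm2 : 2 ≤ m := by omega
  set A : ℕ → ℕ := fun i => if h : i < m + 1 then a ⟨i, h⟩ else n with hAdef
  have hAeq : ∀ (l : ℕ) (h : l < m + 1), A l = a ⟨l, h⟩ := by
    intro l h
    rw [hAdef]
    simp only [dif_pos h]
  have hA0 : A 0 = 0 := by
    rw [hAeq 0 (by omega), show (⟨0, by omega⟩ : Fin (m + 1)) = 0 from Fin.ext (by simp)]
    exact ha0
  have hAm : A m = n := by
    rw [hAeq m (by omega), show (⟨m, by omega⟩ : Fin (m + 1)) = Fin.last m from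
      Fin.ext (by simp [Fin.val_last])]
    exact han
  have hAmono : ∀ i i', i ≤ i' → i' ≤ m → A i ≤ A i' := by
    intro i i' h1 h2
    rw [hAeq i (by omega), hAeq i' (by omega)]
    exact haMono.monotone (Fin.mk_le_mk.2 h1)
  have hAstrict : ∀ i i', i < i' → i' ≤ m → A i < A i' := by
    intro i i' h1 h2
    rw [hAeq i (by omega), hAeq i' (by omega)]
    exact haMono (Fin.mk_lt_mk.2 h1)
  set V : ℕ → ℝ := fun l => entry θh (A (l + 1)) with hVdef
  have hvalA : ∀ l, l < m → ∀ i, A l < i → i ≤ A (l + 1) → entry θh i = V l := by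
    intro l hlm i hi1 hi2
    have ecs : a ((⟨l, hlm⟩ : Fin m).castSucc) = A l := by
      rw [hAeq l (by omega)]
      exact congrArg a (Fin.ext rfl)
    have esu : a ((⟨l, hlm⟩ : Fin m).succ) = A (l + 1) := by
      rw [hAeq (l + 1) (by omega)]
      exact congrArg a (Fin.ext rfl)
    have hmem1 : i ∈ Finset.Ioc (a ((⟨l, hlm⟩ : Fin m).castSucc))
        (a ((⟨l, hlm⟩ : Fin m).succ)) := by
      rw [Finset.mem_Ioc, ecs, esu]; exact ⟨hi1, hi2⟩
    have hmem2 : A (l + 1) ∈ Finset.Ioc (a ((⟨l, hlm⟩ : Fin m).castSucc))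
        (a ((⟨l, hlm⟩ : Fin m).succ)) := by
      rw [Finset.mem_Ioc, ecs, esu]
      exact ⟨hAstrict l (l + 1) (by omega) (by omega), le_rfl⟩
    exact hconst ⟨l, hlm⟩ i hmem1 (A (l + 1)) hmem2
  have hjumpA : ∀ l, 0 < l → l < m → entry θh (A l) ≠ entry θh (A l + 1) := by
    intro l h1 h2
    have e : A l = a ⟨l, by omega⟩ := hAeq l (by omega)
    rw [e]
    exact hjump ⟨l, by omega⟩ h1 h2
  have hEmono := mono_of_mem θh hmem
  have hVmono : ∀ l l', l ≤ l' → l' + 1 ≤ m → V l ≤ V l' := by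
    intro l l' h1 h2
    have hg1 : 1 ≤ A (l + 1) := by
      have := hAstrict 0 (l + 1) (by omega) (by omega)
      omega
    exact hEmono (A (l + 1)) (A (l' + 1)) hg1 (hAmono (l + 1) (l' + 1) (by omega) (by omega))
      (hAm ▸ hAmono (l' + 1) m (by omega) le_rfl)
  have hmk : m ≤ k := pieces_le hn hk1 θh hmem m a ha0 han haMono hjump
  have hidx : jj - 1 + 1 = jj := by omega
  have hr0p : A (jj - 1) < A jj := hAstrict (jj - 1) jj (by omega) (by omega)
  have hpq : A jj < A (jj + 1) := hAstrict jj (jj + 1) (by omega) (by omega)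
  have hqn : A (jj + 1) ≤ n := hAm ▸ hAmono (jj + 1) m (by omega) le_rfl
  have hp1 : 1 ≤ A jj := by
    have := hAstrict 0 jj (by omega) (by omega)
    omega
  have hpn : A jj < n := by
    have := hAstrict jj m (by omega) le_rfl
    omega
  have hEp : entry θh (A jj) = V (jj - 1) := by
    apply hvalA (jj - 1) (by omega)
    · omega
    · exact le_of_eq (by rw [hidx])
  have hEp1 : entry θh (A jj + 1) = V jj := by
    apply hvalA jj (by omega)
    · omega
    · omega
  have hμν : V (jj - 1) < V jj := by
    have hne : entry θh (A jj) ≠ entry θh (A jj + 1) := hjumpA jj hj1 hjm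
    have hle : V (jj - 1) ≤ V jj := hVmono (jj - 1) jj (by omega) (by omega)
    rcases lt_or_eq_of_le hle with h | h
    · exact h
    · exact absurd (by rw [hEp, hEp1, h]) hne
  have hEgeν : ∀ i, A jj < i → i ≤ n → V jj ≤ entry θh i := by
    intro i h1 h2
    rw [← hEp1]
    exact hEmono (A jj + 1) i (by omega) (by omega) h2
  have hEleμ : ∀ i, 1 ≤ i → i ≤ A jj → entry θh i ≤ V (jj - 1) := by
    intro i h1 h2
    rw [← hEp]
    exact hEmono i (A jj) h1 h2 (by omega)
  have hTle := T_le hn x θn hθnMono hθnMin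
  have hlb : ∃ e : ℝ, 0 < e ∧ ∀ ε : ℝ, -e ≤ ε → ∀ l, l + 1 < jj → V l ≤ V (jj - 1) + ε := by
    by_cases hjj1 : jj = 1
    · exact ⟨1, one_pos, fun ε hε l hl => absurd hl (by omega)⟩
    · refine ⟨V (jj - 1) - V (jj - 2), ?_, ?_⟩
      · have hne : entry θh (A (jj - 1)) ≠ entry θh (A (jj - 1) + 1) :=
          hjumpA (jj - 1) (by omega) (by omega)
        have h1 : entry θh (A (jj - 1)) = V (jj - 2) := by
          apply hvalA (jj - 2) (by omega)
          · exact hAstrict (jj - 2) (jj - 1) (by omega) (by omega)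
          · exact le_of_eq (by rw [show jj - 2 + 1 = jj - 1 from by omega])
        have h2 : entry θh (A (jj - 1) + 1) = V (jj - 1) := by
          apply hvalA (jj - 1) (by omega)
          · omega
          · rw [hidx]; omega
        have hle : V (jj - 2) ≤ V (jj - 1) := hVmono _ _ (by omega) (by omega)
        rcases lt_or_eq_of_le hle with h | h
        · linarith
        · exact absurd (by rw [h1, h2, h]) hne
      · intro ε hε l hl
        have := hVmono l (jj - 2) (by omega) (by omega)
        linarith
  have hRight : (V (jj - 1) + V jj) / 2 < entry θn (A jj + 1) := by
    by_contra hvc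
    push_neg at hvc
    obtain ⟨t, hpt, htn, hNconst, hTt⟩ := levelset_right hn x θn hθnMono hθnMin (A jj) hpn
    have hYle : ∀ u, A jj ≤ u → u < t →
        ∑ i ∈ Finset.Ioc u t, (entry x i - entry θn (A jj + 1)) ≤ 0 := by
      intro u hu1 hu2
      have hsplit := Finset.sum_Ioc_consecutive (fun i => entry x i - entry θn i)
        (show u ≤ t by omega) htn
      have h1 : ∑ i ∈ Finset.Ioc u t, (entry x i - entry θn (A jj + 1))
          = ∑ i ∈ Finset.Ioc u t, (entry x i - entry θn i) := by
        apply Finset.sum_congr rfl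
        intro i hi
        rw [Finset.mem_Ioc] at hi
        rw [hNconst i (by omega) hi.2]
      rw [h1]
      linarith [hTle u, hTt, hsplit]
    have hSW0 : ∑ i ∈ Finset.Ioc (A jj) t,
        (entry θh i - V (jj - 1)) * (entry x i - entry θn (A jj + 1)) ≤ 0 := by
      apply abel_tail (t - A jj) (fun i => entry θh i - V (jj - 1))
        (fun i => entry x i - entry θn (A jj + 1)) (A jj) t rfl (by omega)
      · intro i h1 h2
        have := hEgeν i h1 (by omega)
        linarith
      · intro i i' h1 h2 h3
        have := hEmono i i' (by omega) h2 (by omega)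
        linarith
      · exact hYle
    have hmemB := memT θh A V hmk hA0 hAm hAmono hVmono hvalA jj hj1 hjm t (by omega) htn
      (V (jj - 1)) (fun l hl => hVmono l (jj - 1) (by omega) (by omega)) (le_of_lt hμν)
    have hcostB := cost_repl x θh (A (jj - 1)) t (by omega) htn (V (jj - 1))
    have hineqB : ∑ i ∈ Finset.Ioc (A (jj - 1)) t,
        ((entry x i - entry θh i) ^ 2 - (entry x i - V (jj - 1)) ^ 2) ≤ 0 := by
      rw [← hcostB]
      linarith [hmin _ hmemB]
    have hsplitB := Finset.sum_Ioc_consecutive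
      (fun i => (entry x i - entry θh i) ^ 2 - (entry x i - V (jj - 1)) ^ 2)
      (le_of_lt hr0p) (by omega : A jj ≤ t)
    have hzeroB : ∑ i ∈ Finset.Ioc (A (jj - 1)) (A jj),
        ((entry x i - entry θh i) ^ 2 - (entry x i - V (jj - 1)) ^ 2) = 0 := by
      apply Finset.sum_eq_zero
      intro i hi
      rw [Finset.mem_Ioc] at hi
      rw [hvalA (jj - 1) (by omega) i hi.1 (by rw [hidx]; exact hi.2)]
      ring
    have hBineq : ∑ i ∈ Finset.Ioc (A jj) t,
        ((entry x i - entry θh i) ^ 2 - (entry x i - V (jj - 1)) ^ 2) ≤ 0 := by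
      linarith [hsplitB, hzeroB, hineqB]
    have hBexp : ∑ i ∈ Finset.Ioc (A jj) t,
        ((entry x i - entry θh i) ^ 2 - (entry x i - V (jj - 1)) ^ 2)
        = -2 * (∑ i ∈ Finset.Ioc (A jj) t,
            (entry θh i - V (jj - 1)) * (entry x i - (V (jj - 1) + V jj) / 2))
          + ∑ i ∈ Finset.Ioc (A jj) t, (entry θh i - V (jj - 1)) * (entry θh i - V jj) := by
      have hthis : ∀ i ∈ Finset.Ioc (A jj) t,
          (entry x i - entry θh i) ^ 2 - (entry x i - V (jj - 1)) ^ 2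
          = -2 * ((entry θh i - V (jj - 1)) * (entry x i - (V (jj - 1) + V jj) / 2))
            + (entry θh i - V (jj - 1)) * (entry θh i - V jj) := by
        intro i _
        ring
      rw [Finset.sum_congr rfl hthis, Finset.sum_add_distrib, ← Finset.mul_sum]
    have hSW2nonneg : 0 ≤ ∑ i ∈ Finset.Ioc (A jj) t,
        (entry θh i - V (jj - 1)) * (entry θh i - V jj) := by
      apply Finset.sum_nonneg
      intro i hi
      rw [Finset.mem_Ioc] at hi
      have h1 := hEgeν i hi.1 (by omega)
      apply mul_nonneg <;> linarith
    have hSwge : (V jj - V (jj - 1)) * ((t - A jj : ℕ) : ℝ)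
        ≤ ∑ i ∈ Finset.Ioc (A jj) t, (entry θh i - V (jj - 1)) := by
      calc (V jj - V (jj - 1)) * ((t - A jj : ℕ) : ℝ)
          = ∑ _i ∈ Finset.Ioc (A jj) t, (V jj - V (jj - 1)) := by
            rw [Finset.sum_const, Nat.card_Ioc, nsmul_eq_mul]; ring
        _ ≤ _ := by
            apply Finset.sum_le_sum
            intro i hi
            rw [Finset.mem_Ioc] at hi
            have := hEgeν i hi.1 (by omega)
            linarith
    have htpR : (1 : ℝ) ≤ ((t - A jj : ℕ) : ℝ) := by
      have h9 : 1 ≤ t - A jj := by omega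
      exact_mod_cast h9
    have hSW1eq : ∑ i ∈ Finset.Ioc (A jj) t,
        (entry θh i - V (jj - 1)) * (entry x i - (V (jj - 1) + V jj) / 2)
        = (∑ i ∈ Finset.Ioc (A jj) t,
            (entry θh i - V (jj - 1)) * (entry x i - entry θn (A jj + 1)))
          + (entry θn (A jj + 1) - (V (jj - 1) + V jj) / 2)
            * (∑ i ∈ Finset.Ioc (A jj) t, (entry θh i - V (jj - 1))) := by
      have hthis : ∀ i ∈ Finset.Ioc (A jj) t,
          (entry θh i - V (jj - 1)) * (entry x i - (V (jj - 1) + V jj) / 2)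
          = (entry θh i - V (jj - 1)) * (entry x i - entry θn (A jj + 1))
            + (entry θn (A jj + 1) - (V (jj - 1) + V jj) / 2) * (entry θh i - V (jj - 1)) := by
        intro i _
        ring
      rw [Finset.sum_congr rfl hthis, Finset.sum_add_distrib, ← Finset.mul_sum]
    have hSwpos : 0 < ∑ i ∈ Finset.Ioc (A jj) t, (entry θh i - V (jj - 1)) := by
      have hpos : 0 < (V jj - V (jj - 1)) * ((t - A jj : ℕ) : ℝ) := by nlinarith
      linarith
    have hveqc : entry θn (A jj + 1) = (V (jj - 1) + V jj) / 2 := by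
      by_contra hne2
      have hvlt : entry θn (A jj + 1) < (V (jj - 1) + V jj) / 2 := lt_of_le_of_ne hvc hne2
      linarith [hBineq, hBexp, hSW2nonneg, hSW0, hSW1eq,
        mul_neg_of_neg_of_pos
          (show entry θn (A jj + 1) - (V (jj - 1) + V jj) / 2 < 0 by linarith) hSwpos]
    have h0 : (entry θn (A jj + 1) - (V (jj - 1) + V jj) / 2)
        * (∑ i ∈ Finset.Ioc (A jj) t, (entry θh i - V (jj - 1))) = 0 := by
      rw [hveqc]; ring
    have hSW1z : ∑ i ∈ Finset.Ioc (A jj) t,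
        (entry θh i - V (jj - 1)) * (entry x i - (V (jj - 1) + V jj) / 2) = 0 := by
      linarith [hSW1eq, h0, hSW0, hBineq, hBexp, hSW2nonneg]
    have hSW2z : ∑ i ∈ Finset.Ioc (A jj) t,
        (entry θh i - V (jj - 1)) * (entry θh i - V jj) = 0 := by
      linarith [hBineq, hBexp, hSW1z, hSW2nonneg]
    have hEν : ∀ i ∈ Finset.Ioc (A jj) t, entry θh i = V jj := by
      have hz := (Finset.sum_eq_zero_iff_of_nonneg (fun i hi => by
        rw [Finset.mem_Ioc] at hi
        have := hEgeν i hi.1 (by omega)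
        have h2 := hμν
        apply mul_nonneg <;> linarith)).1 hSW2z
      intro i hi
      have h := hz i hi
      rw [Finset.mem_Ioc] at hi
      have h1 : 0 < entry θh i - V (jj - 1) := by
        have := hEgeν i hi.1 (by omega)
        linarith
      rcases mul_eq_zero.1 h with h' | h'
      · linarith
      · linarith
    have htq : t ≤ A (jj + 1) := by
      by_contra hgt
      push_neg at hgt
      have hj2 : jj + 1 < m := by
        by_contra hcon
        have hqq : A (jj + 1) = n := by
          rw [show jj + 1 = m from by omega]
          exact hAm
        omega
      have h1 : entry θh (A (jj + 1) + 1) = V jj :=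
        hEν (A (jj + 1) + 1) (Finset.mem_Ioc.2 ⟨by omega, by omega⟩)
      have h2 : entry θh (A (jj + 1)) = V jj :=
        hEν (A (jj + 1)) (Finset.mem_Ioc.2 ⟨by omega, by omega⟩)
      exact hjumpA (jj + 1) (by omega) hj2 (by rw [h1, h2])
    have hSXc : ∑ i ∈ Finset.Ioc (A jj) t, (entry x i - (V (jj - 1) + V jj) / 2) = 0 := by
      have he : ∑ i ∈ Finset.Ioc (A jj) t,
          (entry θh i - V (jj - 1)) * (entry x i - (V (jj - 1) + V jj) / 2)
          = (V jj - V (jj - 1))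
            * ∑ i ∈ Finset.Ioc (A jj) t, (entry x i - (V (jj - 1) + V jj) / 2) := by
        rw [Finset.mul_sum]
        apply Finset.sum_congr rfl
        intro i hi
        rw [hEν i hi]
      rw [he] at hSW1z
      rcases mul_eq_zero.1 hSW1z with h' | h'
      · linarith
      · exact h'
    have hBL : ∑ i ∈ Finset.Ioc (A (jj - 1)) (A jj), (entry x i - V (jj - 1)) = 0 := by
      obtain ⟨e, he, hel⟩ := hlb
      refine key0 (∑ i ∈ Finset.Ioc (A (jj - 1)) (A jj), (entry x i - V (jj - 1)))
        (((A jj - A (jj - 1) : ℕ) : ℝ)) (V jj - V (jj - 1)) e (by positivity)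
        (by linarith) he ?_
      intro ε hε1 hε2
      have hmemD := memT θh A V hmk hA0 hAm hAmono hVmono hvalA jj hj1 hjm (A jj) le_rfl
        (by omega) (V (jj - 1) + ε) (fun l hl => hel ε hε1 l hl) (by linarith)
      have hcostD := cost_repl x θh (A (jj - 1)) (A jj) (by omega) (by omega) (V (jj - 1) + ε)
      have hD : ∑ i ∈ Finset.Ioc (A (jj - 1)) (A jj),
          ((entry x i - entry θh i) ^ 2 - (entry x i - (V (jj - 1) + ε)) ^ 2) ≤ 0 := by
        rw [← hcostD]
        linarith [hmin _ hmemD]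
      have hexp : ∑ i ∈ Finset.Ioc (A (jj - 1)) (A jj),
          ((entry x i - entry θh i) ^ 2 - (entry x i - (V (jj - 1) + ε)) ^ 2)
          = 2 * ε * (∑ i ∈ Finset.Ioc (A (jj - 1)) (A jj), (entry x i - V (jj - 1)))
            - ε ^ 2 * (((A jj - A (jj - 1) : ℕ) : ℝ)) := by
        have hcong : ∀ i ∈ Finset.Ioc (A (jj - 1)) (A jj),
            (entry x i - entry θh i) ^ 2 - (entry x i - (V (jj - 1) + ε)) ^ 2
            = 2 * ε * (entry x i - V (jj - 1)) - ε ^ 2 := by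
          intro i hi
          rw [Finset.mem_Ioc] at hi
          rw [hvalA (jj - 1) (by omega) i hi.1 (by rw [hidx]; exact hi.2)]
          ring
        rw [Finset.sum_congr rfl hcong, Finset.sum_sub_distrib, ← Finset.mul_sum,
          Finset.sum_const, Nat.card_Ioc, nsmul_eq_mul]
        ring
      linarith [hD, hexp]
    have hL1 : (1 : ℝ) ≤ ((A jj - A (jj - 1) : ℕ) : ℝ) := by
      have h9 : 1 ≤ A jj - A (jj - 1) := by omega
      exact_mod_cast h9
    obtain ⟨ε, hε1, hε2, hεkey⟩ : ∃ ε : ℝ, 0 < ε ∧ ε ≤ (V jj - V (jj - 1)) / 2 ∧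
        ε * (2 * (((A jj - A (jj - 1) : ℕ) : ℝ) + ((t - A jj : ℕ) : ℝ)))
          = (V jj - V (jj - 1)) * ((t - A jj : ℕ) : ℝ) := by
      refine ⟨(V jj - V (jj - 1)) * ((t - A jj : ℕ) : ℝ) /
        (2 * (((A jj - A (jj - 1) : ℕ) : ℝ) + ((t - A jj : ℕ) : ℝ))), ?_, ?_, ?_⟩
      · apply div_pos (mul_pos (by linarith) (by linarith)) (by linarith)
      · rw [div_le_div_iff₀ (by linarith) (by linarith : (0 : ℝ) < 2)]
        nlinarith
      · field_simp
    have hmemE := memT θh A V hmk hA0 hAm hAmono hVmono hvalA jj hj1 hjm t (by omega) htn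
      (V (jj - 1) + ε)
      (fun l hl => by have := hVmono l (jj - 1) (by omega) (by omega); linarith)
      (by linarith)
    have hcostE := cost_repl x θh (A (jj - 1)) t (by omega) htn (V (jj - 1) + ε)
    have hE : ∑ i ∈ Finset.Ioc (A (jj - 1)) t,
        ((entry x i - entry θh i) ^ 2 - (entry x i - (V (jj - 1) + ε)) ^ 2) ≤ 0 := by
      rw [← hcostE]
      linarith [hmin _ hmemE]
    have hsplitE := Finset.sum_Ioc_consecutive
      (fun i => (entry x i - entry θh i) ^ 2 - (entry x i - (V (jj - 1) + ε)) ^ 2)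
      (le_of_lt hr0p) (by omega : A jj ≤ t)
    have hE1 : ∑ i ∈ Finset.Ioc (A (jj - 1)) (A jj),
        ((entry x i - entry θh i) ^ 2 - (entry x i - (V (jj - 1) + ε)) ^ 2)
        = -(ε ^ 2) * ((A jj - A (jj - 1) : ℕ) : ℝ) := by
      have hcong : ∀ i ∈ Finset.Ioc (A (jj - 1)) (A jj),
          (entry x i - entry θh i) ^ 2 - (entry x i - (V (jj - 1) + ε)) ^ 2
          = 2 * ε * (entry x i - V (jj - 1)) - ε ^ 2 := by
        intro i hi
        rw [Finset.mem_Ioc] at hi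
        rw [hvalA (jj - 1) (by omega) i hi.1 (by rw [hidx]; exact hi.2)]
        ring
      rw [Finset.sum_congr rfl hcong, Finset.sum_sub_distrib, ← Finset.mul_sum, hBL,
        Finset.sum_const, Nat.card_Ioc, nsmul_eq_mul]
      ring
    have hE2 : ∑ i ∈ Finset.Ioc (A jj) t,
        ((entry x i - entry θh i) ^ 2 - (entry x i - (V (jj - 1) + ε)) ^ 2)
        = -(ε - (V jj - V (jj - 1))) * ε * ((t - A jj : ℕ) : ℝ) := by
      have hcong : ∀ i ∈ Finset.Ioc (A jj) t,
          (entry x i - entry θh i) ^ 2 - (entry x i - (V (jj - 1) + ε)) ^ 2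
          = 2 * (ε - (V jj - V (jj - 1))) * (entry x i - (V (jj - 1) + V jj) / 2)
            - (ε - (V jj - V (jj - 1))) * ε := by
        intro i hi
        rw [hEν i hi]
        ring
      rw [Finset.sum_congr rfl hcong, Finset.sum_sub_distrib, ← Finset.mul_sum, hSXc,
        Finset.sum_const, Nat.card_Ioc, nsmul_eq_mul]
      ring
    have hpos : 0 < -(ε ^ 2) * ((A jj - A (jj - 1) : ℕ) : ℝ)
        + -(ε - (V jj - V (jj - 1))) * ε * ((t - A jj : ℕ) : ℝ) := by
      have hid : -(ε ^ 2) * ((A jj - A (jj - 1) : ℕ) : ℝ)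
          + -(ε - (V jj - V (jj - 1))) * ε * ((t - A jj : ℕ) : ℝ)
          = ε ^ 2 * (((A jj - A (jj - 1) : ℕ) : ℝ) + ((t - A jj : ℕ) : ℝ)) := by
        linear_combination (-ε) * hεkey
      rw [hid]
      apply mul_pos (pow_pos hε1 2) (by linarith)
    linarith [hE, hsplitE, hE1, hE2, hpos]
  have hLeft : entry θn (A jj) < (V (jj - 1) + V jj) / 2 := by
    by_contra hvc
    push_neg at hvc
    obtain ⟨s, hsp, hNconst, hTs⟩ := levelset_left hn x θn hθnMono hθnMin (A jj) hp1 (by omega)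
    have hYge : ∀ u, s < u → u ≤ A jj →
        0 ≤ ∑ i ∈ Finset.Ioc s u, (entry x i - entry θn (A jj)) := by
      intro u h1 h2
      have hsplit := Finset.sum_Ioc_consecutive (fun i => entry x i - entry θn i)
        (show s ≤ u by omega) (show u ≤ n by omega)
      have hsplit2 := Finset.sum_Ioc_consecutive (fun i => entry x i - entry θn i)
        (show s ≤ u by omega) (show u ≤ n by omega)
      have hcong : ∑ i ∈ Finset.Ioc s u, (entry x i - entry θn (A jj))
          = ∑ i ∈ Finset.Ioc s u, (entry x i - entry θn i) := by
        apply Finset.sum_congr rfl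
        intro i hi
        rw [Finset.mem_Ioc] at hi
        rw [hNconst i hi.1 (by omega)]
      rw [hcong]
      linarith [hTle u, hTs, hsplit]
    have hSW0 : 0 ≤ ∑ i ∈ Finset.Ioc s (A jj),
        (V jj - entry θh i) * (entry x i - entry θn (A jj)) := by
      apply abel_head (A jj - s) (fun i => V jj - entry θh i)
        (fun i => entry x i - entry θn (A jj)) s (A jj) rfl (by omega)
      · intro i h1 h2
        have := hEleμ i (by omega) h2
        linarith
      · intro i i' h1 h2 h3
        have := hEmono i i' (by omega) h2 (by omega)
        linarith
      · exact hYge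
    have hmemB := memU θh A V hmk hA0 hAm hAmono hVmono hvalA jj hj1 (by omega) s (by omega)
      (V jj) (fun l hl => hVmono l jj (by omega) (by omega))
      (fun l h1 h2 => hVmono jj l (by omega) h2)
    have hcostB := cost_repl x θh s (A (jj + 1)) (by omega) hqn (V jj)
    have hineqB : ∑ i ∈ Finset.Ioc s (A (jj + 1)),
        ((entry x i - entry θh i) ^ 2 - (entry x i - V jj) ^ 2) ≤ 0 := by
      rw [← hcostB]
      linarith [hmin _ hmemB]
    have hsplitB := Finset.sum_Ioc_consecutive
      (fun i => (entry x i - entry θh i) ^ 2 - (entry x i - V jj) ^ 2)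
      (show s ≤ A jj by omega) (le_of_lt hpq)
    have hzeroB : ∑ i ∈ Finset.Ioc (A jj) (A (jj + 1)),
        ((entry x i - entry θh i) ^ 2 - (entry x i - V jj) ^ 2) = 0 := by
      apply Finset.sum_eq_zero
      intro i hi
      rw [Finset.mem_Ioc] at hi
      rw [hvalA jj (by omega) i hi.1 hi.2]
      ring
    have hBineq : ∑ i ∈ Finset.Ioc s (A jj),
        ((entry x i - entry θh i) ^ 2 - (entry x i - V jj) ^ 2) ≤ 0 := by
      linarith [hsplitB, hzeroB, hineqB]
    have hBexp : ∑ i ∈ Finset.Ioc s (A jj),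
        ((entry x i - entry θh i) ^ 2 - (entry x i - V jj) ^ 2)
        = 2 * (∑ i ∈ Finset.Ioc s (A jj),
            (V jj - entry θh i) * (entry x i - (V (jj - 1) + V jj) / 2))
          + ∑ i ∈ Finset.Ioc s (A jj), (V jj - entry θh i) * (V (jj - 1) - entry θh i) := by
      have hthis : ∀ i ∈ Finset.Ioc s (A jj),
          (entry x i - entry θh i) ^ 2 - (entry x i - V jj) ^ 2
          = 2 * ((V jj - entry θh i) * (entry x i - (V (jj - 1) + V jj) / 2))
            + (V jj - entry θh i) * (V (jj - 1) - entry θh i) := by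
        intro i _
        ring
      rw [Finset.sum_congr rfl hthis, Finset.sum_add_distrib, ← Finset.mul_sum]
    have hSW2nonneg : 0 ≤ ∑ i ∈ Finset.Ioc s (A jj),
        (V jj - entry θh i) * (V (jj - 1) - entry θh i) := by
      apply Finset.sum_nonneg
      intro i hi
      rw [Finset.mem_Ioc] at hi
      have h1 := hEleμ i (by omega) hi.2
      apply mul_nonneg <;> linarith
    have hSwge : (V jj - V (jj - 1)) * ((A jj - s : ℕ) : ℝ)
        ≤ ∑ i ∈ Finset.Ioc s (A jj), (V jj - entry θh i) := by
      calc (V jj - V (jj - 1)) * ((A jj - s : ℕ) : ℝ)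
          = ∑ _i ∈ Finset.Ioc s (A jj), (V jj - V (jj - 1)) := by
            rw [Finset.sum_const, Nat.card_Ioc, nsmul_eq_mul]; ring
        _ ≤ _ := by
            apply Finset.sum_le_sum
            intro i hi
            rw [Finset.mem_Ioc] at hi
            have := hEleμ i (by omega) hi.2
            linarith
    have hspR : (1 : ℝ) ≤ ((A jj - s : ℕ) : ℝ) := by
      have h9 : 1 ≤ A jj - s := by omega
      exact_mod_cast h9
    have hSW1eq : ∑ i ∈ Finset.Ioc s (A jj),
        (V jj - entry θh i) * (entry x i - (V (jj - 1) + V jj) / 2)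
        = (∑ i ∈ Finset.Ioc s (A jj),
            (V jj - entry θh i) * (entry x i - entry θn (A jj)))
          + (entry θn (A jj) - (V (jj - 1) + V jj) / 2)
            * (∑ i ∈ Finset.Ioc s (A jj), (V jj - entry θh i)) := by
      have hthis : ∀ i ∈ Finset.Ioc s (A jj),
          (V jj - entry θh i) * (entry x i - (V (jj - 1) + V jj) / 2)
          = (V jj - entry θh i) * (entry x i - entry θn (A jj))
            + (entry θn (A jj) - (V (jj - 1) + V jj) / 2) * (V jj - entry θh i) := by
        intro i _
        ring
      rw [Finset.sum_congr rfl hthis, Finset.sum_add_distrib, ← Finset.mul_sum]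
    have hSwpos : 0 < ∑ i ∈ Finset.Ioc s (A jj), (V jj - entry θh i) := by
      have hpos : 0 < (V jj - V (jj - 1)) * ((A jj - s : ℕ) : ℝ) := by nlinarith
      linarith
    have hveqc : entry θn (A jj) = (V (jj - 1) + V jj) / 2 := by
      by_contra hne2
      have hvgt : (V (jj - 1) + V jj) / 2 < entry θn (A jj) :=
        lt_of_le_of_ne hvc (fun h => hne2 h.symm)
      linarith [hBineq, hBexp, hSW2nonneg, hSW0, hSW1eq,
        mul_pos (show 0 < entry θn (A jj) - (V (jj - 1) + V jj) / 2 by linarith) hSwpos]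
    have h0 : (entry θn (A jj) - (V (jj - 1) + V jj) / 2)
        * (∑ i ∈ Finset.Ioc s (A jj), (V jj - entry θh i)) = 0 := by
      rw [hveqc]; ring
    have hSW1z : ∑ i ∈ Finset.Ioc s (A jj),
        (V jj - entry θh i) * (entry x i - (V (jj - 1) + V jj) / 2) = 0 := by
      linarith [hSW1eq, h0, hSW0, hBineq, hBexp, hSW2nonneg]
    have hSW2z : ∑ i ∈ Finset.Ioc s (A jj),
        (V jj - entry θh i) * (V (jj - 1) - entry θh i) = 0 := by
      linarith [hBineq, hBexp, hSW1z, hSW2nonneg]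
    have hEμ : ∀ i ∈ Finset.Ioc s (A jj), entry θh i = V (jj - 1) := by
      have hz := (Finset.sum_eq_zero_iff_of_nonneg (fun i hi => by
        rw [Finset.mem_Ioc] at hi
        have := hEleμ i (by omega) hi.2
        have h2 := hμν
        apply mul_nonneg <;> linarith)).1 hSW2z
      intro i hi
      have h := hz i hi
      rw [Finset.mem_Ioc] at hi
      have h1 : 0 < V jj - entry θh i := by
        have := hEleμ i (by omega) hi.2
        linarith
      rcases mul_eq_zero.1 h with h' | h'
      · linarith
      · linarith
    have hsr : A (jj - 1) ≤ s := by
      by_cases hjj1 : jj = 1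
      · have hz : A (jj - 1) = 0 := by
          rw [show jj - 1 = 0 from by omega]
          exact hA0
        omega
      · by_contra hcon
        push_neg at hcon
        have h1 : entry θh (A (jj - 1)) = V (jj - 1) :=
          hEμ (A (jj - 1)) (Finset.mem_Ioc.2 ⟨hcon, by omega⟩)
        have h3 : entry θh (A (jj - 1) + 1) = V (jj - 1) := by
          apply hvalA (jj - 1) (by omega)
          · omega
          · rw [hidx]; omega
        exact hjumpA (jj - 1) (by omega) (by omega) (by rw [h1, h3])
    have hSXc : ∑ i ∈ Finset.Ioc s (A jj), (entry x i - (V (jj - 1) + V jj) / 2) = 0 := by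
      have he : ∑ i ∈ Finset.Ioc s (A jj),
          (V jj - entry θh i) * (entry x i - (V (jj - 1) + V jj) / 2)
          = (V jj - V (jj - 1))
            * ∑ i ∈ Finset.Ioc s (A jj), (entry x i - (V (jj - 1) + V jj) / 2) := by
        rw [Finset.mul_sum]
        apply Finset.sum_congr rfl
        intro i hi
        rw [hEμ i hi]
      rw [he] at hSW1z
      rcases mul_eq_zero.1 hSW1z with h' | h'
      · linarith
      · exact h'
    have hrb : ∃ e : ℝ, 0 < e ∧ ∀ ε : ℝ, ε ≤ e → ∀ l, jj < l → l + 1 ≤ m → V jj + ε ≤ V l := by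
      by_cases hjm2 : jj + 1 = m
      · exact ⟨1, one_pos, fun ε hε l h1 h2 => absurd h2 (by omega)⟩
      · refine ⟨V (jj + 1) - V jj, ?_, ?_⟩
        · have hne : entry θh (A (jj + 1)) ≠ entry θh (A (jj + 1) + 1) :=
            hjumpA (jj + 1) (by omega) (by omega)
          have h1 : entry θh (A (jj + 1)) = V jj := hvalA jj (by omega) _ (by omega) le_rfl
          have h2 : entry θh (A (jj + 1) + 1) = V (jj + 1) := by
            apply hvalA (jj + 1) (by omega)
            · omega
            · have := hAstrict (jj + 1) (jj + 1 + 1) (by omega) (by omega)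
              omega
          have hle : V jj ≤ V (jj + 1) := hVmono _ _ (by omega) (by omega)
          rcases lt_or_eq_of_le hle with h | h
          · linarith
          · exact absurd (by rw [h1, h2, h]) hne
        · intro ε hε l h1 h2
          have := hVmono (jj + 1) l (by omega) h2
          linarith
    have hBR : ∑ i ∈ Finset.Ioc (A jj) (A (jj + 1)), (entry x i - V jj) = 0 := by
      obtain ⟨e, he, her⟩ := hrb
      refine key0 (∑ i ∈ Finset.Ioc (A jj) (A (jj + 1)), (entry x i - V jj))
        (((A (jj + 1) - A jj : ℕ) : ℝ)) e (V jj - V (jj - 1)) (by positivity)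
        he (by linarith) ?_
      intro ε hε1 hε2
      have hmemD := memU θh A V hmk hA0 hAm hAmono hVmono hvalA jj hj1 (by omega) (A jj)
        le_rfl (V jj + ε)
        (fun l hl => by have := hVmono l (jj - 1) (by omega) (by omega); linarith)
        (fun l h1 h2 => her ε hε2 l h1 h2)
      have hcostD := cost_repl x θh (A jj) (A (jj + 1)) (by omega) hqn (V jj + ε)
      have hD : ∑ i ∈ Finset.Ioc (A jj) (A (jj + 1)),
          ((entry x i - entry θh i) ^ 2 - (entry x i - (V jj + ε)) ^ 2) ≤ 0 := by
        rw [← hcostD]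
        linarith [hmin _ hmemD]
      have hexp : ∑ i ∈ Finset.Ioc (A jj) (A (jj + 1)),
          ((entry x i - entry θh i) ^ 2 - (entry x i - (V jj + ε)) ^ 2)
          = 2 * ε * (∑ i ∈ Finset.Ioc (A jj) (A (jj + 1)), (entry x i - V jj))
            - ε ^ 2 * (((A (jj + 1) - A jj : ℕ) : ℝ)) := by
        have hcong : ∀ i ∈ Finset.Ioc (A jj) (A (jj + 1)),
            (entry x i - entry θh i) ^ 2 - (entry x i - (V jj + ε)) ^ 2
            = 2 * ε * (entry x i - V jj) - ε ^ 2 := by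
          intro i hi
          rw [Finset.mem_Ioc] at hi
          rw [hvalA jj (by omega) i hi.1 hi.2]
          ring
        rw [Finset.sum_congr rfl hcong, Finset.sum_sub_distrib, ← Finset.mul_sum,
          Finset.sum_const, Nat.card_Ioc, nsmul_eq_mul]
        ring
      linarith [hD, hexp]
    have hR1 : (1 : ℝ) ≤ ((A (jj + 1) - A jj : ℕ) : ℝ) := by
      have h9 : 1 ≤ A (jj + 1) - A jj := by omega
      exact_mod_cast h9
    obtain ⟨ε, hε1, hε2, hεkey⟩ : ∃ ε : ℝ, ε < 0 ∧ -((V jj - V (jj - 1)) / 2) ≤ ε ∧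
        ε * (2 * (((A jj - s : ℕ) : ℝ) + ((A (jj + 1) - A jj : ℕ) : ℝ)))
          = -((V jj - V (jj - 1)) * ((A jj - s : ℕ) : ℝ)) := by
      refine ⟨-((V jj - V (jj - 1)) * ((A jj - s : ℕ) : ℝ) /
        (2 * (((A jj - s : ℕ) : ℝ) + ((A (jj + 1) - A jj : ℕ) : ℝ)))), ?_, ?_, ?_⟩
      · have : 0 < (V jj - V (jj - 1)) * ((A jj - s : ℕ) : ℝ) /
            (2 * (((A jj - s : ℕ) : ℝ) + ((A (jj + 1) - A jj : ℕ) : ℝ))) :=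
          div_pos (mul_pos (by linarith) (by linarith)) (by linarith)
        linarith
      · rw [neg_le_neg_iff, div_le_div_iff₀ (by linarith) (by linarith : (0 : ℝ) < 2)]
        nlinarith
      · field_simp
    have hmemE := memU θh A V hmk hA0 hAm hAmono hVmono hvalA jj hj1 (by omega) s (by omega)
      (V jj + ε)
      (fun l hl => by have := hVmono l (jj - 1) (by omega) (by omega); linarith)
      (fun l h1 h2 => by have := hVmono jj l (by omega) h2; linarith)
    have hcostE := cost_repl x θh s (A (jj + 1)) (by omega) hqn (V jj + ε)
    have hE : ∑ i ∈ Finset.Ioc s (A (jj + 1)),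
        ((entry x i - entry θh i) ^ 2 - (entry x i - (V jj + ε)) ^ 2) ≤ 0 := by
      rw [← hcostE]
      linarith [hmin _ hmemE]
    have hsplitE := Finset.sum_Ioc_consecutive
      (fun i => (entry x i - entry θh i) ^ 2 - (entry x i - (V jj + ε)) ^ 2)
      (show s ≤ A jj by omega) (le_of_lt hpq)
    have hE1 : ∑ i ∈ Finset.Ioc s (A jj),
        ((entry x i - entry θh i) ^ 2 - (entry x i - (V jj + ε)) ^ 2)
        = -((V jj - V (jj - 1)) + ε) * ε * ((A jj - s : ℕ) : ℝ) := by
      have hcong : ∀ i ∈ Finset.Ioc s (A jj),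
          (entry x i - entry θh i) ^ 2 - (entry x i - (V jj + ε)) ^ 2
          = 2 * ((V jj - V (jj - 1)) + ε) * (entry x i - (V (jj - 1) + V jj) / 2)
            - ((V jj - V (jj - 1)) + ε) * ε := by
        intro i hi
        rw [hEμ i hi]
        ring
      rw [Finset.sum_congr rfl hcong, Finset.sum_sub_distrib, ← Finset.mul_sum, hSXc,
        Finset.sum_const, Nat.card_Ioc, nsmul_eq_mul]
      ring
    have hE2 : ∑ i ∈ Finset.Ioc (A jj) (A (jj + 1)),
        ((entry x i - entry θh i) ^ 2 - (entry x i - (V jj + ε)) ^ 2)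
        = -(ε ^ 2) * ((A (jj + 1) - A jj : ℕ) : ℝ) := by
      have hcong : ∀ i ∈ Finset.Ioc (A jj) (A (jj + 1)),
          (entry x i - entry θh i) ^ 2 - (entry x i - (V jj + ε)) ^ 2
          = 2 * ε * (entry x i - V jj) - ε ^ 2 := by
        intro i hi
        rw [Finset.mem_Ioc] at hi
        rw [hvalA jj (by omega) i hi.1 hi.2]
        ring
      rw [Finset.sum_congr rfl hcong, Finset.sum_sub_distrib, ← Finset.mul_sum, hBR,
        Finset.sum_const, Nat.card_Ioc, nsmul_eq_mul]
      ring
    have hpos : 0 < -((V jj - V (jj - 1)) + ε) * ε * ((A jj - s : ℕ) : ℝ)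
        + -(ε ^ 2) * ((A (jj + 1) - A jj : ℕ) : ℝ) := by
      have hid : -((V jj - V (jj - 1)) + ε) * ε * ((A jj - s : ℕ) : ℝ)
          + -(ε ^ 2) * ((A (jj + 1) - A jj : ℕ) : ℝ)
          = (-ε) * ((V jj - V (jj - 1)) * ((A jj - s : ℕ) : ℝ)) / 2 := by
        linear_combination (-ε / 2) * hεkey
      rw [hid]
      have hnum : 0 < (-ε) * ((V jj - V (jj - 1)) * ((A jj - s : ℕ) : ℝ)) :=
        mul_pos (by linarith) (mul_pos (by linarith) (by linarith))
      linarith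
    linarith [hE, hsplitE, hE1, hE2, hpos]
  have haj : a j = A jj := by
    rw [hAeq jj j.isLt]
  rw [haj]
  have e1 : entry θh (A jj) = V (jj - 1) := hEp
  have e2 : entry θh (A jj + 1) = V jj := hEp1
  rw [e1, e2]
  exact ⟨hLeft, hRight, lt_trans hLeft hRight⟩
end
end

section
/- For γ ∈ (0,2] and a ∈ ℝ, let p_{γ,a} be the probability density on ℝ proportional to exp(−|x − a|^γ). There exists a universal constant C > 0 such that for all a, b ∈ ℝ, the Kullback–Leibler divergence D(p_{γ,a} ‖ p_{γ,b}) = ∫ p_{γ,a}(x) log( p_{γ,a}(x)/p_{γ,b}(x) ) dx satisfies D(p_{γ,a} ‖ p_{γ,b}) ≤ C |a − b|^γ if γ ∈ (0,1], and D(p_{γ,a} ‖ p_{γ,b}) ≤ C ( |a − b| + |a − b|^γ ) if γ ∈ (1,2]. -/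
open MeasureTheory Real
open scoped ENNReal BigOperators

noncomputable section

open Set


lemma my_subadd {t d γ : ℝ} (ht : 0 ≤ t) (hd : 0 ≤ d) (hγ0 : 0 ≤ γ) (hγ1 : γ ≤ 1) :
    (t + d) ^ γ ≤ t ^ γ + d ^ γ := by
  lift t to NNReal using ht
  lift d to NNReal using hd
  exact_mod_cast NNReal.rpow_add_le_add_rpow t d hγ0 hγ1

lemma my_bernoulli {s t γ : ℝ} (ht : 0 ≤ t) (hs : 0 < s) (hγ : 1 ≤ γ) :
    s ^ γ - t ^ γ ≤ γ * s ^ (γ - 1) * (s - t) := by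
  have hx : -1 ≤ t / s - 1 := by
    have : 0 ≤ t / s := div_nonneg ht hs.le
    linarith
  have h := one_add_mul_self_le_rpow_one_add hx hγ
  rw [add_sub_cancel, Real.div_rpow ht hs.le] at h
  have hsγ : 0 < s ^ γ := Real.rpow_pos_of_pos hs γ
  have h2 := mul_le_mul_of_nonneg_left h hsγ.le
  rw [mul_div_cancel₀ _ hsγ.ne'] at h2
  have hss : s ^ (γ - 1) * s = s ^ γ := by
    rw [← Real.rpow_add_one hs.ne' (γ - 1), sub_add_cancel]
  have hts : s ^ γ * (t / s) = s ^ (γ - 1) * t := by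
    field_simp
    nlinarith [hss]
  nlinarith [h2, hss, hts]

lemma my_diff_le {s t d γ : ℝ} (hs : 0 ≤ s) (ht : 0 ≤ t) (hd : 0 ≤ d)
    (hstd : |s - t| ≤ d) (hγ0 : 0 < γ) (hγ1 : γ ≤ 1) :
    |s ^ γ - t ^ γ| ≤ d ^ γ := by
  have key : ∀ u v : ℝ, 0 ≤ u → 0 ≤ v → u - v ≤ d → u ^ γ - v ^ γ ≤ d ^ γ := by
    intro u v hu hv huv
    have h1 : u ^ γ ≤ (v + d) ^ γ :=
      Real.rpow_le_rpow hu (by linarith) hγ0.le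
    have h2 := my_subadd hv hd hγ0.le hγ1
    linarith
  rw [abs_sub_le_iff] at hstd ⊢
  exact ⟨key s t hs ht hstd.1, key t s ht hs hstd.2⟩

lemma my_key {γ d s t : ℝ} (hγ1 : 1 < γ) (hγ2 : γ ≤ 2) (hs : 0 ≤ s) (ht : 0 ≤ t)
    (hd : 0 < d) (hstd : |s - t| ≤ d) :
    |s ^ γ - t ^ γ| ≤ 2 * d * t ^ (γ - 1) + 2 * d ^ γ := by
  have hβ0 : 0 ≤ γ - 1 := by linarith
  have hβ1 : γ - 1 ≤ 1 := by linarith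
  have htβ : (0:ℝ) ≤ t ^ (γ - 1) := Real.rpow_nonneg ht _
  have hdβ : (0:ℝ) ≤ d ^ (γ - 1) := Real.rpow_nonneg hd.le _
  have hdγ : (0:ℝ) ≤ d ^ γ := Real.rpow_nonneg hd.le _
  rw [abs_sub_le_iff] at hstd
  rw [abs_sub_le_iff]
  constructor
  · rcases le_or_gt s t with h | h
    · have : s ^ γ ≤ t ^ γ := Real.rpow_le_rpow hs h (by linarith)
      nlinarith
    · have hs0 : 0 < s := lt_of_le_of_lt ht h
      have hb := my_bernoulli ht hs0 hγ1.le
      have hsβ : s ^ (γ - 1) ≤ t ^ (γ - 1) + d ^ (γ - 1) := by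
        have h1 : s ^ (γ - 1) ≤ (t + d) ^ (γ - 1) :=
          Real.rpow_le_rpow hs (by linarith) hβ0
        have h2 := my_subadd ht hd.le hβ0 hβ1
        linarith
      have hdd : d ^ (γ - 1) * d = d ^ γ := by
        rw [← Real.rpow_add_one hd.ne' (γ - 1), sub_add_cancel]
      have hsd : s - t ≤ d := hstd.1
      have hsβ0 : (0:ℝ) ≤ s ^ (γ - 1) := Real.rpow_nonneg hs _
      have c1 : γ * s ^ (γ - 1) * (s - t) ≤ 2 * s ^ (γ - 1) * d := by
        nlinarith [mul_nonneg (mul_nonneg (by linarith : (0:ℝ) ≤ 2 - γ) hsβ0)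
            (by linarith : (0:ℝ) ≤ s - t),
          mul_nonneg hsβ0 (by linarith : (0:ℝ) ≤ d - (s - t))]
      have c2 : 2 * s ^ (γ - 1) * d ≤ 2 * (t ^ (γ - 1) + d ^ (γ - 1)) * d := by
        nlinarith [mul_le_mul_of_nonneg_right hsβ hd.le]
      nlinarith [hb, hdd]
  · rcases le_or_gt t s with h | h
    · have : t ^ γ ≤ s ^ γ := Real.rpow_le_rpow ht h (by linarith)
      nlinarith
    · have ht0 : 0 < t := lt_of_le_of_lt hs h
      have hb := my_bernoulli hs ht0 hγ1.le
      have hts : t - s ≤ d := hstd.2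
      have c1 : γ * t ^ (γ - 1) * (t - s) ≤ 2 * t ^ (γ - 1) * d := by
        nlinarith [mul_nonneg (mul_nonneg (by linarith : (0:ℝ) ≤ 2 - γ) htβ)
            (by linarith : (0:ℝ) ≤ t - s),
          mul_nonneg htβ (by linarith : (0:ℝ) ≤ d - (t - s))]
      nlinarith [hb, hdγ]

lemma my_rpow_le {y k : ℝ} (hk0 : 0 ≤ k) (hk1 : k ≤ 1) : |y| ^ k ≤ 1 + |y| := by
  rcases le_or_gt (|y|) 1 with h | h
  · have := Real.rpow_le_one (abs_nonneg y) h hk0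
    have := abs_nonneg y
    linarith
  · have h1 : |y| ^ k ≤ |y| ^ (1:ℝ) :=
      Real.rpow_le_rpow_of_exponent_le h.le hk1
    rw [Real.rpow_one] at h1
    linarith

lemma my_exp_decay {y γ : ℝ} (hγ : 1 ≤ γ) :
    Real.exp (-(|y| ^ γ)) ≤ Real.exp 1 * Real.exp (-|y|) := by
  rw [← Real.exp_add]
  apply Real.exp_le_exp.mpr
  rcases le_or_gt (|y|) 1 with h | h
  · have : (0:ℝ) ≤ |y| ^ γ := Real.rpow_nonneg (abs_nonneg y) _
    linarith
  · have h1 : |y| ^ (1:ℝ) ≤ |y| ^ γ :=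
      Real.rpow_le_rpow_of_exponent_le h.le hγ
    rw [Real.rpow_one] at h1
    linarith

lemma my_dom {y γ : ℝ} (hγ1 : 1 < γ) (hγ2 : γ ≤ 2) :
    Real.exp (-(|y| ^ γ)) * |y| ^ (γ - 1) ≤
      (2 * Real.exp 1) * Real.exp (-(|y| / 2)) := by
  have h1 : |y| ^ (γ - 1) ≤ 1 + |y| := my_rpow_le (by linarith) (by linarith)
  have h2 : 1 + |y| ≤ 2 * Real.exp (|y| / 2) := by
    have := Real.add_one_le_exp (|y| / 2)
    have := abs_nonneg y
    linarith
  have h3 := my_exp_decay (y := y) hγ1.le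
  have hr : (0:ℝ) ≤ |y| ^ (γ - 1) := Real.rpow_nonneg (abs_nonneg y) _
  calc Real.exp (-(|y| ^ γ)) * |y| ^ (γ - 1)
      ≤ (Real.exp 1 * Real.exp (-|y|)) * (2 * Real.exp (|y| / 2)) := by
        apply mul_le_mul h3 (h1.trans h2) hr
        positivity
    _ = (2 * Real.exp 1) * Real.exp (-(|y| / 2)) := by
        have hkey : Real.exp (1 + -|y|) * Real.exp (|y| / 2)
            = Real.exp 1 * Real.exp (-(|y| / 2)) := by
          rw [← Real.exp_add, ← Real.exp_add]
          congr 1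
          ring
        calc Real.exp 1 * Real.exp (-|y|) * (2 * Real.exp (|y| / 2))
            = 2 * (Real.exp (1 + -|y|) * Real.exp (|y| / 2)) := by
              rw [← Real.exp_add]; ring
          _ = 2 * (Real.exp 1 * Real.exp (-(|y| / 2))) := by rw [hkey]
          _ = (2 * Real.exp 1) * Real.exp (-(|y| / 2)) := by ring

lemma my_int_exp_half : Integrable (fun x : ℝ => Real.exp (-(|x| / 2))) := by
  have h1 : IntegrableOn (fun x : ℝ => Real.exp (-(|x| / 2))) (Ioi (0:ℝ)) := by
    have h0 := exp_neg_integrableOn_Ioi 0 (by norm_num : (0:ℝ) < 2⁻¹)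
    refine (h0.congr_fun (fun x hx => ?_) measurableSet_Ioi)
    rw [abs_of_pos (mem_Ioi.mp hx)]; ring_nf
  have h2 : IntegrableOn (fun x : ℝ => Real.exp (-(|x| / 2))) (Iic (0:ℝ)) := by
    rw [← Measure.map_neg_eq_self (volume : Measure ℝ)]
    have m : MeasurableEmbedding fun x : ℝ => -x := (Homeomorph.neg ℝ).measurableEmbedding
    rw [m.integrableOn_map_iff]
    simp_rw [Function.comp_def, abs_neg, neg_preimage, neg_Iic, neg_zero]
    exact (integrableOn_Ici_iff_integrableOn_Ioi).mpr h1
  have := h2.union h1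
  rwa [Iic_union_Ioi, integrableOn_univ] at this

lemma my_val_exp_half : (∫ x : ℝ, Real.exp (-(|x| / 2))) = 4 := by
  rw [integral_comp_abs (f := fun u => Real.exp (-(u / 2)))]
  have h := integral_comp_mul_left_Ioi (fun x => Real.exp (-x)) 0 (by norm_num : (0:ℝ) < 2⁻¹)
  simp only [mul_zero] at h
  have heq : (∫ x in Ioi (0:ℝ), Real.exp (-(x / 2))) = ∫ x in Ioi (0:ℝ), Real.exp (-(2⁻¹ * x)) := by
    congr 1; ext x; ring_nf
  rw [heq, h, integral_exp_neg_Ioi_zero]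
  norm_num

lemma my_c_bound {γ cγ : ℝ} (hγ0 : 0 < γ) (hc : 0 < cγ)
    (hint : Integrable (fun x : ℝ => cγ * Real.exp (-(|x| ^ γ))))
    (hnorm : (∫ x : ℝ, cγ * Real.exp (-(|x| ^ γ))) = 1) :
    2 * cγ ≤ Real.exp 1 := by
  have h1 : (∫ x in Icc (-1:ℝ) 1, cγ * Real.exp (-(1:ℝ)))
      ≤ ∫ x in Icc (-1:ℝ) 1, cγ * Real.exp (-(|x| ^ γ)) := by
    refine setIntegral_mono_on (integrableOn_const ?_) hint.integrableOn
      measurableSet_Icc (fun x hx => ?_)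
    · rw [Real.volume_Icc]; exact ENNReal.ofReal_ne_top
    · refine mul_le_mul_of_nonneg_left (Real.exp_le_exp.mpr (neg_le_neg ?_)) hc.le
      exact Real.rpow_le_one (abs_nonneg x) (abs_le.mpr ⟨hx.1, hx.2⟩) hγ0.le
  have h2 : (∫ x in Icc (-1:ℝ) 1, cγ * Real.exp (-(|x| ^ γ)))
      ≤ ∫ x : ℝ, cγ * Real.exp (-(|x| ^ γ)) := by
    refine setIntegral_le_integral hint (Filter.Eventually.of_forall fun x => ?_)
    positivity
  have h3 : (∫ x in Icc (-1:ℝ) 1, cγ * Real.exp (-(1:ℝ)))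
      = 2 * (cγ * Real.exp (-1)) := by
    rw [setIntegral_const, Real.volume_real_Icc]
    norm_num
  rw [hnorm] at h2
  rw [h3] at h1
  have h4 : 2 * (cγ * Real.exp (-1)) ≤ 1 := le_trans h1 h2
  rw [Real.exp_neg] at h4
  have he : (0:ℝ) < Real.exp 1 := Real.exp_pos 1
  calc 2 * cγ = (2 * (cγ * (Real.exp 1)⁻¹)) * Real.exp 1 := by field_simp
    _ ≤ 1 * Real.exp 1 := mul_le_mul_of_nonneg_right h4 he.le
    _ = Real.exp 1 := one_mul _


/-- Lemma B.1 (KL divergence between shifted `exp(−|x|^γ)` densities): there is a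
universal constant `C > 0` such that for every `γ ∈ (0,2]`, if `cγ > 0` normalizes
`x ↦ cγ exp(−|x|^γ)` to a probability density, then for all `a, b ∈ ℝ`,
`D(p_{γ,a} ‖ p_{γ,b}) ≤ C |a−b|^γ` when `γ ≤ 1`, and
`D(p_{γ,a} ‖ p_{γ,b}) ≤ C (|a−b| + |a−b|^γ)` when `γ ∈ (1,2]`. -/
theorem stmt18 :
    ∃ C : ℝ, 0 < C ∧
    ∀ γ : ℝ, 0 < γ → γ ≤ 2 →
    ∀ cγ : ℝ, 0 < cγ →
    (∫ x : ℝ, cγ * Real.exp (-(|x| ^ γ))) = 1 →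
    ∀ a b : ℝ,
    (∫ x : ℝ, (cγ * Real.exp (-(|x - a| ^ γ))) *
        Real.log ((cγ * Real.exp (-(|x - a| ^ γ))) / (cγ * Real.exp (-(|x - b| ^ γ))))) ≤
      if γ ≤ 1 then C * |a - b| ^ γ else C * (|a - b| + |a - b| ^ γ) := by
  refine ⟨100, by norm_num, ?_⟩
  intro γ hγ0 hγ2 cγ hc hnorm a b
  rcases eq_or_ne a b with rfl | hab
  · have hz : ∀ x : ℝ, (cγ * Real.exp (-(|x - a| ^ γ))) *
        Real.log ((cγ * Real.exp (-(|x - a| ^ γ))) / (cγ * Real.exp (-(|x - a| ^ γ)))) = 0 := by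
      intro x
      rw [div_self (ne_of_gt (by positivity)), Real.log_one, mul_zero]
    simp only [hz, integral_zero]
    rw [sub_self, abs_zero, Real.zero_rpow hγ0.ne']
    split_ifs <;> norm_num
  set d := |a - b| with hddef
  have hd0 : 0 < d := abs_pos.mpr (sub_ne_zero.mpr hab)
  have hdγ0 : (0:ℝ) ≤ d ^ γ := Real.rpow_nonneg hd0.le _
  have hint0 : Integrable (fun x : ℝ => cγ * Real.exp (-(|x| ^ γ))) := by
    by_contra h
    rw [integral_undef h] at hnorm
    norm_num at hnorm
  have hpa_int : Integrable (fun x : ℝ => cγ * Real.exp (-(|x - a| ^ γ))) :=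
    hint0.comp_sub_right a
  have hpa_val : (∫ x : ℝ, cγ * Real.exp (-(|x - a| ^ γ))) = 1 := by
    rw [integral_sub_right_eq_self (fun y : ℝ => cγ * Real.exp (-(|y| ^ γ))) a]
    exact hnorm
  have hrw : ∀ x : ℝ, (cγ * Real.exp (-(|x - a| ^ γ))) *
        Real.log ((cγ * Real.exp (-(|x - a| ^ γ))) / (cγ * Real.exp (-(|x - b| ^ γ))))
      = (cγ * Real.exp (-(|x - a| ^ γ))) * (|x - b| ^ γ - |x - a| ^ γ) := by
    intro x
    rw [mul_div_mul_left _ _ hc.ne', ← Real.exp_sub, Real.log_exp]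
    ring
  simp only [hrw]
  have hsub : ∀ x : ℝ, |(|x - b| - |x - a|)| ≤ d := by
    intro x
    have h1 := abs_abs_sub_abs_le_abs_sub (x - b) (x - a)
    have h2 : x - b - (x - a) = a - b := by ring
    rw [h2] at h1
    exact h1
  have hcontg : Continuous fun x : ℝ =>
      (cγ * Real.exp (-(|x - a| ^ γ))) * (|x - b| ^ γ - |x - a| ^ γ) := by
    have hca : Continuous fun x : ℝ => |x - a| ^ γ :=
      ((continuous_id.sub continuous_const).abs).rpow_const fun x => Or.inr hγ0.le
    have hcb : Continuous fun x : ℝ => |x - b| ^ γ :=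
      ((continuous_id.sub continuous_const).abs).rpow_const fun x => Or.inr hγ0.le
    exact (continuous_const.mul hca.neg.rexp).mul (hcb.sub hca)
  by_cases hγ1 : γ ≤ 1
  · rw [if_pos hγ1]
    have key : ∀ x : ℝ, |(|x - b| ^ γ - |x - a| ^ γ)| ≤ d ^ γ := fun x =>
      my_diff_le (abs_nonneg _) (abs_nonneg _) hd0.le (hsub x) hγ0 hγ1
    have hBint : Integrable (fun x : ℝ => (cγ * Real.exp (-(|x - a| ^ γ))) * d ^ γ) :=
      hpa_int.mul_const _
    have hgint : Integrable (fun x : ℝ =>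
        (cγ * Real.exp (-(|x - a| ^ γ))) * (|x - b| ^ γ - |x - a| ^ γ)) := by
      refine hBint.mono' hcontg.aestronglyMeasurable ?_
      filter_upwards with x
      rw [Real.norm_eq_abs, abs_mul, abs_of_pos (by positivity :
        (0:ℝ) < cγ * Real.exp (-(|x - a| ^ γ)))]
      exact mul_le_mul_of_nonneg_left (key x) (by positivity)
    calc (∫ x : ℝ, (cγ * Real.exp (-(|x - a| ^ γ))) * (|x - b| ^ γ - |x - a| ^ γ))
        ≤ ∫ x : ℝ, (cγ * Real.exp (-(|x - a| ^ γ))) * d ^ γ := by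
          refine integral_mono hgint hBint fun x => ?_
          exact mul_le_mul_of_nonneg_left ((le_abs_self _).trans (key x)) (by positivity)
      _ = (∫ x : ℝ, cγ * Real.exp (-(|x - a| ^ γ))) * d ^ γ :=
          integral_mul_const _ _
      _ = d ^ γ := by rw [hpa_val, one_mul]
      _ ≤ 100 * d ^ γ := by linarith
  · rw [if_neg hγ1]
    push_neg at hγ1
    set F : ℝ → ℝ := fun y => cγ * Real.exp (-(|y| ^ γ)) * |y| ^ (γ - 1) with hF
    have hFcont : Continuous F := by
      have h1 : Continuous fun y : ℝ => |y| ^ γ :=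
        continuous_abs.rpow_const fun x => Or.inr hγ0.le
      have h2 : Continuous fun y : ℝ => |y| ^ (γ - 1) :=
        continuous_abs.rpow_const fun x => Or.inr (by linarith)
      exact (continuous_const.mul h1.neg.rexp).mul h2
    have hFle : ∀ y : ℝ, F y ≤ cγ * (2 * Real.exp 1) * Real.exp (-(|y| / 2)) := by
      intro y
      calc F y = cγ * (Real.exp (-(|y| ^ γ)) * |y| ^ (γ - 1)) := by rw [hF]; ring
        _ ≤ cγ * ((2 * Real.exp 1) * Real.exp (-(|y| / 2))) :=
            mul_le_mul_of_nonneg_left (my_dom hγ1 hγ2) hc.le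
        _ = cγ * (2 * Real.exp 1) * Real.exp (-(|y| / 2)) := by ring
    have hFint : Integrable F := by
      refine (my_int_exp_half.const_mul (cγ * (2 * Real.exp 1))).mono'
        hFcont.aestronglyMeasurable ?_
      filter_upwards with y
      rw [Real.norm_eq_abs, abs_of_nonneg (by positivity : (0:ℝ) ≤ F y)]
      exact hFle y
    have hFval : (∫ y : ℝ, F y) ≤ cγ * (2 * Real.exp 1) * 4 := by
      calc (∫ y : ℝ, F y)
          ≤ ∫ y : ℝ, cγ * (2 * Real.exp 1) * Real.exp (-(|y| / 2)) :=
            integral_mono hFint (my_int_exp_half.const_mul _) fun y => hFle y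
        _ = cγ * (2 * Real.exp 1) * ∫ y : ℝ, Real.exp (-(|y| / 2)) :=
            integral_const_mul _ _
        _ = cγ * (2 * Real.exp 1) * 4 := by rw [my_val_exp_half]
    have hG : Integrable (fun x : ℝ => F (x - a)) := hFint.comp_sub_right a
    have hGval : (∫ x : ℝ, F (x - a)) = ∫ y : ℝ, F y :=
      integral_sub_right_eq_self F a
    have keyp : ∀ x : ℝ, |(|x - b| ^ γ - |x - a| ^ γ)| ≤
        2 * d * |x - a| ^ (γ - 1) + 2 * d ^ γ := fun x =>
      my_key hγ1 hγ2 (abs_nonneg _) (abs_nonneg _) hd0 (hsub x)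
    have hBint : Integrable (fun x : ℝ =>
        2 * d * F (x - a) + 2 * d ^ γ * (cγ * Real.exp (-(|x - a| ^ γ)))) :=
      (hG.const_mul (2 * d)).add (hpa_int.const_mul (2 * d ^ γ))
    have hbnd : ∀ x : ℝ, |(cγ * Real.exp (-(|x - a| ^ γ))) * (|x - b| ^ γ - |x - a| ^ γ)|
        ≤ 2 * d * F (x - a) + 2 * d ^ γ * (cγ * Real.exp (-(|x - a| ^ γ))) := by
      intro x
      have hp : (0:ℝ) < cγ * Real.exp (-(|x - a| ^ γ)) := by positivity
      rw [abs_mul, abs_of_pos hp]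
      calc (cγ * Real.exp (-(|x - a| ^ γ))) * |(|x - b| ^ γ - |x - a| ^ γ)|
          ≤ (cγ * Real.exp (-(|x - a| ^ γ))) * (2 * d * |x - a| ^ (γ - 1) + 2 * d ^ γ) :=
            mul_le_mul_of_nonneg_left (keyp x) hp.le
        _ = 2 * d * F (x - a) + 2 * d ^ γ * (cγ * Real.exp (-(|x - a| ^ γ))) := by
            rw [hF]; ring
    have hgint : Integrable (fun x : ℝ =>
        (cγ * Real.exp (-(|x - a| ^ γ))) * (|x - b| ^ γ - |x - a| ^ γ)) := by
      refine hBint.mono' hcontg.aestronglyMeasurable ?_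
      filter_upwards with x
      rw [Real.norm_eq_abs]
      exact hbnd x
    have hFv2 : (∫ y : ℝ, F y) ≤ 4 * (Real.exp 1 * Real.exp 1) := by
      have hcb := my_c_bound hγ0 hc hint0 hnorm
      have he : (0:ℝ) < Real.exp 1 := Real.exp_pos 1
      nlinarith [hFval]
    have he2 : Real.exp 1 ≤ 2.7182818286 := Real.exp_one_lt_d9.le
    have he2sq : Real.exp 1 * Real.exp 1 ≤ 7.4 := by
      nlinarith [Real.exp_pos 1]
    calc (∫ x : ℝ, (cγ * Real.exp (-(|x - a| ^ γ))) * (|x - b| ^ γ - |x - a| ^ γ))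
        ≤ ∫ x : ℝ, 2 * d * F (x - a) + 2 * d ^ γ * (cγ * Real.exp (-(|x - a| ^ γ))) := by
          refine integral_mono hgint hBint fun x => ?_
          exact (le_abs_self _).trans (hbnd x)
      _ = 2 * d * (∫ y : ℝ, F y) + 2 * d ^ γ * 1 := by
          rw [integral_add (hG.const_mul (2 * d)) (hpa_int.const_mul (2 * d ^ γ)),
            integral_const_mul, integral_const_mul, hGval, hpa_val]
      _ ≤ 100 * (d + d ^ γ) := by
          have h1 : 2 * d * (∫ y : ℝ, F y) ≤ 2 * d * (4 * (Real.exp 1 * Real.exp 1)) :=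
            mul_le_mul_of_nonneg_left hFv2 (by positivity)
          nlinarith [hd0.le, hdγ0, he2sq]

end
end
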